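/- arXiv:0810.2106 — 9 statements merged into one kernel-verified Lean document; each statement's English description precedes it below -/
import Mathlib

section
/- For every integer n and every subset B of {0,1,…,f−1}: if n ≡ n'_B (mod ℓ^f + 1) then there is no b ∈ {1,…,ℓ}^f with n ≡ S_B(b) (mod ℓ^f + 1), while if n ≢ n'_B (mod ℓ^f + 1) then there is exactly one such b. -/
namespace Stmt1

/-- `n_B = ∑_{i∈B} ℓ^{i+1} − ∑_{i∉B} ℓ^i`. -/
def nB (ℓ f : ℕ) (B : Finset (Fin f)) : ℤ :=
  ∑ i ∈ B, (ℓ : ℤ) ^ ((i : ℕ) + 1) - ∑ i ∈ Bᶜ, (ℓ : ℤ) ^ (i : ℕ)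

/-- `n'_B = n_B + 1`. -/
def nB' (ℓ f : ℕ) (B : Finset (Fin f)) : ℤ := nB ℓ f B + 1

/-- The signed sum `S_B(b) = ∑_{i∈B} b_i ℓ^i − ∑_{i∉B} b_i ℓ^i`. -/
def SB (ℓ f : ℕ) (B : Finset (Fin f)) (b : Fin f → ℤ) : ℤ :=
  ∑ i ∈ B, b i * (ℓ : ℤ) ^ (i : ℕ) - ∑ i ∈ Bᶜ, b i * (ℓ : ℤ) ^ (i : ℕ)

/-! ### Auxiliary lemmas about base-`L` digit expansions -/

lemma digits_bounds (L : ℤ) (hL : 1 ≤ L) (f : ℕ) (c : ℕ → ℤ)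
    (hc : ∀ i, i < f → 0 ≤ c i ∧ c i ≤ L - 1) :
    0 ≤ ∑ i ∈ Finset.range f, c i * L ^ i ∧
      ∑ i ∈ Finset.range f, c i * L ^ i ≤ L ^ f - 1 := by
  induction f with
  | zero => simp
  | succ f ih =>
    have h1 := ih (fun i hi => hc i (by omega))
    have h2 := hc f (by omega)
    rw [Finset.sum_range_succ]
    have hLf : (0:ℤ) < L ^ f := by positivity
    have hle : c f * L ^ f ≤ (L - 1) * L ^ f :=
      mul_le_mul_of_nonneg_right h2.2 hLf.le
    have hge : 0 ≤ c f * L ^ f := mul_nonneg h2.1 hLf.le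
    have hps : (L:ℤ) ^ (f+1) = L ^ f * L := pow_succ L f
    constructor
    · linarith [h1.1]
    · nlinarith [h1.2]

lemma digits_unique (L : ℤ) (hL : 1 ≤ L) :
    ∀ (f : ℕ) (c d : ℕ → ℤ), (∀ i, i < f → 0 ≤ c i ∧ c i ≤ L - 1) →
      (∀ i, i < f → 0 ≤ d i ∧ d i ≤ L - 1) →
      (∑ i ∈ Finset.range f, c i * L ^ i = ∑ i ∈ Finset.range f, d i * L ^ i) →
      ∀ i, i < f → c i = d i := by
  intro f
  induction f with
  | zero => intro c d _ _ _ i hi; omega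
  | succ f ih =>
    intro c d hc hd hsum i hi
    rw [Finset.sum_range_succ', Finset.sum_range_succ'] at hsum
    have hrw : ∀ (e : ℕ → ℤ), ∑ i ∈ Finset.range f, e (i+1) * L ^ (i+1)
        = (∑ i ∈ Finset.range f, e (i+1) * L ^ i) * L := by
      intro e
      rw [Finset.sum_mul]
      exact Finset.sum_congr rfl (fun j _ => by ring)
    rw [hrw c, hrw d] at hsum
    simp only [pow_zero, mul_one] at hsum
    set Tc := ∑ i ∈ Finset.range f, c (i+1) * L ^ i with hTc
    set Td := ∑ i ∈ Finset.range f, d (i+1) * L ^ i with hTd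
    have hc' : ∀ i, i < f → 0 ≤ c (i+1) ∧ c (i+1) ≤ L - 1 := fun i hi => hc (i+1) (by omega)
    have hd' : ∀ i, i < f → 0 ≤ d (i+1) ∧ d (i+1) ≤ L - 1 := fun i hi => hd (i+1) (by omega)
    have hc0 := hc 0 (by omega)
    have hd0 := hd 0 (by omega)
    have hE : c 0 - d 0 = (Td - Tc) * L := by linarith
    have h0 : c 0 = d 0 ∧ Tc = Td := by
      rcases lt_trichotomy Tc Td with h | h | h
      · exfalso; nlinarith
      · constructor
        · rw [h] at hE; simp at hE; linarith
        · exact h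
      · exfalso; nlinarith
    have hT : Tc = Td := h0.2
    have := ih (fun i => c (i+1)) (fun i => d (i+1)) hc' hd' (by rw [← hTc, ← hTd, hT])
    rcases Nat.eq_zero_or_pos i with h | h
    · subst h; exact h0.1
    · obtain ⟨j, rfl⟩ := Nat.exists_eq_succ_of_ne_zero (by omega : i ≠ 0)
      exact this j (by omega)

lemma digits_exist (L : ℤ) (hL : 1 ≤ L) :
    ∀ (f : ℕ) (k : ℤ), 0 ≤ k → k < L ^ f →
      ∃ c : ℕ → ℤ, (∀ i, 0 ≤ c i ∧ c i ≤ L - 1) ∧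
        ∑ i ∈ Finset.range f, c i * L ^ i = k := by
  intro f
  induction f with
  | zero =>
    intro k h0 h1
    refine ⟨fun _ => 0, fun i => by simp; omega, ?_⟩
    simp only [Finset.range_zero, Finset.sum_empty]
    simp at h1; omega
  | succ f ih =>
    intro k h0 h1
    have hL0 : (0:ℤ) < L := by omega
    have hk1nn : 0 ≤ k / L := Int.ediv_nonneg h0 hL0.le
    have hk1lt : k / L < L ^ f := by
      rw [Int.ediv_lt_iff_lt_mul hL0]
      calc k < L ^ (f+1) := h1
        _ = L ^ f * L := pow_succ L f
    obtain ⟨c', hc', hsum'⟩ := ih (k / L) hk1nn hk1lt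
    refine ⟨fun i => match i with | 0 => k % L | (j+1) => c' j, ?_, ?_⟩
    · intro i
      cases i with
      | zero =>
        refine ⟨Int.emod_nonneg k (by omega), ?_⟩
        show k % L ≤ L - 1
        have := Int.emod_lt_of_pos k hL0
        omega
      | succ j => exact hc' j
    · rw [Finset.sum_range_succ']
      simp only [pow_zero, mul_one]
      have hrw : ∑ i ∈ Finset.range f,
          (match i + 1 with | 0 => k % L | (j+1) => c' j) * L ^ (i+1)
          = (∑ i ∈ Finset.range f, c' i * L ^ i) * L := by
        rw [Finset.sum_mul]
        exact Finset.sum_congr rfl (fun j _ => by ring)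
      rw [hrw, hsum']
      have := Int.mul_ediv_add_emod k L
      linarith

/-! ### Structural lemmas -/

lemma SB_eq (ℓ f : ℕ) (B : Finset (Fin f)) (b : Fin f → ℤ) :
    SB ℓ f B b =
      (∑ i ∈ B, (ℓ:ℤ) ^ (i:ℕ) - (ℓ:ℤ) * ∑ i ∈ Bᶜ, (ℓ:ℤ) ^ (i:ℕ))
      + ∑ i : Fin f, (if i ∈ B then b i - 1 else (ℓ:ℤ) - b i) * (ℓ:ℤ) ^ (i:ℕ) := by
  rw [SB, ← Finset.sum_add_sum_compl B
    (fun i => (if i ∈ B then b i - 1 else (ℓ:ℤ) - b i) * (ℓ:ℤ) ^ (i:ℕ))]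
  have h1 : ∑ i ∈ B, (if i ∈ B then b i - 1 else (ℓ:ℤ) - b i) * (ℓ:ℤ) ^ (i:ℕ)
      = ∑ i ∈ B, (b i * (ℓ:ℤ)^(i:ℕ) - (ℓ:ℤ)^(i:ℕ)) :=
    Finset.sum_congr rfl (fun i hi => by rw [if_pos hi]; ring)
  have h2 : ∑ i ∈ Bᶜ, (if i ∈ B then b i - 1 else (ℓ:ℤ) - b i) * (ℓ:ℤ) ^ (i:ℕ)
      = ∑ i ∈ Bᶜ, ((ℓ:ℤ) * (ℓ:ℤ)^(i:ℕ) - b i * (ℓ:ℤ)^(i:ℕ)) :=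
    Finset.sum_congr rfl (fun i hi => by rw [if_neg (Finset.mem_compl.mp hi)]; ring)
  rw [h1, h2, Finset.sum_sub_distrib, Finset.sum_sub_distrib, ← Finset.mul_sum]
  ring

lemma nB'_eq (ℓ f : ℕ) (B : Finset (Fin f)) :
    nB' ℓ f B = (∑ i ∈ B, (ℓ:ℤ)^(i:ℕ) - (ℓ:ℤ) * ∑ i ∈ Bᶜ, (ℓ:ℤ)^(i:ℕ)) + (ℓ:ℤ)^f := by
  have hgeom : ((ℓ:ℤ) - 1) * ∑ i ∈ Finset.range f, (ℓ:ℤ)^i = (ℓ:ℤ)^f - 1 := by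
    have h := geom_sum_mul (ℓ:ℤ) f
    linear_combination h
  have hsplit : (∑ i ∈ B, (ℓ:ℤ)^(i:ℕ)) + ∑ i ∈ Bᶜ, (ℓ:ℤ)^(i:ℕ)
      = ∑ i ∈ Finset.range f, (ℓ:ℤ)^i := by
    rw [Finset.sum_add_sum_compl]
    exact Fin.sum_univ_eq_sum_range (fun j => (ℓ:ℤ)^j) f
  have hB1 : ∑ i ∈ B, (ℓ:ℤ)^((i:ℕ)+1) = (ℓ:ℤ) * ∑ i ∈ B, (ℓ:ℤ)^(i:ℕ) := by
    rw [Finset.mul_sum]; exact Finset.sum_congr rfl (fun i _ => by ring)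
  rw [nB', nB, hB1]
  linear_combination ((ℓ:ℤ)-1) * hsplit + hgeom

/-- The digit function of `b` relative to `B`, extended by `0` to all of `ℕ`. -/
def dig (ℓ f : ℕ) (B : Finset (Fin f)) (b : Fin f → ℤ) (j : ℕ) : ℤ :=
  if h : j < f then (if (⟨j, h⟩ : Fin f) ∈ B then b ⟨j, h⟩ - 1 else (ℓ:ℤ) - b ⟨j, h⟩) else 0

lemma SB_eq_dig (ℓ f : ℕ) (B : Finset (Fin f)) (b : Fin f → ℤ) :
    SB ℓ f B b =
      (∑ i ∈ B, (ℓ:ℤ) ^ (i:ℕ) - (ℓ:ℤ) * ∑ i ∈ Bᶜ, (ℓ:ℤ) ^ (i:ℕ))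
      + ∑ j ∈ Finset.range f, dig ℓ f B b j * (ℓ:ℤ) ^ j := by
  rw [SB_eq]
  congr 1
  rw [← Fin.sum_univ_eq_sum_range (fun j => dig ℓ f B b j * (ℓ:ℤ) ^ j) f]
  refine Finset.sum_congr rfl (fun i _ => ?_)
  simp [dig, i.isLt]

lemma dig_bounds (ℓ f : ℕ) (B : Finset (Fin f)) (b : Fin f → ℤ)
    (hb : ∀ i, 1 ≤ b i ∧ b i ≤ (ℓ:ℤ)) :
    ∀ j, j < f → 0 ≤ dig ℓ f B b j ∧ dig ℓ f B b j ≤ (ℓ:ℤ) - 1 := by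
  intro j hj
  rw [dig, dif_pos hj]
  have := hb ⟨j, hj⟩
  split <;> omega

/-- If `n ≡ n'_B (mod ℓ^f + 1)` then there is no `b ∈ {1,…,ℓ}^f` with
`n ≡ S_B(b) (mod ℓ^f + 1)`, while if `n ≢ n'_B (mod ℓ^f + 1)` then there is
exactly one such `b`. -/
theorem stmt1 (ℓ f : ℕ) (hℓ : ℓ.Prime) (hf : 0 < f) (n : ℤ) (B : Finset (Fin f)) :
    (Int.ModEq ((ℓ : ℤ) ^ f + 1) n (nB' ℓ f B) →
      ¬ ∃ b : Fin f → ℤ, (∀ i, 1 ≤ b i ∧ b i ≤ (ℓ : ℤ)) ∧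
        Int.ModEq ((ℓ : ℤ) ^ f + 1) n (SB ℓ f B b)) ∧
    (¬ Int.ModEq ((ℓ : ℤ) ^ f + 1) n (nB' ℓ f B) →
      ∃! b : Fin f → ℤ, (∀ i, 1 ≤ b i ∧ b i ≤ (ℓ : ℤ)) ∧
        Int.ModEq ((ℓ : ℤ) ^ f + 1) n (SB ℓ f B b)) := by
  have hL2 : (2:ℤ) ≤ (ℓ:ℤ) := by exact_mod_cast hℓ.two_le
  have hL1 : (1:ℤ) ≤ (ℓ:ℤ) := by omega
  have hLfpos : (0:ℤ) < (ℓ:ℤ) ^ f := by positivity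
  set M : ℤ := (ℓ:ℤ) ^ f + 1 with hMdef
  have hM0 : 0 < M := by omega
  set m0 : ℤ := ∑ i ∈ B, (ℓ:ℤ) ^ (i:ℕ) - (ℓ:ℤ) * ∑ i ∈ Bᶜ, (ℓ:ℤ) ^ (i:ℕ) with hm0def
  have hnB' : nB' ℓ f B = m0 + (ℓ:ℤ) ^ f := nB'_eq ℓ f B
  constructor
  · -- no solution case
    rintro hmod ⟨b, hb, hbc⟩
    have hS : SB ℓ f B b = m0 + ∑ j ∈ Finset.range f, dig ℓ f B b j * (ℓ:ℤ) ^ j :=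
      SB_eq_dig ℓ f B b
    set s : ℤ := ∑ j ∈ Finset.range f, dig ℓ f B b j * (ℓ:ℤ) ^ j with hsdef
    have hbounds := digits_bounds (ℓ:ℤ) hL1 f (dig ℓ f B b) (dig_bounds ℓ f B b hb)
    rw [hS] at hbc
    rw [hnB'] at hmod
    have h3 : Int.ModEq M (m0 + s) (m0 + (ℓ:ℤ)^f) := hbc.symm.trans hmod
    have hdvd : M ∣ (m0 + (ℓ:ℤ)^f) - (m0 + s) := h3.dvd
    have heq : (m0 + (ℓ:ℤ)^f) - (m0 + s) = (ℓ:ℤ)^f - s := by ring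
    rw [heq] at hdvd
    have hpos : 0 < (ℓ:ℤ)^f - s := by omega
    have := Int.le_of_dvd hpos hdvd
    omega
  · -- unique solution case
    intro hmod
    set k : ℤ := (n - m0) % M with hkdef
    have hk0 : 0 ≤ k := Int.emod_nonneg _ (by omega)
    have hklt : k < M := Int.emod_lt_of_pos _ hM0
    have hkm : Int.ModEq M (n - m0) k := by
      show (n - m0) % M = k % M
      rw [hkdef, Int.emod_emod_of_dvd _ dvd_rfl]
    have hnk : Int.ModEq M n (m0 + k) := by
      have h := Int.ModEq.add_left m0 hkm
      have he : m0 + (n - m0) = n := by ring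
      rwa [he] at h
    have hkne : k ≠ (ℓ:ℤ) ^ f := by
      intro he
      apply hmod
      rw [hnB', ← he]
      exact hnk
    obtain ⟨c, hcb, hcs⟩ := digits_exist (ℓ:ℤ) hL1 f k hk0 (by omega)
    refine ⟨fun i => if i ∈ B then c ↑i + 1 else (ℓ:ℤ) - c ↑i, ⟨?_, ?_⟩, ?_⟩
    · intro i
      have := hcb ↑i
      dsimp only
      split <;> omega
    · -- congruence
      have hS := SB_eq_dig ℓ f B (fun i => if i ∈ B then c ↑i + 1 else (ℓ:ℤ) - c ↑i)
      have hdig : ∀ j ∈ Finset.range f,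
          dig ℓ f B (fun i => if i ∈ B then c ↑i + 1 else (ℓ:ℤ) - c ↑i) j * (ℓ:ℤ)^j
          = c j * (ℓ:ℤ)^j := by
        intro j hj
        have hjf : j < f := Finset.mem_range.mp hj
        rw [dig, dif_pos hjf]
        by_cases h : (⟨j, hjf⟩ : Fin f) ∈ B
        · simp only [h, if_true]; ring
        · simp only [h, if_false]; ring
      rw [hS, Finset.sum_congr rfl hdig, hcs]
      exact hnk
    · -- uniqueness
      intro b₂ ⟨hb₂, hc₂⟩
      have hS₂ : SB ℓ f B b₂ = m0 + ∑ j ∈ Finset.range f, dig ℓ f B b₂ j * (ℓ:ℤ) ^ j :=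
        SB_eq_dig ℓ f B b₂
      set s₂ : ℤ := ∑ j ∈ Finset.range f, dig ℓ f B b₂ j * (ℓ:ℤ) ^ j with hs₂def
      have hbounds₂ := digits_bounds (ℓ:ℤ) hL1 f (dig ℓ f B b₂) (dig_bounds ℓ f B b₂ hb₂)
      rw [hS₂] at hc₂
      have h3 : Int.ModEq M (m0 + s₂) (m0 + k) := hc₂.symm.trans hnk
      have hdvd : M ∣ (m0 + k) - (m0 + s₂) := h3.dvd
      have heq : (m0 + k) - (m0 + s₂) = k - s₂ := by ring
      rw [heq] at hdvd
      have hzero : k - s₂ = 0 := Int.eq_zero_of_abs_lt_dvd hdvd (by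
        rw [abs_lt]; omega)
      have hsum_eq : ∑ j ∈ Finset.range f, dig ℓ f B b₂ j * (ℓ:ℤ) ^ j
          = ∑ j ∈ Finset.range f, c j * (ℓ:ℤ) ^ j := by
        rw [← hs₂def, hcs]; omega
      have hdu := digits_unique (ℓ:ℤ) hL1 f (dig ℓ f B b₂) c
        (dig_bounds ℓ f B b₂ hb₂) (fun i _ => hcb i) hsum_eq
      funext i
      show b₂ i = if i ∈ B then c ↑i + 1 else (ℓ:ℤ) - c ↑i
      have hd := hdu ↑i i.isLt
      rw [dig, dif_pos i.isLt] at hd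
      simp only [Fin.eta] at hd
      have := hb₂ i
      by_cases hiB : i ∈ B
      · rw [if_pos hiB] at hd ⊢; omega
      · rw [if_neg hiB] at hd ⊢; omega

end Stmt1
end

section
/- For every integer n and every subset B of {0,1,…,f−1}: the number of b ∈ {1,…,ℓ}^f with n ≡ S_B(b) (mod ℓ^f − 1) is exactly 2 if n ≡ n_B (mod ℓ^f − 1), and exactly 1 otherwise. -/
namespace Stmt2

/-- `n_B = ∑_{i∈B} ℓ^{i+1} − ∑_{i∉B} ℓ^i`. -/
def nB (ℓ f : ℕ) (B : Finset (Fin f)) : ℤ :=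
  ∑ i ∈ B, (ℓ : ℤ) ^ ((i : ℕ) + 1) - ∑ i ∈ Bᶜ, (ℓ : ℤ) ^ (i : ℕ)

/-- The signed sum `S_B(b) = ∑_{i∈B} b_i ℓ^i − ∑_{i∉B} b_i ℓ^i`. -/
def SB (ℓ f : ℕ) (B : Finset (Fin f)) (b : Fin f → ℤ) : ℤ :=
  ∑ i ∈ B, b i * (ℓ : ℤ) ^ (i : ℕ) - ∑ i ∈ Bᶜ, b i * (ℓ : ℤ) ^ (i : ℕ)

open Finset

/-- auxiliary shifted constant -/
def tB (ℓ f : ℕ) (B : Finset (Fin f)) : ℤ :=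
  ∑ i ∈ B, (ℓ : ℤ) ^ (i : ℕ) - ∑ i ∈ Bᶜ, (ℓ : ℤ) ^ ((i : ℕ) + 1)

lemma nB_eq_tB (ℓ f : ℕ) (B : Finset (Fin f)) :
    nB ℓ f B = tB ℓ f B + ((ℓ : ℤ) ^ f - 1) := by
  have htel : ∑ i : Fin f, ((ℓ : ℤ) ^ ((i : ℕ) + 1) - (ℓ : ℤ) ^ (i : ℕ)) = (ℓ : ℤ) ^ f - 1 := by
    rw [Fin.sum_univ_eq_sum_range (fun i => (ℓ : ℤ) ^ (i + 1) - (ℓ : ℤ) ^ i),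
      Finset.sum_range_sub (fun i => (ℓ : ℤ) ^ i)]
    simp
  have hs := Finset.sum_add_sum_compl B
    (fun i : Fin f => (ℓ : ℤ) ^ ((i : ℕ) + 1) - (ℓ : ℤ) ^ (i : ℕ))
  rw [htel] at hs
  simp only [Finset.sum_sub_distrib] at hs
  unfold nB tB
  linarith

/-- digit value -/
def Nv (ℓ f : ℕ) (c : Fin f → Fin ℓ) : ℤ := ∑ i, ((c i : ℕ) : ℤ) * (ℓ : ℤ) ^ (i : ℕ)

/-- the change of variables -/
def φ (ℓ f : ℕ) (B : Finset (Fin f)) (c : Fin f → Fin ℓ) : Fin f → ℤ :=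
  fun i => if i ∈ B then ((c i : ℕ) : ℤ) + 1 else (ℓ : ℤ) - ((c i : ℕ) : ℤ)

lemma SB_phi (ℓ f : ℕ) (B : Finset (Fin f)) (c : Fin f → Fin ℓ) :
    SB ℓ f B (φ ℓ f B c) = Nv ℓ f c + tB ℓ f B := by
  have h1 : ∑ i ∈ B, φ ℓ f B c i * (ℓ : ℤ) ^ (i : ℕ)
      = ∑ i ∈ B, (((c i : ℕ) : ℤ) * (ℓ : ℤ) ^ (i : ℕ) + (ℓ : ℤ) ^ (i : ℕ)) :=
    Finset.sum_congr rfl (fun i hi => by simp only [φ, if_pos hi]; ring)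
  have h2 : ∑ i ∈ Bᶜ, φ ℓ f B c i * (ℓ : ℤ) ^ (i : ℕ)
      = ∑ i ∈ Bᶜ, ((ℓ : ℤ) ^ ((i : ℕ) + 1) - ((c i : ℕ) : ℤ) * (ℓ : ℤ) ^ (i : ℕ)) :=
    Finset.sum_congr rfl (fun i hi => by
      simp only [φ, if_neg (Finset.mem_compl.mp hi)]; ring)
  have hN := Finset.sum_add_sum_compl B (fun i : Fin f => ((c i : ℕ) : ℤ) * (ℓ : ℤ) ^ (i : ℕ))
  unfold SB Nv tB
  rw [h1, h2, Finset.sum_add_distrib, Finset.sum_sub_distrib]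
  rw [← hN]
  ring

lemma phi_inj (ℓ f : ℕ) (B : Finset (Fin f)) : Function.Injective (φ ℓ f B) := by
  intro c c' h
  funext i
  have hi := congrFun h i
  by_cases hB : i ∈ B <;> simp only [φ, hB, if_true, if_false] at hi <;>
    · exact Fin.ext (by omega)

lemma set_eq (ℓ f : ℕ) (hℓ : 1 ≤ ℓ) (n : ℤ) (B : Finset (Fin f)) :
    {b : Fin f → ℤ | (∀ i, 1 ≤ b i ∧ b i ≤ (ℓ : ℤ)) ∧
        Int.ModEq ((ℓ : ℤ) ^ f - 1) n (SB ℓ f B b)}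
      = ↑((Finset.univ.filter
          (fun c : Fin f → Fin ℓ => ((ℓ : ℤ) ^ f - 1) ∣ (n - tB ℓ f B - Nv ℓ f c))).image
          (φ ℓ f B)) := by
  ext b
  simp only [Set.mem_setOf_eq, Finset.coe_image, Set.mem_image, Finset.mem_coe,
    Finset.mem_filter, Finset.mem_univ, true_and]
  constructor
  · rintro ⟨hb, hmod⟩
    have hc : ∀ i : Fin f, (if i ∈ B then b i - 1 else (ℓ : ℤ) - b i).toNat < ℓ := by
      intro i
      have h1 := (hb i).1
      have h2 := (hb i).2
      by_cases hB : i ∈ B <;> simp [hB] <;> omega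
    refine ⟨fun i => ⟨_, hc i⟩, ?_, ?_⟩
    · have hphi : φ ℓ f B (fun i => ⟨_, hc i⟩) = b := by
        funext i
        have h1 := (hb i).1
        have h2 := (hb i).2
        by_cases hB : i ∈ B <;> simp [φ, hB] <;> omega
      have hNv : Nv ℓ f (fun i => ⟨_, hc i⟩) = SB ℓ f B b - tB ℓ f B := by
        have hsb := SB_phi ℓ f B (fun i => ⟨_, hc i⟩)
        rw [hphi] at hsb
        linarith
      rw [hNv]
      have := Int.ModEq.dvd hmod
      -- this : (ℓ^f - 1) ∣ SB .. - n
      have h3 : n - tB ℓ f B - (SB ℓ f B b - tB ℓ f B) = -(SB ℓ f B b - n) := by ring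
      rw [h3]
      exact dvd_neg.mpr this
    · funext i
      have h1 := (hb i).1
      have h2 := (hb i).2
      by_cases hB : i ∈ B <;> simp [φ, hB] <;> omega
  · rintro ⟨c, hdvd, rfl⟩
    constructor
    · intro i
      have := (c i).isLt
      by_cases hB : i ∈ B <;> simp [φ, hB] <;> omega
    · rw [Int.modEq_iff_dvd, SB_phi]
      have h3 : Nv ℓ f c + tB ℓ f B - n = -(n - tB ℓ f B - Nv ℓ f c) := by ring
      rw [h3]
      exact dvd_neg.mpr hdvd

lemma count_fin (M : ℕ) (hM : 2 ≤ M) (r : ℤ) :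
    (Finset.univ.filter (fun k : Fin M => ((M : ℤ) - 1) ∣ (r - ((k : ℕ) : ℤ)))).card
      = if ((M : ℤ) - 1) ∣ r then 2 else 1 := by
  set m : ℤ := (M : ℤ) - 1 with hm
  have hm1 : 1 ≤ m := by omega
  by_cases hdr : m ∣ r
  · rw [if_pos hdr]
    have : Finset.univ.filter (fun k : Fin M => m ∣ (r - ((k : ℕ) : ℤ)))
        = {(⟨0, by omega⟩ : Fin M), ⟨M - 1, by omega⟩} := by
      ext k
      simp only [Finset.mem_filter, Finset.mem_univ, true_and, Finset.mem_insert,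
        Finset.mem_singleton, Fin.ext_iff]
      constructor
      · intro hk
        have hdk : m ∣ ((k : ℕ) : ℤ) := by
          have := dvd_sub hdr hk
          simpa using this
        have hdkn : (M - 1) ∣ (k : ℕ) := by
          have : ((M - 1 : ℕ) : ℤ) ∣ ((k : ℕ) : ℤ) := by
            rwa [show ((M - 1 : ℕ) : ℤ) = m by push_cast [Nat.one_le_iff_ne_zero]; omega]
          exact_mod_cast this
        have hlt := k.isLt
        rcases Nat.eq_zero_or_pos (k : ℕ) with h0 | hp
        · left; exact h0
        · right
          have := Nat.le_of_dvd hp hdkn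
          omega
      · rintro (h | h) <;> rw [h]
        · simpa using hdr
        · have : r - ((M - 1 : ℕ) : ℤ) = r - m := by
            push_cast [Nat.one_le_iff_ne_zero]; omega
          rw [this]
          exact dvd_sub hdr dvd_rfl
    rw [this]
    rw [Finset.card_insert_of_notMem (by simp [Fin.ext_iff]; omega), Finset.card_singleton]
  · rw [if_neg hdr]
    have hrm0 : 0 ≤ r % m := Int.emod_nonneg r (by omega)
    have hrmm : r % m < m := Int.emod_lt_of_pos r (by omega)
    have hlt : (r % m).toNat < M := by omega
    have : Finset.univ.filter (fun k : Fin M => m ∣ (r - ((k : ℕ) : ℤ)))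
        = {(⟨(r % m).toNat, hlt⟩ : Fin M)} := by
      ext k
      simp only [Finset.mem_filter, Finset.mem_univ, true_and, Finset.mem_singleton,
        Fin.ext_iff]
      constructor
      · intro hk
        -- k ≡ r mod m, 0 ≤ k ≤ m, k ≠ m
        have hkub : ((k : ℕ) : ℤ) ≤ m := by
          have := k.isLt
          omega
        have hkm : ((k : ℕ) : ℤ) ≠ m := by
          intro h
          apply hdr
          have : r - ((k : ℕ) : ℤ) = r - m := by rw [h]
          rw [this] at hk
          have := dvd_add hk (dvd_refl m)
          simpa using this
        have h1 : ((k : ℕ) : ℤ) % m = ((k : ℕ) : ℤ) := by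
          apply Int.emod_eq_of_lt (by positivity)
          omega
        have h2 : ((k : ℕ) : ℤ) ≡ r [ZMOD m] := Int.modEq_iff_dvd.mpr hk
        have h2' : ((k : ℕ) : ℤ) % m = r % m := h2
        rw [h1] at h2'
        omega
      · intro h
        have hkk : ((k : ℕ) : ℤ) = r % m := by omega
        rw [hkk]
        have := Int.emod_emod_of_dvd r (dvd_refl m)
        have : r - r % m = m * (r / m) := by
          have := Int.mul_ediv_add_emod r m
          linarith
        rw [this]
        exact Dvd.intro _ rfl
    rw [this, Finset.card_singleton]

/-- The number of `b ∈ {1,…,ℓ}^f` with `n ≡ S_B(b) (mod ℓ^f − 1)` is exactly 2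
if `n ≡ n_B (mod ℓ^f − 1)`, and exactly 1 otherwise. -/
theorem stmt2 (ℓ f : ℕ) (hℓ : ℓ.Prime) (hf : 0 < f) (h2 : 2 < ℓ ^ f)
    (n : ℤ) (B : Finset (Fin f)) :
    (Int.ModEq ((ℓ : ℤ) ^ f - 1) n (nB ℓ f B) →
      {b : Fin f → ℤ | (∀ i, 1 ≤ b i ∧ b i ≤ (ℓ : ℤ)) ∧
        Int.ModEq ((ℓ : ℤ) ^ f - 1) n (SB ℓ f B b)}.ncard = 2) ∧
    (¬ Int.ModEq ((ℓ : ℤ) ^ f - 1) n (nB ℓ f B) →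
      {b : Fin f → ℤ | (∀ i, 1 ≤ b i ∧ b i ≤ (ℓ : ℤ)) ∧
        Int.ModEq ((ℓ : ℤ) ^ f - 1) n (SB ℓ f B b)}.ncard = 1) := by
  have hℓ1 : 1 ≤ ℓ := hℓ.one_lt.le.trans' (by omega)
  set m : ℤ := (ℓ : ℤ) ^ f - 1 with hmdef
  have hcast : ((ℓ ^ f : ℕ) : ℤ) = (ℓ : ℤ) ^ f := by push_cast; ring
  have hMZ : (2 : ℕ) ≤ ℓ ^ f := by omega
  -- main counting
  have hmain : {b : Fin f → ℤ | (∀ i, 1 ≤ b i ∧ b i ≤ (ℓ : ℤ)) ∧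
        Int.ModEq m n (SB ℓ f B b)}.ncard
      = if m ∣ (n - tB ℓ f B) then 2 else 1 := by
    rw [set_eq ℓ f hℓ1 n B, Set.ncard_coe_finset,
      Finset.card_image_of_injective _ (phi_inj ℓ f B)]
    have hcongr : (Finset.univ.filter
          (fun c : Fin f → Fin ℓ => m ∣ (n - tB ℓ f B - Nv ℓ f c))).card
        = (Finset.univ.filter
          (fun k : Fin (ℓ ^ f) => (((ℓ ^ f : ℕ) : ℤ) - 1) ∣ ((n - tB ℓ f B) - ((k : ℕ) : ℤ)))).card := by
      rw [← Fintype.card_subtype, ← Fintype.card_subtype]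
      refine Fintype.card_congr (finFunctionFinEquiv.subtypeEquiv (fun c => ?_))
      rw [hcast]
      have : ((finFunctionFinEquiv c : ℕ) : ℤ) = Nv ℓ f c := by
        rw [finFunctionFinEquiv_apply]
        unfold Nv
        push_cast
        rfl
      rw [this, hmdef]
    rw [hcongr, count_fin (ℓ ^ f) hMZ (n - tB ℓ f B), hcast]
  have hiff : Int.ModEq m n (nB ℓ f B) ↔ m ∣ (n - tB ℓ f B) := by
    rw [Int.modEq_iff_dvd, nB_eq_tB]
    constructor
    · intro h
      have h2 : m ∣ tB ℓ f B + m - n - m := dvd_sub h dvd_rfl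
      have h3 : tB ℓ f B + m - n - m = -(n - tB ℓ f B) := by ring
      rw [h3] at h2
      exact dvd_neg.mp h2
    · intro h
      have h2 : m ∣ -(n - tB ℓ f B) + m := dvd_add (dvd_neg.mpr h) dvd_rfl
      have h3 : -(n - tB ℓ f B) + m = tB ℓ f B + m - n := by ring
      rwa [h3] at h2
  constructor
  · intro h
    rw [hmain, if_pos (hiff.mp h)]
  · intro h
    rw [hmain, if_neg (fun hd => h (hiff.mpr hd))]

end Stmt2
end

section
/- For a subset B of {0,1,…,f−1}, one has n'_B ≡ 0 (mod ℓ^f + 1) if and only if f is odd and B is either the set of even indices {0,2,…,f−1} or the set of odd indices {1,3,…,f−2}. -/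
/-!
Write `S_B = ∑_{i∈B} ℓ^i` and `T = ∑_{i<f} ℓ^i`, so that `n'_B = (ℓ+1) S_B - T + 1`. Since
`0 ≤ S_B ≤ T` and `(ℓ-1) T = ℓ^f - 1`, the integer `n'_B` lies strictly between `-(ℓ^f+1)` and
`2(ℓ^f+1)`, so it is divisible by `ℓ^f+1` only when it equals `0` or `ℓ^f+1`.

Summing the geometric series two terms at a time gives
`(ℓ+1) S_evens = T + [f odd] ℓ^f` and `(ℓ+1) S_odds + 1 = T + [f even] ℓ^f`. Hence for even `f`
the value `0` (resp. `ℓ^f+1`) would make `ℓ+1` divide `1`, while for odd `f` it forces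
`S_B = S_odds` (resp. `S_B = S_evens`), and base-`ℓ` expansions are unique.
-/

namespace Stmt3

/-- `n_B = ∑_{i∈B} ℓ^{i+1} − ∑_{i∉B} ℓ^i`. -/
def nB (ℓ f : ℕ) (B : Finset (Fin f)) : ℤ :=
  ∑ i ∈ B, (ℓ : ℤ) ^ ((i : ℕ) + 1) - ∑ i ∈ Bᶜ, (ℓ : ℤ) ^ (i : ℕ)

/-- `n'_B = n_B + 1`. -/
def nB' (ℓ f : ℕ) (B : Finset (Fin f)) : ℤ := nB ℓ f B + 1

/-- The set of even indices in `{0,…,f−1}`. -/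
def evens (f : ℕ) : Finset (Fin f) := Finset.univ.filter fun i => Even (i : ℕ)

/-- The set of odd indices in `{0,…,f−1}`. -/
def odds (f : ℕ) : Finset (Fin f) := Finset.univ.filter fun i => ¬ Even (i : ℕ)

open Finset

theorem _root_.Int.eq_zero_or_eq_of_dvd_of_neg_lt_of_lt_two_mul {d n : ℤ} (h : d ∣ n)
    (h₁ : -d < n) (h₂ : n < 2 * d) : n = 0 ∨ n = d := by
  obtain ⟨c, rfl⟩ := h
  have hc₁ : -1 < c := by nlinarith
  have hc₂ : c < 2 := by nlinarith
  interval_cases c <;> simp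

section Identities

variable {R : Type*} [CommRing R]

theorem mul_sum_evens_pow (x : R) (f : ℕ) :
    (x + 1) * ∑ i ∈ evens f, x ^ (i : ℕ) =
      ∑ i : Fin f, x ^ (i : ℕ) + if Odd f then x ^ f else 0 := by
  rw [evens, sum_filter, Fin.sum_univ_eq_sum_range (fun i => if Even i then x ^ i else 0),
    Fin.sum_univ_eq_sum_range (x ^ ·)]
  induction f with
  | zero => simp
  | succ f ih =>
    rw [sum_range_succ, sum_range_succ, mul_add, ih]
    by_cases hf : Even f
    · simp [hf, ← Nat.not_even_iff_odd]
      ring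
    · simp [hf, ← Nat.not_even_iff_odd]

theorem mul_sum_odds_pow_add_one (x : R) (f : ℕ) :
    (x + 1) * ∑ i ∈ odds f, x ^ (i : ℕ) + 1 =
      ∑ i : Fin f, x ^ (i : ℕ) + if Even f then x ^ f else 0 := by
  rw [odds, sum_filter, Fin.sum_univ_eq_sum_range (fun i => if ¬Even i then x ^ i else 0),
    Fin.sum_univ_eq_sum_range (x ^ ·)]
  induction f with
  | zero => simp
  | succ f ih =>
    rw [sum_range_succ, sum_range_succ, mul_add, add_right_comm, ih]
    by_cases hf : Even f
    · simp [hf, Nat.even_add_one]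
    · simp [hf, Nat.even_add_one]
      ring

end Identities

theorem sum_pow_fin_injective {ℓ : ℕ} (hℓ : 2 ≤ ℓ) (f : ℕ) :
    Function.Injective fun B : Finset (Fin f) => ∑ i ∈ B, (ℓ : ℤ) ^ (i : ℕ) := by
  intro B C (h : ∑ i ∈ B, (ℓ : ℤ) ^ (i : ℕ) = ∑ i ∈ C, (ℓ : ℤ) ^ (i : ℕ))
  apply map_injective Fin.valEmbedding
  apply geomSum_injective hℓ
  simp only [sum_map, Fin.valEmbedding_apply]
  exact_mod_cast h

theorem nB'_eq (ℓ f : ℕ) (B : Finset (Fin f)) :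
    nB' ℓ f B = (ℓ + 1) * ∑ i ∈ B, (ℓ : ℤ) ^ (i : ℕ) - ∑ i : Fin f, (ℓ : ℤ) ^ (i : ℕ) + 1 := by
  rw [nB', nB, ← sum_compl_add_sum B]
  simp only [pow_succ, ← sum_mul]
  ring

theorem nB'_bounds {ℓ f : ℕ} (hℓ : 2 ≤ ℓ) (B : Finset (Fin f)) :
    -((ℓ : ℤ) ^ f + 1) < nB' ℓ f B ∧ nB' ℓ f B < 2 * ((ℓ : ℤ) ^ f + 1) := by
  have hS : 0 ≤ ∑ i ∈ B, (ℓ : ℤ) ^ (i : ℕ) := by positivity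
  have hST : ∑ i ∈ B, (ℓ : ℤ) ^ (i : ℕ) ≤ ∑ i : Fin f, (ℓ : ℤ) ^ (i : ℕ) :=
    sum_le_sum_of_subset_of_nonneg (subset_univ B) fun _ _ _ => by positivity
  have hT : (∑ i : Fin f, (ℓ : ℤ) ^ (i : ℕ)) * (ℓ - 1) = ℓ ^ f - 1 := by
    rw [Fin.sum_univ_eq_sum_range (fun i => (ℓ : ℤ) ^ i), geom_sum_mul]
  have hℓ' : (2 : ℤ) ≤ ℓ := by exact_mod_cast hℓ
  rw [nB'_eq]
  constructor <;> nlinarith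

theorem nB'_eq_evens (ℓ f : ℕ) (B : Finset (Fin f)) :
    nB' ℓ f B = (ℓ + 1) * (∑ i ∈ B, (ℓ : ℤ) ^ (i : ℕ) - ∑ i ∈ evens f, (ℓ : ℤ) ^ (i : ℕ)) + 1 +
      if Odd f then (ℓ : ℤ) ^ f else 0 := by
  rw [nB'_eq]
  linear_combination mul_sum_evens_pow (ℓ : ℤ) f

theorem nB'_eq_odds (ℓ f : ℕ) (B : Finset (Fin f)) :
    nB' ℓ f B = (ℓ + 1) * (∑ i ∈ B, (ℓ : ℤ) ^ (i : ℕ) - ∑ i ∈ odds f, (ℓ : ℤ) ^ (i : ℕ)) +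
      if Even f then (ℓ : ℤ) ^ f else 0 := by
  rw [nB'_eq]
  linear_combination mul_sum_odds_pow_add_one (ℓ : ℤ) f

theorem nB'_eq_zero_iff {ℓ f : ℕ} (hℓ : 2 ≤ ℓ) (B : Finset (Fin f)) :
    nB' ℓ f B = 0 ↔ Odd f ∧ B = odds f := by
  constructor
  · intro h
    rcases Nat.even_or_odd f with hf | hf
    · rw [nB'_eq_evens, if_neg (Nat.not_odd_iff_even.2 hf), add_zero,
        add_eq_zero_iff_eq_neg] at h
      have := Int.eq_one_or_neg_one_of_mul_eq_neg_one h
      omega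
    · rw [nB'_eq_odds, if_neg (Nat.not_even_iff_odd.2 hf), add_zero, mul_eq_zero,
        sub_eq_zero] at h
      exact ⟨hf, sum_pow_fin_injective hℓ f (h.resolve_left (by positivity))⟩
  · rintro ⟨hf, rfl⟩
    simp [nB'_eq_odds, Nat.not_even_iff_odd.2 hf]

theorem nB'_eq_pow_add_one_iff {ℓ f : ℕ} (hℓ : 2 ≤ ℓ) (B : Finset (Fin f)) :
    nB' ℓ f B = ℓ ^ f + 1 ↔ Odd f ∧ B = evens f := by
  constructor
  · intro h
    rcases Nat.even_or_odd f with hf | hf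
    · rw [nB'_eq_odds, if_pos hf, add_comm, add_right_inj] at h
      have := Int.eq_one_or_neg_one_of_mul_eq_one h
      omega
    · rw [nB'_eq_evens, if_pos hf, add_assoc, add_comm 1, add_eq_right, mul_eq_zero,
        sub_eq_zero] at h
      exact ⟨hf, sum_pow_fin_injective hℓ f (h.resolve_left (by positivity))⟩
  · rintro ⟨hf, rfl⟩
    simp [nB'_eq_evens, hf, add_comm]

theorem stmt3_general (ℓ f : ℕ) (hℓ : ℓ.Prime) (B : Finset (Fin f)) :
    Int.ModEq ((ℓ : ℤ) ^ f + 1) (nB' ℓ f B) 0 ↔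
      Odd f ∧ (B = evens f ∨ B = odds f) := by
  have hℓ₂ := hℓ.two_le
  rw [Int.modEq_zero_iff_dvd]
  constructor
  · intro h
    obtain ⟨h₁, h₂⟩ := nB'_bounds hℓ₂ B
    rcases Int.eq_zero_or_eq_of_dvd_of_neg_lt_of_lt_two_mul h h₁ h₂ with h | h
    · exact (nB'_eq_zero_iff hℓ₂ B).1 h |>.imp_right Or.inr
    · exact (nB'_eq_pow_add_one_iff hℓ₂ B).1 h |>.imp_right Or.inl
  · rintro ⟨hf, rfl | rfl⟩
    · rw [(nB'_eq_pow_add_one_iff hℓ₂ _).2 ⟨hf, rfl⟩]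
    · rw [(nB'_eq_zero_iff hℓ₂ _).2 ⟨hf, rfl⟩]
      exact dvd_zero _

/-- `n'_B ≡ 0 (mod ℓ^f + 1)` iff `f` is odd and `B` is either the set of even
indices `{0,2,…,f−1}` or the set of odd indices `{1,3,…,f−2}`. -/
theorem stmt3 (ℓ f : ℕ) (hℓ : ℓ.Prime) (hf : 0 < f) (B : Finset (Fin f)) :
    Int.ModEq ((ℓ : ℤ) ^ f + 1) (nB' ℓ f B) 0 ↔
      Odd f ∧ (B = evens f ∨ B = odds f) :=
  stmt3_general ℓ f hℓ B

end Stmt3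
end

section
/- If f is even, then the 2^f residue classes n'_B mod ℓ^f + 1, as B runs over all subsets of {0,1,…,f−1}, are pairwise distinct. -/
namespace Stmt4

/-- `n_B = ∑_{i∈B} ℓ^{i+1} − ∑_{i∉B} ℓ^i`. -/
def nB (ℓ f : ℕ) (B : Finset (Fin f)) : ℤ :=
  ∑ i ∈ B, (ℓ : ℤ) ^ ((i : ℕ) + 1) - ∑ i ∈ Bᶜ, (ℓ : ℤ) ^ (i : ℕ)

/-- `n'_B = n_B + 1`. -/
def nB' (ℓ f : ℕ) (B : Finset (Fin f)) : ℤ := nB ℓ f B + 1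

lemma nB_eq (ℓ f : ℕ) (B : Finset (Fin f)) :
    nB ℓ f B = ((ℓ : ℤ) + 1) * (∑ i ∈ B, (ℓ : ℤ) ^ (i : ℕ)) - ∑ i : Fin f, (ℓ : ℤ) ^ (i : ℕ) := by
  have hsplit : ∑ i ∈ Bᶜ, (ℓ : ℤ) ^ (i : ℕ)
      = ∑ i : Fin f, (ℓ : ℤ) ^ (i : ℕ) - ∑ i ∈ B, (ℓ : ℤ) ^ (i : ℕ) := by
    rw [eq_sub_iff_add_eq, Finset.sum_compl_add_sum]
  have hpow : ∑ i ∈ B, (ℓ : ℤ) ^ ((i : ℕ) + 1) = (ℓ : ℤ) * ∑ i ∈ B, (ℓ : ℤ) ^ (i : ℕ) := by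
    rw [Finset.mul_sum]; exact Finset.sum_congr rfl fun i _ => by ring
  rw [nB, hsplit, hpow]; ring

/-- If `f` is even, then the `2^f` residue classes `n'_B mod ℓ^f + 1`, as `B`
runs over all subsets of `{0,…,f−1}`, are pairwise distinct. -/
theorem stmt4 (ℓ f : ℕ) (hℓ : ℓ.Prime) (hf : 0 < f) (hfe : Even f)
    (B₁ B₂ : Finset (Fin f))
    (h : Int.ModEq ((ℓ : ℤ) ^ f + 1) (nB' ℓ f B₁) (nB' ℓ f B₂)) :
    B₁ = B₂ := by
  have hℓ2 : 2 ≤ ℓ := hℓ.two_le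
  have hℓ2' : (2 : ℤ) ≤ (ℓ : ℤ) := by exact_mod_cast hℓ2
  set S₁ : ℤ := ∑ i ∈ B₁, (ℓ : ℤ) ^ (i : ℕ) with hS₁
  set S₂ : ℤ := ∑ i ∈ B₂, (ℓ : ℤ) ^ (i : ℕ) with hS₂
  set N : ℤ := (ℓ : ℤ) ^ f + 1 with hN
  set T : ℤ := ∑ i : Fin f, (ℓ : ℤ) ^ (i : ℕ) with hT
  have hNpos : 0 < N := by positivity
  -- N divides (ℓ+1)(S₂ - S₁)
  have hdvd : N ∣ ((ℓ : ℤ) + 1) * (S₂ - S₁) := by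
    have hd := h.dvd
    have heq : nB' ℓ f B₂ - nB' ℓ f B₁ = ((ℓ : ℤ) + 1) * (S₂ - S₁) := by
      simp only [nB', nB_eq]; ring
    rwa [heq] at hd
  obtain ⟨k, hk⟩ := hdvd
  -- mod (ℓ+1): N ≡ 2, so (ℓ+1) ∣ 2k
  have hmod : ((ℓ : ℤ) + 1) ∣ 2 * k := by
    have hℓm : Int.ModEq ((ℓ : ℤ) + 1) (ℓ : ℤ) (-1) :=
      Int.ModEq.symm (Int.modEq_iff_dvd.mpr ⟨1, by ring⟩)
    have hNm : Int.ModEq ((ℓ : ℤ) + 1) N 2 := by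
      have h1 := (hℓm.pow f).add_right 1
      rw [hfe.neg_one_pow] at h1
      simpa [hN] using h1
    have h0 : Int.ModEq ((ℓ : ℤ) + 1) (N * k) 0 := by
      rw [← hk]
      exact (Int.modEq_zero_iff_dvd).mpr ⟨S₂ - S₁, rfl⟩
    exact (Int.modEq_zero_iff_dvd).mp ((hNm.mul_right k).symm.trans h0)
  -- geometric sum value
  have hTgeo : T * ((ℓ : ℤ) - 1) = (ℓ : ℤ) ^ f - 1 := by
    rw [hT, Fin.sum_univ_eq_sum_range]
    exact geom_sum_mul (ℓ : ℤ) f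
  have hTnonneg : 0 ≤ T := Finset.sum_nonneg fun i _ => by positivity
  -- |S₂ - S₁| ≤ T
  have hSle : ∀ B : Finset (Fin f), 0 ≤ (∑ i ∈ B, (ℓ : ℤ) ^ (i : ℕ)) ∧
      (∑ i ∈ B, (ℓ : ℤ) ^ (i : ℕ)) ≤ T := fun B =>
    ⟨Finset.sum_nonneg fun i _ => by positivity,
     Finset.sum_le_sum_of_subset_of_nonneg (Finset.subset_univ B) (fun i _ _ => by positivity)⟩
  have habs : |S₂ - S₁| ≤ T := by
    obtain ⟨h1, h2⟩ := hSle B₁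
    obtain ⟨h3, h4⟩ := hSle B₂
    rw [abs_le]; constructor <;> [linarith; linarith]
  have hkabs : |k| * N ≤ ((ℓ : ℤ) + 1) * T := by
    have : |((ℓ : ℤ) + 1) * (S₂ - S₁)| = |N * k| := by rw [hk]
    rw [abs_mul, abs_mul, abs_of_pos hNpos] at this
    rw [abs_of_pos (by linarith : (0:ℤ) < (ℓ:ℤ)+1)] at this
    calc |k| * N = N * |k| := by ring
    _ = ((ℓ:ℤ)+1) * |S₂ - S₁| := this.symm
    _ ≤ ((ℓ:ℤ)+1) * T := by
        apply mul_le_mul_of_nonneg_left habs (by linarith)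
  -- k = 0
  have hk0 : k = 0 := by
    rcases eq_or_lt_of_le hℓ2' with hl2 | hl3
    · -- ℓ = 2
      have hT2 : T = (2:ℤ) ^ f - 1 := by
        have := hTgeo; rw [← hl2] at this; linarith
      have hN2 : N = (2:ℤ) ^ f + 1 := by rw [hN, ← hl2]
      have hkb : |k| ≤ 2 := by
        by_contra hc
        push_neg at hc
        have : 3 * N ≤ |k| * N := by nlinarith
        nlinarith
      have h3k : (3 : ℤ) ∣ k := by
        have h32 : ((ℓ : ℤ) + 1) = 3 := by rw [← hl2]; ring
        rw [h32] at hmod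
        rcases Int.prime_three.dvd_mul.mp hmod with h' | h'
        · norm_num at h'
        · exact h'
      rcases eq_or_ne k 0 with h' | h'
      · exact h'
      · exfalso
        have : (3 : ℤ) ≤ |k| := Int.le_of_dvd (abs_pos.mpr h') ((dvd_abs 3 k).mpr h3k)
        omega
    · -- ℓ ≥ 3
      have hkb : |k| ≤ 1 := by
        by_contra hc
        push_neg at hc
        have h2N : 2 * N ≤ |k| * N := by nlinarith
        have hT2 : ((ℓ:ℤ)+1) * T ≤ 2 * ((ℓ:ℤ)^f - 1) := by nlinarith
        nlinarith
      have : 2 * k = 0 := by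
        apply Int.eq_zero_of_abs_lt_dvd hmod
        rw [abs_mul]
        have : |(2:ℤ)| = 2 := by norm_num
        rw [this]
        linarith
      omega
  -- hence S₁ = S₂
  have hSeq : S₁ = S₂ := by
    rw [hk0, mul_zero] at hk
    have : S₂ - S₁ = 0 := by
      rcases mul_eq_zero.mp hk with h' | h'
      · linarith
      · exact h'
    linarith
  -- pass to ℕ and use geomSum injectivity
  have hnat : (∑ i ∈ B₁, ℓ ^ (i : ℕ)) = ∑ i ∈ B₂, ℓ ^ (i : ℕ) := by
    have : ((∑ i ∈ B₁, ℓ ^ (i : ℕ) : ℕ) : ℤ) = ((∑ i ∈ B₂, ℓ ^ (i : ℕ) : ℕ) : ℤ) := by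
      push_cast
      exact hSeq
    exact_mod_cast this
  let g : Fin f ↪ ℕ := ⟨Fin.val, Fin.val_injective⟩
  have hmap : (B₁.map g) = (B₂.map g) := by
    apply Finset.geomSum_injective hℓ2
    simpa [Finset.sum_map, g] using hnat
  exact Finset.map_injective g hmap

end Stmt4
end

section
/- If f and ℓ are both odd, then the 2^f − 2 residue classes n'_B mod ℓ^f + 1, as B runs over all subsets of {0,1,…,f−1} other than {0,2,…,f−1} and {1,3,…,f−2}, are pairwise distinct and nonzero. -/
namespace Stmt5

/-- `n_B = ∑_{i∈B} ℓ^{i+1} − ∑_{i∉B} ℓ^i`. -/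
def nB (ℓ f : ℕ) (B : Finset (Fin f)) : ℤ :=
  ∑ i ∈ B, (ℓ : ℤ) ^ ((i : ℕ) + 1) - ∑ i ∈ Bᶜ, (ℓ : ℤ) ^ (i : ℕ)

/-- `n'_B = n_B + 1`. -/
def nB' (ℓ f : ℕ) (B : Finset (Fin f)) : ℤ := nB ℓ f B + 1

/-- The set of even indices `{0,2,…}` in `{0,…,f−1}`. -/
def evens (f : ℕ) : Finset (Fin f) := Finset.univ.filter fun i => Even (i : ℕ)

/-- The set of odd indices `{1,3,…}` in `{0,…,f−1}`. -/
def odds (f : ℕ) : Finset (Fin f) := Finset.univ.filter fun i => ¬ Even (i : ℕ)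

/-! ### Auxiliary definitions -/

/-- `S_B = ∑_{i∈B} ℓ^i`. -/
def SB (ℓ f : ℕ) (B : Finset (Fin f)) : ℤ := ∑ i ∈ B, (ℓ : ℤ) ^ (i : ℕ)

/-- `T = ∑_{i<f} ℓ^i`. -/
def Tv (ℓ f : ℕ) : ℤ := ∑ j ∈ Finset.range f, (ℓ : ℤ) ^ j

/-- `M = ∑_{i<f} (-1)^i ℓ^i`. -/
def Mv (ℓ f : ℕ) : ℤ := ∑ j ∈ Finset.range f, (-1 : ℤ) ^ j * (ℓ : ℤ) ^ j

/-- Indicator digit of `B` at position `j`. -/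
def chi (f : ℕ) (B : Finset (Fin f)) (j : ℕ) : ℤ :=
  if h : j < f then (if (⟨j, h⟩ : Fin f) ∈ B then 1 else 0) else 0

lemma chi_coe (f : ℕ) (B : Finset (Fin f)) (i : Fin f) :
    chi f B (i : ℕ) = if i ∈ B then 1 else 0 := by
  simp [chi, i.isLt]

lemma chi_mem (f : ℕ) (B : Finset (Fin f)) (i : Fin f) (h : chi f B (i : ℕ) = 1) :
    i ∈ B := by
  rw [chi_coe] at h
  by_contra hc
  simp [hc] at h

lemma chi_not_mem (f : ℕ) (B : Finset (Fin f)) (i : Fin f) (h : chi f B (i : ℕ) = 0) :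
    i ∉ B := by
  rw [chi_coe] at h
  intro hc
  simp [hc] at h

lemma chi_zero_or_one (f : ℕ) (B : Finset (Fin f)) (j : ℕ) :
    chi f B j = 0 ∨ chi f B j = 1 := by
  unfold chi
  split
  · split
    · right; rfl
    · left; rfl
  · left; rfl

lemma SB_eq_sum_chi (ℓ f : ℕ) (B : Finset (Fin f)) :
    SB ℓ f B = ∑ j ∈ Finset.range f, chi f B j * (ℓ : ℤ) ^ j := by
  have h1 : ∀ i : Fin f, chi f B (i : ℕ) * (ℓ : ℤ) ^ (i : ℕ)
      = if i ∈ B then (ℓ : ℤ) ^ (i : ℕ) else 0 := fun i => by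
    rw [chi_coe]; split <;> simp
  calc SB ℓ f B = ∑ i ∈ Finset.univ ∩ B, (ℓ : ℤ) ^ (i : ℕ) := by
        rw [Finset.univ_inter, SB]
    _ = ∑ i : Fin f, if i ∈ B then (ℓ : ℤ) ^ (i : ℕ) else 0 :=
        (Finset.sum_ite_mem _ _ _).symm
    _ = ∑ i : Fin f, chi f B (i : ℕ) * (ℓ : ℤ) ^ (i : ℕ) := by simp [h1]
    _ = _ := Fin.sum_univ_eq_sum_range (fun j => chi f B j * (ℓ : ℤ) ^ j) f

lemma SB_nonneg (ℓ f : ℕ) (B : Finset (Fin f)) : 0 ≤ SB ℓ f B :=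
  Finset.sum_nonneg fun i _ => pow_nonneg (by positivity) _

lemma SB_univ (ℓ f : ℕ) : SB ℓ f Finset.univ = Tv ℓ f := by
  rw [SB, Tv, ← Fin.sum_univ_eq_sum_range (fun j => (ℓ : ℤ) ^ j) f]

lemma SB_le_T (ℓ f : ℕ) (B : Finset (Fin f)) : SB ℓ f B ≤ Tv ℓ f := by
  have h1 : SB ℓ f B ≤ SB ℓ f Finset.univ :=
    Finset.sum_le_sum_of_subset_of_nonneg (Finset.subset_univ B)
      (fun i _ _ => pow_nonneg (by positivity) _)
  rw [SB_univ] at h1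
  exact h1

lemma sum_evens_odds (ℓ f : ℕ) : SB ℓ f (evens f) + SB ℓ f (odds f) = Tv ℓ f := by
  rw [SB, SB, evens, odds, Finset.sum_filter_add_sum_filter_not, ← SB_univ ℓ f, SB]

lemma diff_evens_odds (ℓ f : ℕ) : SB ℓ f (evens f) - SB ℓ f (odds f) = Mv ℓ f := by
  have h1 : ∀ i ∈ Finset.univ.filter (fun i : Fin f => Even (i : ℕ)),
      (-1 : ℤ) ^ (i : ℕ) * (ℓ : ℤ) ^ (i : ℕ) = (ℓ : ℤ) ^ (i : ℕ) := fun i hi => by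
    rw [((Finset.mem_filter.mp hi).2).neg_one_pow, one_mul]
  have h2 : ∀ i ∈ Finset.univ.filter (fun i : Fin f => ¬ Even (i : ℕ)),
      (-1 : ℤ) ^ (i : ℕ) * (ℓ : ℤ) ^ (i : ℕ) = -((ℓ : ℤ) ^ (i : ℕ)) := fun i hi => by
    rw [(Nat.not_even_iff_odd.mp (Finset.mem_filter.mp hi).2).neg_one_pow, neg_one_mul]
  have h3 : Mv ℓ f = ∑ i : Fin f, (-1 : ℤ) ^ (i : ℕ) * (ℓ : ℤ) ^ (i : ℕ) :=
    (Fin.sum_univ_eq_sum_range (fun j => (-1 : ℤ) ^ j * (ℓ : ℤ) ^ j) f).symm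
  rw [h3, ← Finset.sum_filter_add_sum_filter_not Finset.univ (fun i : Fin f => Even (i : ℕ))
    (fun i : Fin f => (-1 : ℤ) ^ (i : ℕ) * (ℓ : ℤ) ^ (i : ℕ))]
  rw [Finset.sum_congr rfl h1, Finset.sum_congr rfl h2, SB, SB, evens, odds,
    Finset.sum_neg_distrib]
  ring

lemma Mv_mul (ℓ f : ℕ) (hfo : Odd f) : ((ℓ : ℤ) + 1) * Mv ℓ f = (ℓ : ℤ) ^ f + 1 := by
  have h := geom_sum_mul (-(ℓ : ℤ)) f
  have h2 : Mv ℓ f = ∑ i ∈ Finset.range f, (-(ℓ : ℤ)) ^ i := by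
    rw [Mv]
    exact Finset.sum_congr rfl fun i _ => (neg_pow _ _).symm
  rw [h2]
  rw [hfo.neg_pow] at h
  linarith [h]

lemma Tv_mul (ℓ f : ℕ) : Tv ℓ f * ((ℓ : ℤ) - 1) = (ℓ : ℤ) ^ f - 1 := geom_sum_mul _ f

lemma Mv_pos (ℓ f : ℕ) (hℓ3 : 3 ≤ ℓ) (hfo : Odd f) : 0 < Mv ℓ f := by
  have h := Mv_mul ℓ f hfo
  have hL : (3 : ℤ) ≤ (ℓ : ℤ) := by exact_mod_cast hℓ3
  have hP : (0 : ℤ) < (ℓ : ℤ) ^ f := by positivity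
  nlinarith [h]

lemma Tv_lt_two_Mv (ℓ f : ℕ) (hℓ3 : 3 ≤ ℓ) (hf : 0 < f) (hfo : Odd f) :
    Tv ℓ f < 2 * Mv ℓ f := by
  have hM := Mv_mul ℓ f hfo
  have hT := Tv_mul ℓ f
  have hL : (3 : ℤ) ≤ (ℓ : ℤ) := by exact_mod_cast hℓ3
  have hP : (ℓ : ℤ) ≤ (ℓ : ℤ) ^ f := le_self_pow₀ (by linarith) hf.ne'
  have hkey : ((ℓ : ℤ) ^ 2 - 1) * (2 * Mv ℓ f - Tv ℓ f)
      = (ℓ : ℤ) ^ f * ((ℓ : ℤ) - 3) + 3 * (ℓ : ℤ) - 1 := by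
    linear_combination (2 * ((ℓ : ℤ) - 1)) * hM - ((ℓ : ℤ) + 1) * hT
  have hr : 0 < (ℓ : ℤ) ^ f * ((ℓ : ℤ) - 3) + 3 * (ℓ : ℤ) - 1 := by
    have : (0 : ℤ) ≤ (ℓ : ℤ) ^ f * ((ℓ : ℤ) - 3) :=
      mul_nonneg (pow_nonneg (by linarith) _) (by linarith)
    linarith
  have hpos : 0 < ((ℓ : ℤ) ^ 2 - 1) * (2 * Mv ℓ f - Tv ℓ f) := hkey ▸ hr
  have hsq : 0 < (ℓ : ℤ) ^ 2 - 1 := by nlinarith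
  by_contra hcon
  push_neg at hcon
  have h2 : ((ℓ : ℤ) ^ 2 - 1) * (2 * Mv ℓ f - Tv ℓ f) ≤ 0 :=
    mul_nonpos_of_nonneg_of_nonpos (by linarith) (by linarith)
  linarith

lemma nB'_formula (ℓ f : ℕ) (hfo : Odd f) (B : Finset (Fin f)) :
    nB' ℓ f B = ((ℓ : ℤ) + 1) * (SB ℓ f B - SB ℓ f (odds f)) := by
  have hcompl : ∑ i ∈ Bᶜ, (ℓ : ℤ) ^ (i : ℕ) = Tv ℓ f - SB ℓ f B := by
    have h := Finset.sum_compl_add_sum B (fun i : Fin f => (ℓ : ℤ) ^ (i : ℕ))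
    have h2 : ∑ i : Fin f, (ℓ : ℤ) ^ (i : ℕ) = Tv ℓ f := by
      rw [Tv, ← Fin.sum_univ_eq_sum_range (fun j => (ℓ : ℤ) ^ j) f]
    simp only [SB]
    linarith [h, h2]
  have hmul : ∑ i ∈ B, (ℓ : ℤ) ^ ((i : ℕ) + 1) = (ℓ : ℤ) * SB ℓ f B := by
    rw [SB, Finset.mul_sum]
    exact Finset.sum_congr rfl fun i _ => by ring
  have hodds : 2 * (((ℓ : ℤ) + 1) * SB ℓ f (odds f)) = 2 * (Tv ℓ f - 1) := by
    have h1 := sum_evens_odds ℓ f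
    have h2 := diff_evens_odds ℓ f
    have h3 := Mv_mul ℓ f hfo
    have h4 := Tv_mul ℓ f
    linear_combination ((ℓ : ℤ) + 1) * h1 - ((ℓ : ℤ) + 1) * h2 - h3 + h4
  have hodds' : ((ℓ : ℤ) + 1) * SB ℓ f (odds f) = Tv ℓ f - 1 := by linarith
  rw [nB', nB, hcompl, hmul]
  linarith [hodds']

/-- Uniqueness of digit expansions with small digits. -/
lemma digits_zero (L : ℤ) (hL : 0 < L) :
    ∀ (n : ℕ) (d : ℕ → ℤ), (∀ i, i < n → |d i| < L) →
      (∑ i ∈ Finset.range n, d i * L ^ i = 0) → ∀ i < n, d i = 0 := by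
  intro n
  induction n with
  | zero => intro d _ _ i hi; omega
  | succ n ih =>
    intro d hd hsum i hi
    have hs : ∑ i ∈ Finset.range (n + 1), d i * L ^ i
        = (∑ i ∈ Finset.range n, d (i + 1) * L ^ i) * L + d 0 := by
      rw [Finset.sum_range_succ' (fun i => d i * L ^ i) n, Finset.sum_mul]
      simp only [pow_zero, mul_one]
      congr 1
      exact Finset.sum_congr rfl fun i _ => by ring
    rw [hs] at hsum
    have hdvd : L ∣ d 0 := ⟨-(∑ i ∈ Finset.range n, d (i + 1) * L ^ i), by linarith⟩
    have h0 : d 0 = 0 := Int.eq_zero_of_abs_lt_dvd hdvd (hd 0 (Nat.succ_pos n))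
    have hX : ∑ i ∈ Finset.range n, d (i + 1) * L ^ i = 0 := by
      have hmul : (∑ i ∈ Finset.range n, d (i + 1) * L ^ i) * L = 0 := by linarith
      rcases mul_eq_zero.mp hmul with h | h
      · exact h
      · exact absurd h hL.ne'
    rcases Nat.eq_zero_or_eq_succ_pred i with h | h
    · rw [h]; exact h0
    · rw [h]
      exact ih (fun j => d (j + 1)) (fun j hj => hd (j + 1) (by omega)) hX (i - 1) (by omega)

/-- The central lemma. -/
lemma central (ℓ f : ℕ) (hℓ3 : 3 ≤ ℓ) (hf : 0 < f) (hfo : Odd f)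
    (B₁ B₂ : Finset (Fin f))
    (h : Int.ModEq ((ℓ : ℤ) ^ f + 1) (nB' ℓ f B₁) (nB' ℓ f B₂)) :
    B₁ = B₂ ∨ (B₁ = evens f ∧ B₂ = odds f) ∨ (B₁ = odds f ∧ B₂ = evens f) := by
  have hL : (3 : ℤ) ≤ (ℓ : ℤ) := by exact_mod_cast hℓ3
  have hL0 : (0 : ℤ) < (ℓ : ℤ) := by linarith
  have hdvd0 : ((ℓ : ℤ) ^ f + 1) ∣ nB' ℓ f B₁ - nB' ℓ f B₂ := Int.ModEq.dvd h.symm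
  rw [nB'_formula ℓ f hfo B₁, nB'_formula ℓ f hfo B₂, ← Mv_mul ℓ f hfo] at hdvd0
  have hdvd : Mv ℓ f ∣ SB ℓ f B₁ - SB ℓ f B₂ := by
    have h1 : ((ℓ : ℤ) + 1) * Mv ℓ f ∣ ((ℓ : ℤ) + 1) * (SB ℓ f B₁ - SB ℓ f B₂) := by
      have e : ((ℓ : ℤ) + 1) * (SB ℓ f B₁ - SB ℓ f B₂)
          = ((ℓ : ℤ) + 1) * (SB ℓ f B₁ - SB ℓ f (odds f))
            - ((ℓ : ℤ) + 1) * (SB ℓ f B₂ - SB ℓ f (odds f)) := by ring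
      rw [e]; exact hdvd0
    exact (mul_dvd_mul_iff_left (by linarith : ((ℓ : ℤ) + 1) ≠ 0)).mp h1
  obtain ⟨k, hk⟩ := hdvd
  have hMpos := Mv_pos ℓ f hℓ3 hfo
  have hTlt := Tv_lt_two_Mv ℓ f hℓ3 hf hfo
  have hbound : |SB ℓ f B₁ - SB ℓ f B₂| < 2 * Mv ℓ f := by
    have h1 := SB_nonneg ℓ f B₁
    have h2 := SB_nonneg ℓ f B₂
    have h3 := SB_le_T ℓ f B₁
    have h4 := SB_le_T ℓ f B₂
    rw [abs_lt]
    constructor <;> linarith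
  have hk1 : -1 ≤ k := by
    by_contra hcon
    push_neg at hcon
    rw [hk, abs_mul, abs_of_pos hMpos] at hbound
    have habs : 2 ≤ |k| := by rw [abs_of_neg (by omega : k < 0)]; omega
    nlinarith [hbound]
  have hk2 : k ≤ 1 := by
    by_contra hcon
    push_neg at hcon
    rw [hk, abs_mul, abs_of_pos hMpos] at hbound
    have habs : 2 ≤ |k| := by rw [abs_of_pos (by omega : 0 < k)]; omega
    nlinarith [hbound]
  have hdig : ∀ j, j < f → chi f B₁ j - chi f B₂ j - k * (-1 : ℤ) ^ j = 0 := by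
    have hb : ∀ j, |chi f B₁ j - chi f B₂ j - k * (-1 : ℤ) ^ j| < (ℓ : ℤ) := by
      intro j
      have hs : (-1 : ℤ) ^ j = 1 ∨ (-1 : ℤ) ^ j = -1 := neg_one_pow_eq_or ℤ j
      rw [abs_lt]
      rcases chi_zero_or_one f B₁ j with h1 | h1 <;>
      rcases chi_zero_or_one f B₂ j with h2 | h2 <;>
      rcases hs with hs | hs <;>
      rw [h1, h2, hs] <;>
      constructor <;> nlinarith
    apply digits_zero (ℓ : ℤ) hL0 f _ (fun j _ => hb j)
    have e : ∑ j ∈ Finset.range f, (chi f B₁ j - chi f B₂ j - k * (-1 : ℤ) ^ j) * (ℓ : ℤ) ^ j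
        = SB ℓ f B₁ - SB ℓ f B₂ - k * Mv ℓ f := by
      rw [SB_eq_sum_chi, SB_eq_sum_chi, Mv, Finset.mul_sum, ← Finset.sum_sub_distrib,
        ← Finset.sum_sub_distrib]
      exact Finset.sum_congr rfl fun j _ => by ring
    rw [e, hk]; ring
  interval_cases k
  · -- k = -1 : B₁ = odds, B₂ = evens
    right; right
    have key : ∀ i : Fin f, (Even (i : ℕ) → (i ∉ B₁ ∧ i ∈ B₂)) ∧
        (¬ Even (i : ℕ) → (i ∈ B₁ ∧ i ∉ B₂)) := by
      intro i
      have h := hdig (i : ℕ) i.isLt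
      constructor
      · intro he
        rw [he.neg_one_pow] at h
        rcases chi_zero_or_one f B₁ (i : ℕ) with h1 | h1 <;>
          rcases chi_zero_or_one f B₂ (i : ℕ) with h2 | h2 <;> rw [h1, h2] at h
        · norm_num at h
        · exact ⟨chi_not_mem f B₁ i h1, chi_mem f B₂ i h2⟩
        · norm_num at h
        · norm_num at h
      · intro he
        rw [(Nat.not_even_iff_odd.mp he).neg_one_pow] at h
        rcases chi_zero_or_one f B₁ (i : ℕ) with h1 | h1 <;>
          rcases chi_zero_or_one f B₂ (i : ℕ) with h2 | h2 <;> rw [h1, h2] at h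
        · norm_num at h
        · norm_num at h
        · exact ⟨chi_mem f B₁ i h1, chi_not_mem f B₂ i h2⟩
        · norm_num at h
    constructor
    · ext i
      simp only [odds, Finset.mem_filter, Finset.mem_univ, true_and]
      constructor
      · intro hm he
        exact ((key i).1 he).1 hm
      · intro he
        exact ((key i).2 he).1
    · ext i
      simp only [evens, Finset.mem_filter, Finset.mem_univ, true_and]
      constructor
      · intro hm
        by_contra he
        exact ((key i).2 he).2 hm
      · intro he
        exact ((key i).1 he).2
  · -- k = 0 : B₁ = B₂
    left
    ext i
    have h := hdig (i : ℕ) i.isLt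
    rcases chi_zero_or_one f B₁ (i : ℕ) with h1 | h1 <;>
      rcases chi_zero_or_one f B₂ (i : ℕ) with h2 | h2 <;> rw [h1, h2] at h
    · exact iff_of_false (chi_not_mem f B₁ i h1) (chi_not_mem f B₂ i h2)
    · norm_num at h
    · norm_num at h
    · exact iff_of_true (chi_mem f B₁ i h1) (chi_mem f B₂ i h2)
  · -- k = 1 : B₁ = evens, B₂ = odds
    right; left
    have key : ∀ i : Fin f, (Even (i : ℕ) → (i ∈ B₁ ∧ i ∉ B₂)) ∧
        (¬ Even (i : ℕ) → (i ∉ B₁ ∧ i ∈ B₂)) := by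
      intro i
      have h := hdig (i : ℕ) i.isLt
      constructor
      · intro he
        rw [he.neg_one_pow] at h
        rcases chi_zero_or_one f B₁ (i : ℕ) with h1 | h1 <;>
          rcases chi_zero_or_one f B₂ (i : ℕ) with h2 | h2 <;> rw [h1, h2] at h
        · norm_num at h
        · norm_num at h
        · exact ⟨chi_mem f B₁ i h1, chi_not_mem f B₂ i h2⟩
        · norm_num at h
      · intro he
        rw [(Nat.not_even_iff_odd.mp he).neg_one_pow] at h
        rcases chi_zero_or_one f B₁ (i : ℕ) with h1 | h1 <;>
          rcases chi_zero_or_one f B₂ (i : ℕ) with h2 | h2 <;> rw [h1, h2] at h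
        · norm_num at h
        · exact ⟨chi_not_mem f B₁ i h1, chi_mem f B₂ i h2⟩
        · norm_num at h
        · norm_num at h
    constructor
    · ext i
      simp only [evens, Finset.mem_filter, Finset.mem_univ, true_and]
      constructor
      · intro hm
        by_contra he
        exact ((key i).2 he).1 hm
      · intro he
        exact ((key i).1 he).1
    · ext i
      simp only [odds, Finset.mem_filter, Finset.mem_univ, true_and]
      constructor
      · intro hm he
        exact ((key i).1 he).2 hm
      · intro he
        exact ((key i).2 he).2

/-- If `f` and `ℓ` are both odd, then the `2^f − 2` residue classes
`n'_B mod ℓ^f + 1`, as `B` runs over all subsets of `{0,…,f−1}` other than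
`{0,2,…,f−1}` and `{1,3,…,f−2}`, are pairwise distinct and nonzero. -/
theorem stmt5 (ℓ f : ℕ) (hℓ : ℓ.Prime) (hℓodd : Odd ℓ) (hf : 0 < f) (hfo : Odd f) :
    (∀ B : Finset (Fin f), B ≠ evens f → B ≠ odds f →
      ¬ Int.ModEq ((ℓ : ℤ) ^ f + 1) (nB' ℓ f B) 0) ∧
    (∀ B₁ B₂ : Finset (Fin f), B₁ ≠ evens f → B₁ ≠ odds f →
      B₂ ≠ evens f → B₂ ≠ odds f →
      Int.ModEq ((ℓ : ℤ) ^ f + 1) (nB' ℓ f B₁) (nB' ℓ f B₂) → B₁ = B₂) := by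
  have hℓ3 : 3 ≤ ℓ := by
    obtain ⟨k, hk⟩ := hℓodd
    have := hℓ.two_le
    omega
  constructor
  · intro B hBe hBo hmod
    have h0 : nB' ℓ f (odds f) = 0 := by
      rw [nB'_formula ℓ f hfo]; ring
    have hmod' : Int.ModEq ((ℓ : ℤ) ^ f + 1) (nB' ℓ f B) (nB' ℓ f (odds f)) := by
      rw [h0]; exact hmod
    rcases central ℓ f hℓ3 hf hfo B (odds f) hmod' with h | h | h
    · exact hBo h
    · exact hBe h.1
    · exact hBo h.1
  · intro B₁ B₂ h1e h1o h2e h2o hmod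
    rcases central ℓ f hℓ3 hf hfo B₁ B₂ hmod with h | h | h
    · exact h
    · exact absurd h.1 h1e
    · exact absurd h.1 h1o

end Stmt5
end

section
/- Suppose ℓ = 2 and f is odd. Then 3 divides n'_B for every subset B of {0,1,…,f−1}, and each of the (2^f − 2)/3 nonzero residue classes modulo 2^f + 1 that are divisible by 3 is of the form n'_B mod 2^f + 1 for exactly 3 subsets B of {0,1,…,f−1}. -/
namespace Stmt6

/-- `n_B = ∑_{i∈B} 2^{i+1} − ∑_{i∉B} 2^i`. -/
def nB (f : ℕ) (B : Finset (Fin f)) : ℤ :=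
  ∑ i ∈ B, (2 : ℤ) ^ ((i : ℕ) + 1) - ∑ i ∈ Bᶜ, (2 : ℤ) ^ (i : ℕ)

/-- `n'_B = n_B + 1`. -/
def nB' (f : ℕ) (B : Finset (Fin f)) : ℤ := nB f B + 1

/-- The binary encoding of a subset of `Fin f`. -/
def sig (f : ℕ) (B : Finset (Fin f)) : ℕ := ∑ i ∈ B, 2 ^ (i : ℕ)

lemma sig_inj (f : ℕ) : Function.Injective (sig f) := by
  intro B1 B2 h
  have h2 : (fun s : Finset ℕ ↦ ∑ i ∈ s, 2 ^ i) (B1.map Fin.valEmbedding)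
      = (fun s : Finset ℕ ↦ ∑ i ∈ s, 2 ^ i) (B2.map Fin.valEmbedding) := by
    simpa [Finset.sum_map, sig, Fin.valEmbedding] using h
  exact Finset.map_injective _ (Finset.geomSum_injective le_rfl h2)

lemma sum_range_two_pow (n : ℕ) : ∑ i ∈ Finset.range n, 2 ^ i = 2 ^ n - 1 := by
  induction n with
  | zero => simp
  | succ n ih =>
    rw [Finset.sum_range_succ, ih]
    have : 1 ≤ 2 ^ n := Nat.one_le_two_pow
    ring_nf
    omega

lemma sig_lt (f : ℕ) (B : Finset (Fin f)) : sig f B < 2 ^ f := by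
  have h1 : sig f B ≤ ∑ i : Fin f, 2 ^ (i : ℕ) :=
    Finset.sum_le_sum_of_subset (Finset.subset_univ B)
  have h2 : ∑ i : Fin f, 2 ^ (i : ℕ) = 2 ^ f - 1 := by
    rw [Fin.sum_univ_eq_sum_range (fun i => 2 ^ i) f, sum_range_two_pow]
  have : 1 ≤ 2 ^ f := Nat.one_le_two_pow
  omega

lemma sig_surj (f : ℕ) (t : ℕ) (ht : t < 2 ^ f) : ∃ B : Finset (Fin f), sig f B = t := by
  set s : Finset ℕ := t.bitIndices.toFinset with hs
  have hsum : ∑ i ∈ s, 2 ^ i = t := Finset.twoPowSum_toFinset_bitIndices t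
  have hmem : ∀ a ∈ s, a < f := by
    intro a ha
    have h1 : 2 ^ a ≤ ∑ i ∈ s, 2 ^ i :=
      Finset.single_le_sum (f := fun i => 2 ^ i) (fun i _ => Nat.zero_le _) ha
    have : (2 : ℕ) ^ a < 2 ^ f := by omega
    exact (Nat.pow_lt_pow_iff_right (by norm_num)).1 this
  refine ⟨s.attachFin hmem, ?_⟩
  have hmap : (s.attachFin hmem).map Fin.valEmbedding = s := by
    ext a
    simp only [Finset.mem_map, Fin.valEmbedding_apply]
    constructor
    · rintro ⟨b, hb, rfl⟩
      exact (Finset.mem_attachFin hmem).1 hb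
    · intro ha
      exact ⟨⟨a, hmem a ha⟩, (Finset.mem_attachFin hmem).2 ha, rfl⟩
  calc sig f (s.attachFin hmem) = ∑ i ∈ (s.attachFin hmem).map Fin.valEmbedding, 2 ^ i := by
        rw [Finset.sum_map]; rfl
    _ = t := by rw [hmap, hsum]

lemma key (f : ℕ) (B : Finset (Fin f)) :
    nB' f B = 3 * ((sig f B : ℤ) + 1) - ((2 : ℤ) ^ f + 1) := by
  have hcompl : ∑ i ∈ Bᶜ, (2 : ℤ) ^ (i : ℕ)
      = (∑ i : Fin f, (2 : ℤ) ^ (i : ℕ)) - ∑ i ∈ B, (2 : ℤ) ^ (i : ℕ) := by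
    have := Finset.sum_compl_add_sum B (fun i : Fin f => (2 : ℤ) ^ (i : ℕ))
    linarith
  have huniv : ∑ i : Fin f, (2 : ℤ) ^ (i : ℕ) = 2 ^ f - 1 := by
    rw [Fin.sum_univ_eq_sum_range (fun i => (2 : ℤ) ^ i) f]
    have := geom_sum_mul (2 : ℤ) f
    simpa using this
  have hdouble : ∑ i ∈ B, (2 : ℤ) ^ ((i : ℕ) + 1) = 2 * ∑ i ∈ B, (2 : ℤ) ^ (i : ℕ) := by
    rw [Finset.mul_sum]
    exact Finset.sum_congr rfl fun i _ => by ring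
  have hcast : (sig f B : ℤ) = ∑ i ∈ B, (2 : ℤ) ^ (i : ℕ) := by
    unfold sig; push_cast; rfl
  unfold nB' nB
  rw [hdouble, hcompl, huniv, hcast]
  ring

lemma three_dvd (f : ℕ) (hfo : Odd f) : (3 : ℤ) ∣ (2 : ℤ) ^ f + 1 := by
  have h : (2 : ℤ) ^ f ≡ (-1) ^ f [ZMOD 3] := (Int.ModEq.pow f (by decide))
  rw [hfo.neg_one_pow] at h
  have : ((2 : ℤ) ^ f + 1) ≡ 0 [ZMOD 3] := by
    calc (2 : ℤ) ^ f + 1 ≡ -1 + 1 [ZMOD 3] := h.add_right 1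
      _ = 0 := by ring
  exact (Int.modEq_zero_iff_dvd).1 this

/-- For `ℓ = 2` and `f` odd: `3` divides `n'_B` for every subset `B` of
`{0,…,f−1}`, and each of the `(2^f − 2)/3` nonzero residue classes modulo
`2^f + 1` that are divisible by `3` is of the form `n'_B mod 2^f + 1` for
exactly `3` subsets `B` of `{0,…,f−1}`. -/
theorem stmt6 (f : ℕ) (hf : 0 < f) (hfo : Odd f) :
    (∀ B : Finset (Fin f), (3 : ℤ) ∣ nB' f B) ∧
    (∀ m : ℤ, ¬ Int.ModEq ((2 : ℤ) ^ f + 1) m 0 → (3 : ℤ) ∣ m →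
      {B : Finset (Fin f) |
        Int.ModEq ((2 : ℤ) ^ f + 1) (nB' f B) m}.ncard = 3) := by
  obtain ⟨N', hN'⟩ := three_dvd f hfo
  have hNpos : (0 : ℤ) < 2 ^ f + 1 := by positivity
  have hN'pos : 0 < N' := by nlinarith
  constructor
  · intro B
    rw [key]
    exact ⟨(sig f B : ℤ) + 1 - N', by rw [hN']; ring⟩
  · intro m hm0 hm3
    obtain ⟨k, rfl⟩ := hm3
    set r := k % N' with hrdef
    have hr0 : 0 ≤ r := Int.emod_nonneg k (by omega)
    have hrlt : r < N' := Int.emod_lt_of_pos k hN'pos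
    have hkr : N' ∣ k - r := by
      rw [hrdef, Int.emod_def]
      exact ⟨k / N', by ring⟩
    have hrne : r ≠ 0 := by
      intro h0
      apply hm0
      have hdk : N' ∣ k := by
        have := hkr; rw [h0, sub_zero] at this; exact this
      obtain ⟨c, rfl⟩ := hdk
      exact (Int.modEq_zero_iff_dvd).2 ⟨c, by rw [hN']; ring⟩
    have hr1 : 1 ≤ r := by omega
    have h2f : ((2 : ℕ) ^ f : ℤ) = 3 * N' - 1 := by push_cast; omega
    -- the three target values
    have htj : ∀ j : ℕ, j ≤ 2 → ∃ t : ℕ, (t : ℤ) = r - 1 + j * N' ∧ t < 2 ^ f := by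
      intro j hj
      refine ⟨(r - 1 + j * N').toNat, Int.toNat_of_nonneg (by nlinarith), ?_⟩
      have hlt : r - 1 + (j : ℤ) * N' < ((2 : ℕ) ^ f : ℤ) := by
        rw [h2f]
        have : (j : ℤ) ≤ 2 := by exact_mod_cast hj
        nlinarith
      omega
    obtain ⟨t0, ht0, ht0lt⟩ := htj 0 (by norm_num)
    obtain ⟨t1, ht1, ht1lt⟩ := htj 1 (by norm_num)
    obtain ⟨t2, ht2, ht2lt⟩ := htj 2 (by norm_num)
    push_cast at ht0 ht1 ht2
    obtain ⟨B0, hB0⟩ := sig_surj f t0 ht0lt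
    obtain ⟨B1, hB1⟩ := sig_surj f t1 ht1lt
    obtain ⟨B2, hB2⟩ := sig_surj f t2 ht2lt
    -- condition equivalence
    have hcond : ∀ B : Finset (Fin f),
        Int.ModEq ((2 : ℤ) ^ f + 1) (nB' f B) (3 * k) ↔
        N' ∣ ((sig f B : ℤ) + 1 - r) := by
      intro B
      rw [key, Int.modEq_iff_dvd, hN']
      constructor
      · rintro ⟨c, hc⟩
        have h3 : (3 : ℤ) * (k - (sig f B : ℤ) - 1) = 3 * (N' * (c - 1)) := by linarith
        have h4 : (k : ℤ) - (sig f B : ℤ) - 1 = N' * (c - 1) := by linarith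
        obtain ⟨d, hd⟩ := hkr
        exact ⟨d - (c - 1), by linarith [mul_sub N' d (c-1)]⟩
      · rintro ⟨c, hc⟩
        obtain ⟨d, hd⟩ := hkr
        refine ⟨1 + d - c, ?_⟩
        have : (3:ℤ) * N' * (1 + d - c) = 3*N' + 3*(N'*d) - 3*(N'*c) := by ring
        rw [this, ← hd, ← hc]
        ring
    -- dvd condition iff sig is one of the three values
    have hsig : ∀ B : Finset (Fin f),
        N' ∣ ((sig f B : ℤ) + 1 - r) ↔ sig f B = t0 ∨ sig f B = t1 ∨ sig f B = t2 := by
      intro B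
      constructor
      · rintro ⟨c, hc⟩
        have hlt : ((sig f B : ℕ) : ℤ) < 3 * N' - 1 := by
          rw [← h2f]; exact_mod_cast sig_lt f B
        have hge : (0 : ℤ) ≤ (sig f B : ℤ) := by positivity
        have hcl : c < 3 := by nlinarith
        have hcg : 0 ≤ c := by nlinarith
        interval_cases c
        · left; omega
        · right; left; omega
        · right; right; omega
      · rintro (h | h | h)
        · exact ⟨0, by rw [h]; omega⟩
        · exact ⟨1, by rw [h]; omega⟩
        · exact ⟨2, by rw [h]; omega⟩
    have hset : {B : Finset (Fin f) |
        Int.ModEq ((2 : ℤ) ^ f + 1) (nB' f B) (3 * k)} = {B0, B1, B2} := by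
      ext B
      simp only [Set.mem_setOf_eq, Set.mem_insert_iff, Set.mem_singleton_iff]
      rw [hcond B, hsig B]
      constructor
      · rintro (h | h | h)
        · exact Or.inl (sig_inj f (by rw [h, hB0]))
        · exact Or.inr (Or.inl (sig_inj f (by rw [h, hB1])))
        · exact Or.inr (Or.inr (sig_inj f (by rw [h, hB2])))
      · rintro (rfl | rfl | rfl)
        · left; exact hB0
        · right; left; exact hB1
        · right; right; exact hB2
    rw [hset]
    refine Set.ncard_eq_three.2 ⟨B0, B1, B2, ?_, ?_, ?_, rfl⟩
    · intro h; rw [h] at hB0; rw [hB1] at hB0; omega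
    · intro h; rw [h] at hB0; rw [hB2] at hB0; omega
    · intro h; rw [h] at hB1; rw [hB2] at hB1; omega

end Stmt6
end

section
/- For every integer n: (i) for each subset B of {0,1,…,f−1} there is at most one pair (a,b) with (a,b,B) ∈ T(n); (ii) the cardinality N(n) of T(n) equals the number of subsets B of {0,1,…,f−1} such that n ≢ n'_B (mod ℓ^f + 1). -/
namespace Stmt7

/-- `n_B = ∑_{i∈B} ℓ^{i+1} − ∑_{i∉B} ℓ^i`. -/
def nB (ℓ f : ℕ) (B : Finset (Fin f)) : ℤ :=
  ∑ i ∈ B, (ℓ : ℤ) ^ ((i : ℕ) + 1) - ∑ i ∈ Bᶜ, (ℓ : ℤ) ^ (i : ℕ)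

/-- `n'_B = n_B + 1`. -/
def nB' (ℓ f : ℕ) (B : Finset (Fin f)) : ℤ := nB ℓ f B + 1

/-- The set `T(n)` of triples `(a,b,B)` with `a ∈ {0,…,ℓ^f−2}`,
`b ∈ {1,…,ℓ}^f`, `B ⊆ {0,…,f−1}` and
`n ≡ a(ℓ^f+1) + ∑_{i∈B} b_i ℓ^i + ∑_{i∉B} b_i ℓ^{f+i} (mod ℓ^{2f}−1)`. -/
def Tset (ℓ f : ℕ) (n : ℤ) : Set (ℤ × (Fin f → ℤ) × Finset (Fin f)) :=
  {x | (0 ≤ x.1 ∧ x.1 ≤ (ℓ : ℤ) ^ f - 2) ∧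
    (∀ i, 1 ≤ x.2.1 i ∧ x.2.1 i ≤ (ℓ : ℤ)) ∧
    Int.ModEq ((ℓ : ℤ) ^ (2 * f) - 1) n
      (x.1 * ((ℓ : ℤ) ^ f + 1) + ∑ i ∈ x.2.2, x.2.1 i * (ℓ : ℤ) ^ (i : ℕ) +
        ∑ i ∈ x.2.2ᶜ, x.2.1 i * (ℓ : ℤ) ^ (f + (i : ℕ)))}

private lemma shift_sum (L : ℤ) (m : ℕ) (g : ℕ → ℤ) :
    ∑ i ∈ Finset.range (m+1), g i * L ^ i
      = L * ∑ i ∈ Finset.range m, g (i+1) * L ^ i + g 0 := by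
  rw [Finset.sum_range_succ', Finset.mul_sum]
  simp only [pow_zero, mul_one]
  congr 1
  exact Finset.sum_congr rfl fun i _ => by ring

private lemma digits_bound (L : ℤ) (hL : 2 ≤ L) :
    ∀ (f : ℕ) (e : ℕ → ℤ), (∀ i, i < f → 0 ≤ e i ∧ e i ≤ L - 1) →
      0 ≤ ∑ i ∈ Finset.range f, e i * L ^ i ∧
      ∑ i ∈ Finset.range f, e i * L ^ i ≤ L ^ f - 1 := by
  intro f
  induction f with
  | zero => intro e _; simp
  | succ m ih =>
    intro e he
    have h1 := ih e (fun i hi => he i (by omega))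
    have hm := he m (by omega)
    have hp : (0:ℤ) < L ^ m := by positivity
    rw [Finset.sum_range_succ, pow_succ]
    constructor
    · nlinarith [hm.1, h1.1]
    · nlinarith [hm.2, h1.2]

private lemma digits_inj (L : ℤ) (hL : 2 ≤ L) :
    ∀ (f : ℕ) (e e' : ℕ → ℤ), (∀ i, i < f → 0 ≤ e i ∧ e i ≤ L - 1) →
      (∀ i, i < f → 0 ≤ e' i ∧ e' i ≤ L - 1) →
      ∑ i ∈ Finset.range f, e i * L ^ i = ∑ i ∈ Finset.range f, e' i * L ^ i →
      ∀ i, i < f → e i = e' i := by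
  intro f
  induction f with
  | zero => intro _ _ _ _ _ i hi; omega
  | succ m ih =>
    intro e e' he he' hsum
    rw [shift_sum, shift_sum] at hsum
    set T : ℤ := ∑ i ∈ Finset.range m, e (i+1) * L ^ i with hT
    set T' : ℤ := ∑ i ∈ Finset.range m, e' (i+1) * L ^ i with hT'
    have h0 := he 0 (by omega)
    have h0' := he' 0 (by omega)
    have hTT : T = T' := by
      rcases lt_trichotomy T T' with h | h | h
      · have h1 : T + 1 ≤ T' := by omega
        nlinarith
      · exact h
      · have h1 : T' + 1 ≤ T := by omega
        nlinarith
    have he0 : e 0 = e' 0 := by rw [hTT] at hsum; linarith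
    have hrec := ih (fun i => e (i+1)) (fun i => e' (i+1))
      (fun i hi => he (i+1) (by omega)) (fun i hi => he' (i+1) (by omega))
      (by rw [hTT] at hsum; linarith)
    intro i hi
    cases i with
    | zero => exact he0
    | succ j => exact hrec j (by omega)

private lemma digits_exists (L : ℤ) (hL : 2 ≤ L) :
    ∀ (f : ℕ) (v : ℤ), 0 ≤ v → v ≤ L ^ f - 1 →
      ∃ e : ℕ → ℤ, (∀ i, 0 ≤ e i ∧ e i ≤ L - 1) ∧
        ∑ i ∈ Finset.range f, e i * L ^ i = v := by
  intro f
  induction f with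
  | zero =>
    intro v h0 h1
    simp only [pow_zero] at h1
    exact ⟨fun _ => 0, fun i => ⟨le_refl 0, by show (0:ℤ) ≤ L - 1; omega⟩, by simp; omega⟩
  | succ m ih =>
    intro v h0 h1
    have hLpos : (0:ℤ) < L := by linarith
    have hq0 : 0 ≤ v / L := Int.ediv_nonneg h0 (le_of_lt hLpos)
    have hq1 : v / L ≤ L ^ m - 1 := by
      have : v / L < L ^ m := by
        rw [Int.ediv_lt_iff_lt_mul hLpos]
        calc v ≤ L ^ (m+1) - 1 := h1
          _ < L ^ m * L := by rw [pow_succ]; omega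
      omega
    obtain ⟨e', he', hsum⟩ := ih (v / L) hq0 hq1
    refine ⟨fun i => Nat.casesOn i (v % L) (fun j => e' j), fun i => ?_, ?_⟩
    · cases i with
      | zero =>
        exact ⟨Int.emod_nonneg v (by omega),
          by show v % L ≤ L - 1; have := Int.emod_lt_of_pos v hLpos; omega⟩
      | succ j => exact he' j
    · rw [shift_sum]
      show L * ∑ i ∈ Finset.range m, e' i * L ^ i + v % L = v
      rw [hsum]
      have := Int.mul_ediv_add_emod v L
      linarith

private def cB (ℓ f : ℕ) (B : Finset (Fin f)) : ℤ :=
  ∑ i ∈ B, (ℓ:ℤ) ^ (i:ℕ) - (ℓ:ℤ) * ∑ i ∈ Bᶜ, (ℓ:ℤ) ^ (i:ℕ)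

private def Vb (ℓ f : ℕ) (B : Finset (Fin f)) (b : Fin f → ℤ) : ℤ :=
  ∑ i ∈ B, (b i - 1) * (ℓ:ℤ) ^ (i:ℕ) + ∑ i ∈ Bᶜ, ((ℓ:ℤ) - b i) * (ℓ:ℤ) ^ (i:ℕ)

private def eB (ℓ f : ℕ) (B : Finset (Fin f)) (b : Fin f → ℤ) (j : ℕ) : ℤ :=
  if h : j < f then
    (if (⟨j, h⟩ : Fin f) ∈ B then b ⟨j, h⟩ - 1 else (ℓ:ℤ) - b ⟨j, h⟩) else 0

private lemma S_eq (ℓ f : ℕ) (B : Finset (Fin f)) (b : Fin f → ℤ) :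
    ∑ i ∈ B, b i * (ℓ:ℤ) ^ (i:ℕ) + ∑ i ∈ Bᶜ, b i * (ℓ:ℤ) ^ (f + (i:ℕ))
      = Vb ℓ f B b + cB ℓ f B
        + ((ℓ:ℤ) ^ f + 1) * ∑ i ∈ Bᶜ, b i * (ℓ:ℤ) ^ (i:ℕ) := by
  unfold Vb cB
  rw [Finset.mul_sum, Finset.mul_sum]
  have h1 : ∑ i ∈ B, b i * (ℓ:ℤ)^(i:ℕ)
      = ∑ i ∈ B, ((b i - 1) * (ℓ:ℤ)^(i:ℕ) + (ℓ:ℤ)^(i:ℕ)) :=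
    Finset.sum_congr rfl fun i _ => by ring
  have h2 : ∑ i ∈ Bᶜ, b i * (ℓ:ℤ)^(f+(i:ℕ))
      = ∑ i ∈ Bᶜ, (((ℓ:ℤ) - b i) * (ℓ:ℤ)^(i:ℕ) - (ℓ:ℤ) * (ℓ:ℤ)^(i:ℕ)
          + ((ℓ:ℤ)^f + 1) * (b i * (ℓ:ℤ)^(i:ℕ))) :=
    Finset.sum_congr rfl fun i _ => by rw [pow_add]; ring
  rw [h1, h2, Finset.sum_add_distrib, Finset.sum_add_distrib, Finset.sum_sub_distrib]
  ring

private lemma Vb_eq (ℓ f : ℕ) (B : Finset (Fin f)) (b : Fin f → ℤ) :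
    Vb ℓ f B b = ∑ j ∈ Finset.range f, eB ℓ f B b j * (ℓ:ℤ) ^ j := by
  rw [← Fin.sum_univ_eq_sum_range (fun j => eB ℓ f B b j * (ℓ:ℤ)^j) f]
  unfold Vb
  rw [← Finset.sum_add_sum_compl B (fun i : Fin f => eB ℓ f B b (i:ℕ) * (ℓ:ℤ)^(i:ℕ))]
  congr 1
  · exact Finset.sum_congr rfl fun i hi => by simp [eB, i.isLt, hi]
  · refine Finset.sum_congr rfl fun i hi => ?_
    have hni : i ∉ B := Finset.mem_compl.mp hi
    simp [eB, i.isLt, hni]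

private lemma eB_bounds (ℓ f : ℕ) (hL : 2 ≤ (ℓ:ℤ)) (B : Finset (Fin f)) (b : Fin f → ℤ)
    (hb : ∀ i, 1 ≤ b i ∧ b i ≤ (ℓ:ℤ)) :
    ∀ j, 0 ≤ eB ℓ f B b j ∧ eB ℓ f B b j ≤ (ℓ:ℤ) - 1 := by
  intro j
  unfold eB
  split
  · rename_i h
    have := hb ⟨j, h⟩
    split <;> omega
  · omega

private lemma Vb_bounds (ℓ f : ℕ) (hL : 2 ≤ (ℓ:ℤ)) (B : Finset (Fin f)) (b : Fin f → ℤ)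
    (hb : ∀ i, 1 ≤ b i ∧ b i ≤ (ℓ:ℤ)) :
    0 ≤ Vb ℓ f B b ∧ Vb ℓ f B b ≤ (ℓ:ℤ) ^ f - 1 := by
  rw [Vb_eq]
  exact digits_bound (ℓ:ℤ) hL f _ (fun i _ => eB_bounds ℓ f hL B b hb i)

private lemma nB'_eq (ℓ f : ℕ) (B : Finset (Fin f)) :
    nB' ℓ f B = cB ℓ f B - 1 + ((ℓ:ℤ) ^ f + 1) := by
  have hg : ((ℓ:ℤ) - 1) * ∑ i : Fin f, (ℓ:ℤ)^(i:ℕ) = (ℓ:ℤ)^f - 1 := by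
    rw [Fin.sum_univ_eq_sum_range (fun i => (ℓ:ℤ)^i) f, mul_comm]
    exact geom_sum_mul (ℓ:ℤ) f
  rw [← Finset.sum_add_sum_compl B (fun i : Fin f => (ℓ:ℤ)^(i:ℕ))] at hg
  unfold nB' nB cB
  have h1 : ∑ i ∈ B, (ℓ:ℤ)^((i:ℕ)+1) = (ℓ:ℤ) * ∑ i ∈ B, (ℓ:ℤ)^(i:ℕ) := by
    rw [Finset.mul_sum]; exact Finset.sum_congr rfl fun i _ => by ring
  rw [h1]
  linear_combination hg

private lemma mem_modP (ℓ f : ℕ) (n : ℤ) (a : ℤ) (b : Fin f → ℤ) (B : Finset (Fin f))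
    (h : (a, b, B) ∈ Tset ℓ f n) :
    Int.ModEq ((ℓ:ℤ) ^ f + 1) n (Vb ℓ f B b + cB ℓ f B) := by
  obtain ⟨-, -, hmod⟩ := h
  dsimp only at hmod
  have hdvd : ((ℓ:ℤ)^f + 1) ∣ ((ℓ:ℤ)^(2*f) - 1) :=
    ⟨(ℓ:ℤ)^f - 1, by rw [two_mul, pow_add]; ring⟩
  have h1 := hmod.of_dvd hdvd
  refine h1.trans ?_
  rw [Int.modEq_iff_dvd]
  exact ⟨-a - ∑ i ∈ Bᶜ, b i * (ℓ:ℤ)^(i:ℕ), by linear_combination - S_eq ℓ f B b⟩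

private lemma uniq (ℓ f : ℕ) (hL : 2 ≤ (ℓ:ℤ)) (n : ℤ) (B : Finset (Fin f))
    (a₁ a₂ : ℤ) (b₁ b₂ : Fin f → ℤ)
    (h1 : (a₁, b₁, B) ∈ Tset ℓ f n) (h2 : (a₂, b₂, B) ∈ Tset ℓ f n) :
    a₁ = a₂ ∧ b₁ = b₂ := by
  have hm1 := mem_modP ℓ f n a₁ b₁ B h1
  have hm2 := mem_modP ℓ f n a₂ b₂ B h2
  obtain ⟨ha1, hb1, hmod1⟩ := h1
  obtain ⟨ha2, hb2, hmod2⟩ := h2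
  dsimp only at ha1 hb1 hmod1 ha2 hb2 hmod2
  have hLfpos : (0:ℤ) < (ℓ:ℤ) ^ f := by positivity
  have hV1 := Vb_bounds ℓ f hL B b₁ hb1
  have hV2 := Vb_bounds ℓ f hL B b₂ hb2
  have hdv : ((ℓ:ℤ) ^ f + 1) ∣ (Vb ℓ f B b₂ - Vb ℓ f B b₁) := by
    obtain ⟨k, hk⟩ := (hm1.symm.trans hm2).dvd
    exact ⟨k, by linarith⟩
  have hVeq : Vb ℓ f B b₁ = Vb ℓ f B b₂ := by
    have h0 := Int.eq_zero_of_abs_lt_dvd hdv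
      (by rw [abs_lt]; constructor <;> linarith [hV1.1, hV1.2, hV2.1, hV2.2])
    linarith
  have hdig := digits_inj (ℓ:ℤ) hL f (eB ℓ f B b₁) (eB ℓ f B b₂)
    (fun i _ => eB_bounds ℓ f hL B b₁ hb1 i)
    (fun i _ => eB_bounds ℓ f hL B b₂ hb2 i)
    (by rw [← Vb_eq, ← Vb_eq, hVeq])
  have hbeq : b₁ = b₂ := by
    funext i
    have hthis := hdig (i:ℕ) i.isLt
    unfold eB at hthis
    rw [dif_pos i.isLt, dif_pos i.isLt] at hthis
    simp only [Fin.eta] at hthis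
    split_ifs at hthis <;> omega
  subst hbeq
  obtain ⟨k, hk⟩ := (hmod1.symm.trans hmod2).dvd
  rw [two_mul, pow_add] at hk
  have hPne : ((ℓ:ℤ) ^ f + 1) ≠ 0 := by positivity
  have haa : a₂ - a₁ = ((ℓ:ℤ) ^ f - 1) * k := by
    apply mul_right_cancel₀ hPne
    linear_combination hk
  have h0 : a₂ - a₁ = 0 := by
    refine Int.eq_zero_of_abs_lt_dvd ⟨k, haa⟩ ?_
    rw [abs_lt]; constructor <;> linarith
  exact ⟨by linarith, rfl⟩

private lemma not_modP (ℓ f : ℕ) (hL : 2 ≤ (ℓ:ℤ)) (n : ℤ) (a : ℤ) (b : Fin f → ℤ)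
    (B : Finset (Fin f)) (h : (a, b, B) ∈ Tset ℓ f n) :
    ¬ Int.ModEq ((ℓ:ℤ) ^ f + 1) n (nB' ℓ f B) := by
  intro hc
  have h1 := mem_modP ℓ f n a b B h
  obtain ⟨-, hb, -⟩ := h
  dsimp only at hb
  have hLfpos : (0:ℤ) < (ℓ:ℤ) ^ f := by positivity
  have h2 : Int.ModEq ((ℓ:ℤ) ^ f + 1) (nB' ℓ f B) (cB ℓ f B - 1) := by
    rw [Int.modEq_iff_dvd]
    exact ⟨-1, by linear_combination - nB'_eq ℓ f B⟩
  have h3 := (h1.symm.trans (hc.trans h2))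
  have hVb := Vb_bounds ℓ f hL B b hb
  have hdv : ((ℓ:ℤ) ^ f + 1) ∣ (Vb ℓ f B b + 1) := by
    obtain ⟨k, hk⟩ := h3.dvd
    exact ⟨-k, by linarith⟩
  have := Int.le_of_dvd (by linarith [hVb.1]) hdv
  linarith [hVb.2]

private lemma exists_mem (ℓ f : ℕ) (hL : 2 ≤ (ℓ:ℤ)) (hf : 0 < f) (n : ℤ)
    (B : Finset (Fin f))
    (hn : ¬ Int.ModEq ((ℓ:ℤ) ^ f + 1) n (nB' ℓ f B)) :
    ∃ a b, (a, b, B) ∈ Tset ℓ f n := by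
  have hP0 : (0:ℤ) < (ℓ:ℤ) ^ f + 1 := by positivity
  have hLf : (2:ℤ) ≤ (ℓ:ℤ) ^ f := le_trans hL (le_self_pow₀ (by linarith) hf.ne')
  set v0 : ℤ := (n - cB ℓ f B) % ((ℓ:ℤ) ^ f + 1) with hv0def
  have hv00 : 0 ≤ v0 := Int.emod_nonneg _ (by linarith)
  have hv01 : v0 < (ℓ:ℤ) ^ f + 1 := Int.emod_lt_of_pos _ hP0
  have hcong : Int.ModEq ((ℓ:ℤ) ^ f + 1) v0 (n - cB ℓ f B) :=
    Int.emod_emod_of_dvd _ dvd_rfl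
  obtain ⟨k, hk⟩ := hcong.dvd
  have hv0top : v0 ≠ (ℓ:ℤ) ^ f := by
    intro hveq
    apply hn
    rw [Int.modEq_iff_dvd]
    refine ⟨-k, ?_⟩
    rw [nB'_eq]
    rw [hveq] at hk
    linear_combination - hk
  have hv0le : v0 ≤ (ℓ:ℤ) ^ f - 1 := by omega
  obtain ⟨e, he, hesum⟩ := digits_exists (ℓ:ℤ) hL f v0 hv00 hv0le
  set b : Fin f → ℤ := fun i => if i ∈ B then e (i:ℕ) + 1 else (ℓ:ℤ) - e (i:ℕ)
    with hbdef
  have hb : ∀ i, 1 ≤ b i ∧ b i ≤ (ℓ:ℤ) := by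
    intro i
    rw [hbdef]
    dsimp only
    have := he (i:ℕ)
    split <;> omega
  have hVbv : Vb ℓ f B b = v0 := by
    rw [Vb_eq, ← hesum]
    refine Finset.sum_congr rfl fun j hj => ?_
    have hjf : j < f := Finset.mem_range.mp hj
    unfold eB
    rw [dif_pos hjf]
    rw [hbdef]
    dsimp only
    by_cases hmB : (⟨j, hjf⟩ : Fin f) ∈ B
    · rw [if_pos hmB, if_pos hmB]; ring
    · rw [if_neg hmB, if_neg hmB]; ring
  have hS := S_eq ℓ f B b
  rw [hVbv] at hS
  have hPd : ((ℓ:ℤ) ^ f + 1) ∣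
      (n - (∑ i ∈ B, b i * (ℓ:ℤ) ^ (i:ℕ) + ∑ i ∈ Bᶜ, b i * (ℓ:ℤ) ^ (f + (i:ℕ)))) := by
    refine ⟨k - ∑ i ∈ Bᶜ, b i * (ℓ:ℤ) ^ (i:ℕ), ?_⟩
    linear_combination hk - hS
  obtain ⟨q, hq⟩ := hPd
  have hQpos : (0:ℤ) < (ℓ:ℤ) ^ f - 1 := by linarith
  have hqq := Int.mul_ediv_add_emod q ((ℓ:ℤ) ^ f - 1)
  refine ⟨q % ((ℓ:ℤ) ^ f - 1), b, ⟨?_, ?_⟩, hb, ?_⟩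
  · exact Int.emod_nonneg _ (by linarith)
  · have := Int.emod_lt_of_pos q hQpos
    dsimp only
    omega
  · dsimp only
    rw [Int.modEq_iff_dvd, two_mul, pow_add]
    refine ⟨-(q / ((ℓ:ℤ) ^ f - 1)), ?_⟩
    linear_combination - hq + ((ℓ:ℤ) ^ f + 1) * hqq

/-- (i) For each subset `B` there is at most one pair `(a,b)` with
`(a,b,B) ∈ T(n)`; (ii) `#T(n)` equals the number of `B` with
`n ≢ n'_B (mod ℓ^f + 1)`. -/
theorem stmt7 (ℓ f : ℕ) (hℓ : ℓ.Prime) (hf : 0 < f) (n : ℤ) :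
    (∀ (B : Finset (Fin f)) (a₁ a₂ : ℤ) (b₁ b₂ : Fin f → ℤ),
      (a₁, b₁, B) ∈ Tset ℓ f n → (a₂, b₂, B) ∈ Tset ℓ f n → a₁ = a₂ ∧ b₁ = b₂) ∧
    (Tset ℓ f n).ncard =
      {B : Finset (Fin f) |
        ¬ Int.ModEq ((ℓ : ℤ) ^ f + 1) n (nB' ℓ f B)}.ncard := by
  have hL : (2:ℤ) ≤ (ℓ:ℤ) := by exact_mod_cast hℓ.two_le
  constructor
  · intro B a₁ a₂ b₁ b₂ h1 h2
    exact uniq ℓ f hL n B a₁ a₂ b₁ b₂ h1 h2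
  · have hinj : Set.InjOn (fun x : ℤ × (Fin f → ℤ) × Finset (Fin f) => x.2.2)
        (Tset ℓ f n) := by
      rintro ⟨a₁, b₁, B₁⟩ hx ⟨a₂, b₂, B₂⟩ hy hxy
      dsimp only at hxy
      subst hxy
      obtain ⟨ha, hb⟩ := uniq ℓ f hL n B₁ a₁ a₂ b₁ b₂ hx hy
      rw [ha, hb]
    have himg : (fun x : ℤ × (Fin f → ℤ) × Finset (Fin f) => x.2.2) '' Tset ℓ f n
        = {B : Finset (Fin f) | ¬ Int.ModEq ((ℓ:ℤ) ^ f + 1) n (nB' ℓ f B)} := by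
      ext B
      constructor
      · rintro ⟨⟨a, b, B'⟩, hmem, rfl⟩
        exact not_modP ℓ f hL n a b B' hmem
      · intro hB
        obtain ⟨a, b, hmem⟩ := exists_mem ℓ f hL hf n B hB
        exact ⟨(a, b, B), hmem, rfl⟩
    rw [← himg, Set.ncard_image_of_injOn hinj]

end Stmt7
end

section
/- Suppose ℓ is an odd prime. If f is even, then the residue classes −1 + (ℓ+1)·s(B*) mod ℓ^f + 1 are pairwise distinct and nonzero as B* runs through all subsets of {0,1,…,f−1}. If f is odd, then the residue classes (ℓ+1)·s(B*) mod ℓ^f + 1 are pairwise distinct and nonzero as B* runs through all nonempty proper subsets of {0,1,…,f−1}. Letting A denote the set of such residue classes in each case, for every integer n not divisible by ℓ^f + 1 one has N(n) = 2^f − 1 if the class of n mod ℓ^f + 1 lies in A, and N(n) = 2^f otherwise. -/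
namespace Stmt8

/-- `s(B*) = ∑_{i∈B*} (−1)^i ℓ^i`. -/
def sAlt (ℓ f : ℕ) (B : Finset (Fin f)) : ℤ :=
  ∑ i ∈ B, (-1 : ℤ) ^ (i : ℕ) * (ℓ : ℤ) ^ (i : ℕ)

/-- The set `T(n)` of triples `(a,b,B)` with `a ∈ {0,…,ℓ^f−2}`,
`b ∈ {1,…,ℓ}^f`, `B ⊆ {0,…,f−1}` and
`n ≡ a(ℓ^f+1) + ∑_{i∈B} b_i ℓ^i + ∑_{i∉B} b_i ℓ^{f+i} (mod ℓ^{2f}−1)`. -/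
def Tset (ℓ f : ℕ) (n : ℤ) : Set (ℤ × (Fin f → ℤ) × Finset (Fin f)) :=
  {x | (0 ≤ x.1 ∧ x.1 ≤ (ℓ : ℤ) ^ f - 2) ∧
    (∀ i, 1 ≤ x.2.1 i ∧ x.2.1 i ≤ (ℓ : ℤ)) ∧
    Int.ModEq ((ℓ : ℤ) ^ (2 * f) - 1) n
      (x.1 * ((ℓ : ℤ) ^ f + 1) + ∑ i ∈ x.2.2, x.2.1 i * (ℓ : ℤ) ^ (i : ℕ) +
        ∑ i ∈ x.2.2ᶜ, x.2.1 i * (ℓ : ℤ) ^ (f + (i : ℕ)))}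

/-- The class of `n mod ℓ^f + 1` lies in the set `A` of the statement:
if `f` is even, `A` consists of the classes `−1 + (ℓ+1)s(B*)` for all subsets
`B*`; if `f` is odd, of the classes `(ℓ+1)s(B*)` for nonempty proper `B*`. -/
def inA (ℓ f : ℕ) (n : ℤ) : Prop :=
  (Even f ∧ ∃ B : Finset (Fin f),
      Int.ModEq ((ℓ : ℤ) ^ f + 1) n (-1 + ((ℓ : ℤ) + 1) * sAlt ℓ f B)) ∨
  (Odd f ∧ ∃ B : Finset (Fin f), B.Nonempty ∧ B ≠ Finset.univ ∧
      Int.ModEq ((ℓ : ℤ) ^ f + 1) n (((ℓ : ℤ) + 1) * sAlt ℓ f B))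

section Auxiliary
open Finset

/-- base-Q representation with bounded digits sums to zero only if all digits are zero -/
lemma digits_zero (Q : ℤ) : ∀ (f : ℕ) (d : Fin f → ℤ), (∀ i, |d i| < Q) →
    (∑ i, d i * Q ^ (i : ℕ)) = 0 → ∀ i, d i = 0 := by
  intro f
  induction f with
  | zero => intro d _ _ i; exact absurd i.2 (by omega)
  | succ f ih =>
    intro d hd hsum i
    have hQ0 : 0 < Q := lt_of_le_of_lt (abs_nonneg _) (hd 0)
    have hs : (∑ i, d i * Q ^ (i : ℕ)) =
        d 0 + Q * ∑ j : Fin f, d j.succ * Q ^ (j : ℕ) := by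
      rw [Fin.sum_univ_succ]
      simp only [Fin.val_succ, Fin.val_zero, pow_zero, mul_one]
      rw [Finset.mul_sum]
      congr 1
      refine Finset.sum_congr rfl (fun j _ => ?_)
      ring
    rw [hs] at hsum
    have hdvd : Q ∣ d 0 := ⟨-(∑ j : Fin f, d j.succ * Q ^ (j : ℕ)), by linarith⟩
    have hd0 : d 0 = 0 := Int.eq_zero_of_abs_lt_dvd hdvd (hd 0)
    have hrest : (∑ j : Fin f, d j.succ * Q ^ (j : ℕ)) = 0 := by
      have := hsum
      rw [hd0, zero_add] at this
      exact (mul_eq_zero.mp this).resolve_left (by omega)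
    have htail := ih (fun j => d j.succ) (fun j => hd j.succ) hrest
    refine Fin.cases hd0 (fun j => htail j) i

lemma digits_exists (Q : ℤ) (hQ : 0 < Q) : ∀ (f : ℕ) (m : ℤ), 0 ≤ m → m < Q ^ f →
    ∃ δ : Fin f → ℤ, (∀ i, 0 ≤ δ i ∧ δ i ≤ Q - 1) ∧ (∑ i, δ i * Q ^ (i : ℕ)) = m := by
  intro f
  induction f with
  | zero =>
    intro m h0 h1
    refine ⟨fun i => 0, fun i => absurd i.2 (by omega), ?_⟩
    simp at h1 ⊢
    omega
  | succ f ih =>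
    intro m h0 h1
    have hdm : 0 ≤ m / Q := Int.ediv_nonneg h0 hQ.le
    have hdm2 : m / Q < Q ^ f := by
      rw [Int.ediv_lt_iff_lt_mul hQ]
      calc m < Q ^ (f+1) := h1
        _ = Q ^ f * Q := by ring
    obtain ⟨δ', hδ'b, hδ's⟩ := ih (m / Q) hdm hdm2
    refine ⟨Fin.cons (m % Q) δ', ?_, ?_⟩
    · intro i
      refine Fin.cases ?_ (fun j => ?_) i
      · simp only [Fin.cons_zero]
        constructor
        · exact Int.emod_nonneg m hQ.ne'
        · have := Int.emod_lt_of_pos m hQ; omega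
      · simp only [Fin.cons_succ]; exact hδ'b j
    · rw [Fin.sum_univ_succ]
      simp only [Fin.cons_zero, Fin.cons_succ, Fin.val_succ, Fin.val_zero, pow_zero, mul_one]
      have : (∑ j : Fin f, δ' j * Q ^ ((j:ℕ) + 1)) = Q * ∑ j : Fin f, δ' j * Q ^ (j:ℕ) := by
        rw [Finset.mul_sum]; exact Finset.sum_congr rfl (fun j _ => by ring)
      rw [this, hδ's]
      exact Int.emod_add_mul_ediv m Q

lemma abs_sum_le (f : ℕ) (Q : ℤ) (hQ : 0 ≤ Q) (e : Fin f → ℤ) (c : ℤ)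
    (he : ∀ i, |e i| ≤ c) :
    |∑ i, e i * Q ^ (i : ℕ)| ≤ c * ∑ i ∈ range f, Q ^ i := by
  calc |∑ i, e i * Q ^ (i : ℕ)| ≤ ∑ i, |e i * Q ^ (i : ℕ)| := Finset.abs_sum_le_sum_abs _ _
    _ ≤ ∑ i : Fin f, c * Q ^ (i : ℕ) := by
        refine Finset.sum_le_sum (fun i _ => ?_)
        rw [abs_mul, abs_pow, abs_of_nonneg hQ]
        exact mul_le_mul_of_nonneg_right (he i) (pow_nonneg hQ _)
    _ = c * ∑ i ∈ range f, Q ^ i := by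
        rw [Finset.mul_sum, ← Fin.sum_univ_eq_sum_range (fun i => c * Q ^ i) f]


def eB {f : ℕ} (B : Finset (Fin f)) : Fin f → ℤ :=
  fun i => (-1 : ℤ) ^ (i : ℕ) * (if i ∈ B then 1 else 0)

lemma eB_abs {f : ℕ} (B : Finset (Fin f)) (i : Fin f) : |eB B i| ≤ 1 := by
  unfold eB
  rw [abs_mul, abs_pow, abs_neg, abs_one, one_pow, one_mul]
  split <;> simp

lemma sAlt_eq (ℓ f : ℕ) (B : Finset (Fin f)) :
    sAlt ℓ f B = ∑ i, eB B i * (ℓ : ℤ) ^ (i : ℕ) := by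
  unfold sAlt eB
  rw [← Finset.sum_filter_add_sum_filter_not univ (· ∈ B)]
  have h1 : univ.filter (· ∈ B) = B := by ext i; simp
  rw [h1]
  have h2 : ∀ i ∈ univ.filter (· ∉ B), ((-1:ℤ) ^ (i:ℕ) * (if i ∈ B then 1 else 0)) * (ℓ:ℤ) ^ (i:ℕ) = 0 := by
    intro i hi
    simp only [mem_filter] at hi
    rw [if_neg hi.2]; ring
  rw [Finset.sum_congr rfl h2, Finset.sum_const_zero, add_zero]
  refine Finset.sum_congr rfl (fun i hi => ?_)
  rw [if_pos hi]; ring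

lemma sAlt_univ (ℓ f : ℕ) :
    (((ℓ:ℤ) + 1)) * sAlt ℓ f univ = 1 - (-(ℓ:ℤ)) ^ f := by
  have h : sAlt ℓ f univ = ∑ i ∈ range f, (-(ℓ:ℤ)) ^ i := by
    unfold sAlt
    rw [← Fin.sum_univ_eq_sum_range (fun i => (-(ℓ:ℤ)) ^ i) f]
    refine Finset.sum_congr rfl (fun i _ => ?_)
    rw [show (-(ℓ:ℤ)) = (-1) * ℓ by ring, mul_pow]
  rw [h]
  have := geom_sum_mul (-(ℓ:ℤ)) f
  linarith [this]

/-- `(Q+1) * ∑_{even i < f} Q^i = ∑_{i<f} Q^i + [Odd f] Q^f` -/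
lemma even_geom (Q : ℤ) : ∀ f : ℕ,
    (Q + 1) * (∑ i ∈ range f, if Even i then Q ^ i else 0) =
      (∑ i ∈ range f, Q ^ i) + (if Odd f then Q ^ f else 0) := by
  intro f
  induction f with
  | zero => simp
  | succ f ih =>
    rw [Finset.sum_range_succ, Finset.sum_range_succ, mul_add, ih]
    rcases Nat.even_or_odd f with hf | hf
    · have h1 : ¬ Odd f := by simp [Nat.even_iff, Nat.odd_iff] at hf ⊢; omega
      have h2 : Odd (f+1) := by simp [Nat.even_iff, Nat.odd_iff] at hf ⊢; omega
      rw [if_pos hf, if_neg h1, if_pos h2]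
      ring
    · have h1 : ¬ Even f := by simp [Nat.even_iff, Nat.odd_iff] at hf ⊢; omega
      have h2 : ¬ Odd (f+1) := by simp [Nat.even_iff, Nat.odd_iff] at hf ⊢; omega
      rw [if_neg h1, if_pos hf, if_neg h2]
      ring

def star (f : ℕ) (C : Finset (Fin f)) : Finset (Fin f) :=
  univ.filter (fun i => ((i:ℕ) % 2 = 0 ∧ i ∉ C) ∨ ((i:ℕ) % 2 = 1 ∧ i ∈ C))

lemma mem_star {f : ℕ} (C : Finset (Fin f)) (i : Fin f) :
    i ∈ star f C ↔ (((i:ℕ) % 2 = 0 ∧ i ∉ C) ∨ ((i:ℕ) % 2 = 1 ∧ i ∈ C)) := by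
  simp [star]

lemma star_star {f : ℕ} (C : Finset (Fin f)) : star f (star f C) = C := by
  ext i
  rcases Nat.even_or_odd (i:ℕ) with h | h
  · rw [Nat.even_iff] at h
    simp [mem_star, h]
  · rw [Nat.odd_iff] at h
    have h0 : ¬ ((i:ℕ) % 2 = 0) := by omega
    simp [mem_star, h, h0]

lemma sAlt_star (ℓ f : ℕ) (C : Finset (Fin f)) :
    sAlt ℓ f (star f C) =
      (∑ i ∈ range f, if Even i then (ℓ:ℤ) ^ i else 0) - ∑ i ∈ C, (ℓ:ℤ) ^ (i:ℕ) := by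
  rw [sAlt_eq]
  have h1 : (∑ i ∈ range f, if Even i then (ℓ:ℤ) ^ i else 0) =
      ∑ i : Fin f, (if Even (i:ℕ) then (ℓ:ℤ) ^ (i:ℕ) else 0) :=
    (Fin.sum_univ_eq_sum_range (fun i => if Even i then (ℓ:ℤ) ^ i else 0) f).symm
  have h2 : (∑ i ∈ C, (ℓ:ℤ) ^ (i:ℕ)) = ∑ i : Fin f, (if i ∈ C then (ℓ:ℤ) ^ (i:ℕ) else 0) := by
    rw [Finset.sum_ite_mem, univ_inter]
  rw [h1, h2, ← Finset.sum_sub_distrib]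
  refine Finset.sum_congr rfl (fun i _ => ?_)
  unfold eB
  rcases Nat.even_or_odd (i:ℕ) with h | h
  · have hm : (-1:ℤ) ^ (i:ℕ) = 1 := h.neg_one_pow
    have h0 : (i:ℕ) % 2 = 0 := Nat.even_iff.mp h
    by_cases hC : i ∈ C
    · rw [if_pos h, if_pos hC, if_neg (by simp [mem_star, h0, hC])]
      ring
    · rw [if_pos h, if_neg hC, if_pos (by simp [mem_star, h0, hC]), hm]
      ring
  · have hm : (-1:ℤ) ^ (i:ℕ) = -1 := h.neg_one_pow
    have h0 : (i:ℕ) % 2 = 1 := Nat.odd_iff.mp h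
    have hne : ¬ Even (i:ℕ) := by simp [Nat.even_iff, h0]
    by_cases hC : i ∈ C
    · rw [if_neg hne, if_pos hC, if_pos (by simp [mem_star, h0, hC]), hm]
      ring
    · rw [if_neg hne, if_neg hC, if_neg (by simp [mem_star, h0, hC])]
      ring


section
variable (ℓ f : ℕ)

/-- the transformation identity for S -/
lemma S_transform (Q : ℤ) (b : Fin f → ℤ) (B : Finset (Fin f)) :
    (∑ i ∈ B, b i * Q ^ (i : ℕ) + ∑ i ∈ Bᶜ, b i * Q ^ (f + (i : ℕ)))
      = (∑ i, (if i ∈ B then b i else Q + 1 - b i) * Q ^ (i : ℕ))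
        - (Q + 1) * (∑ i ∈ Bᶜ, Q ^ (i : ℕ))
        + (Q ^ f + 1) * (∑ i ∈ Bᶜ, b i * Q ^ (i : ℕ)) := by
  have hsplit : (∑ i, (if i ∈ B then b i else Q + 1 - b i) * Q ^ (i : ℕ))
      = ∑ i ∈ B, b i * Q ^ (i:ℕ) + ∑ i ∈ Bᶜ, (Q + 1 - b i) * Q ^ (i:ℕ) := by
    rw [← Finset.sum_add_sum_compl B (fun i => (if i ∈ B then b i else Q + 1 - b i) * Q ^ (i : ℕ))]
    congr 1
    · exact Finset.sum_congr rfl (fun i hi => by rw [if_pos hi])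
    · refine Finset.sum_congr rfl (fun i hi => ?_)
      rw [if_neg (Finset.mem_compl.mp hi)]
  have hterm : (∑ i ∈ Bᶜ, b i * Q ^ (f + (i:ℕ)))
      = ∑ i ∈ Bᶜ, ((Q + 1 - b i) * Q ^ (i:ℕ) - (Q + 1) * Q ^ (i:ℕ) + (Q ^ f + 1) * (b i * Q ^ (i:ℕ))) := by
    refine Finset.sum_congr rfl (fun i _ => ?_)
    rw [pow_add]
    ring
  rw [hsplit, Finset.mul_sum, Finset.mul_sum, hterm, Finset.sum_add_distrib, Finset.sum_sub_distrib]
  ring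
end

section perB

variable (ℓ f : ℕ) (n : ℤ)

def missB (ℓ f : ℕ) (B : Finset (Fin f)) : ℤ :=
  (∑ i ∈ range f, (ℓ:ℤ) ^ i) - 1 - ((ℓ:ℤ) + 1) * ∑ i ∈ Bᶜ, (ℓ:ℤ) ^ (i:ℕ)

lemma mem_key (hQ3 : 3 ≤ (ℓ:ℤ)) {a : ℤ} {b : Fin f → ℤ} {B : Finset (Fin f)}
    (hx : (a, b, B) ∈ Tset ℓ f n) :
    ((ℓ:ℤ) ^ f + 1) ∣ (∑ i, (if i ∈ B then b i else (ℓ:ℤ) + 1 - b i) * (ℓ:ℤ) ^ (i:ℕ))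
      - (n + ((ℓ:ℤ) + 1) * ∑ i ∈ Bᶜ, (ℓ:ℤ) ^ (i:ℕ)) := by
  obtain ⟨ha, hb, hmod⟩ := hx
  set Q := (ℓ:ℤ) with hQdef
  have hNN : Q ^ (2*f) - 1 = (Q ^ f + 1) * (Q ^ f - 1) := by rw [two_mul, pow_add]; ring
  have hdvd1 : (Q ^ (2*f) - 1) ∣
      (a * (Q ^ f + 1) + ∑ i ∈ B, b i * Q ^ (i:ℕ) + ∑ i ∈ Bᶜ, b i * Q ^ (f + (i:ℕ))) - n :=
    Int.ModEq.dvd hmod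
  have hMdvd : (Q ^ f + 1) ∣ (Q ^ (2*f) - 1) := ⟨Q ^ f - 1, hNN⟩
  have h2 := hMdvd.trans hdvd1
  have h4 : (∑ i, (if i ∈ B then b i else Q + 1 - b i) * Q ^ (i:ℕ))
      - (n + (Q + 1) * ∑ i ∈ Bᶜ, Q ^ (i:ℕ))
      = ((a * (Q ^ f + 1) + ∑ i ∈ B, b i * Q ^ (i:ℕ) + ∑ i ∈ Bᶜ, b i * Q ^ (f + (i:ℕ))) - n)
        - (Q ^ f + 1) * (a + ∑ i ∈ Bᶜ, b i * Q ^ (i:ℕ)) := by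
    have hS := S_transform f Q b B
    linarith [hS]
  rw [h4]
  exact dvd_sub h2 ⟨a + ∑ i ∈ Bᶜ, b i * Q ^ (i:ℕ), by ring⟩

lemma beta_bounds (hQ3 : 3 ≤ (ℓ:ℤ)) {b : Fin f → ℤ} (B : Finset (Fin f))
    (hb : ∀ i, 1 ≤ b i ∧ b i ≤ (ℓ:ℤ)) (i : Fin f) :
    1 ≤ (if i ∈ B then b i else (ℓ:ℤ) + 1 - b i) ∧
      (if i ∈ B then b i else (ℓ:ℤ) + 1 - b i) ≤ (ℓ:ℤ) := by
  have := hb i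
  split <;> omega

lemma sum_beta_bounds (hQ3 : 3 ≤ (ℓ:ℤ)) {β : Fin f → ℤ}
    (hβ : ∀ i, 1 ≤ β i ∧ β i ≤ (ℓ:ℤ)) :
    (∑ i ∈ range f, (ℓ:ℤ) ^ i) ≤ (∑ i, β i * (ℓ:ℤ) ^ (i:ℕ)) ∧
      (∑ i, β i * (ℓ:ℤ) ^ (i:ℕ)) ≤ (∑ i ∈ range f, (ℓ:ℤ) ^ i) + ((ℓ:ℤ) ^ f - 1) := by
  set Q := (ℓ:ℤ) with hQdef
  have hQ0 : (0:ℤ) ≤ Q := by linarith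
  have hL : (∑ i ∈ range f, Q ^ i) * (Q - 1) = Q ^ f - 1 := geom_sum_mul Q f
  have hLfin : (∑ i ∈ range f, Q ^ i) = ∑ i : Fin f, Q ^ (i:ℕ) :=
    (Fin.sum_univ_eq_sum_range (fun i => Q ^ i) f).symm
  constructor
  · rw [hLfin]
    refine Finset.sum_le_sum (fun i _ => ?_)
    have h1 := (hβ i).1
    have h2 : (0:ℤ) ≤ Q ^ (i:ℕ) := pow_nonneg hQ0 _
    nlinarith
  · have hup : (∑ i, β i * Q ^ (i:ℕ)) ≤ ∑ i : Fin f, Q * Q ^ (i:ℕ) := by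
      refine Finset.sum_le_sum (fun i _ => ?_)
      have h1 := (hβ i).2
      have h2 : (0:ℤ) ≤ Q ^ (i:ℕ) := pow_nonneg hQ0 _
      nlinarith
    have h3 : (∑ i : Fin f, Q * Q ^ (i:ℕ)) = Q * ∑ i ∈ range f, Q ^ i := by
      rw [hLfin, Finset.mul_sum]
    nlinarith [hup]

lemma no_ab (hQ3 : 3 ≤ (ℓ:ℤ)) (hf : 0 < f) (B : Finset (Fin f))
    (hdvd : ((ℓ:ℤ) ^ f + 1) ∣ (n - missB ℓ f B)) :
    ∀ a b, (a, b, B) ∉ Tset ℓ f n := by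
  intro a b hx
  set Q := (ℓ:ℤ) with hQdef
  set L := ∑ i ∈ range f, Q ^ i with hLdef
  set σ := ∑ i ∈ Bᶜ, Q ^ (i:ℕ) with hσdef
  have hkey := mem_key ℓ f n hQ3 hx
  obtain ⟨ha, hb, hmod⟩ := hx
  set T := ∑ i, (if i ∈ B then b i else Q + 1 - b i) * Q ^ (i:ℕ) with hTdef
  have hmiss : n - missB ℓ f B = (n + (Q + 1) * σ) - (L - 1) := by
    unfold missB; ring
  rw [hmiss] at hdvd
  have hdvd2 : (Q ^ f + 1) ∣ T - (L - 1) := by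
    have := dvd_add hkey hdvd
    have heq : (T - (n + (Q + 1) * σ)) + ((n + (Q + 1) * σ) - (L - 1)) = T - (L - 1) := by ring
    rwa [heq] at this
  have hbd := sum_beta_bounds ℓ f hQ3 (beta_bounds ℓ f hQ3 B hb)
  have hQf : (3:ℤ) ≤ Q ^ f := by
    calc (3:ℤ) ≤ Q := hQ3
    _ ≤ Q ^ f := le_self_pow₀ (by linarith) hf.ne'
  have habs : |T - (L - 1)| < Q ^ f + 1 := by
    rw [abs_lt]
    constructor <;> [linarith [hbd.1]; linarith [hbd.2]]
  have := Int.eq_zero_of_abs_lt_dvd hdvd2 habs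
  linarith [hbd.1]

lemma unique_ab (hQ3 : 3 ≤ (ℓ:ℤ)) {B : Finset (Fin f)} {a₁ a₂ : ℤ} {b₁ b₂ : Fin f → ℤ}
    (h₁ : (a₁, b₁, B) ∈ Tset ℓ f n) (h₂ : (a₂, b₂, B) ∈ Tset ℓ f n) :
    a₁ = a₂ ∧ b₁ = b₂ := by
  set Q := (ℓ:ℤ) with hQdef
  have hQ0 : (0:ℤ) < Q := by linarith
  have hkey₁ := mem_key ℓ f n hQ3 h₁
  have hkey₂ := mem_key ℓ f n hQ3 h₂
  set β₁ := fun i => (if i ∈ B then b₁ i else Q + 1 - b₁ i) with hβ₁def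
  set β₂ := fun i => (if i ∈ B then b₂ i else Q + 1 - b₂ i) with hβ₂def
  have hdvdT : (Q ^ f + 1) ∣ (∑ i, β₁ i * Q ^ (i:ℕ)) - (∑ i, β₂ i * Q ^ (i:ℕ)) := by
    have := dvd_sub hkey₁ hkey₂
    have heq : ((∑ i, β₁ i * Q ^ (i:ℕ)) - (n + (Q + 1) * ∑ i ∈ Bᶜ, Q ^ (i:ℕ)))
        - ((∑ i, β₂ i * Q ^ (i:ℕ)) - (n + (Q + 1) * ∑ i ∈ Bᶜ, Q ^ (i:ℕ)))
        = (∑ i, β₁ i * Q ^ (i:ℕ)) - (∑ i, β₂ i * Q ^ (i:ℕ)) := by ring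
    rwa [heq] at this
  obtain ⟨ha₁, hb₁, hmod₁⟩ := h₁
  obtain ⟨ha₂, hb₂, hmod₂⟩ := h₂
  simp only at ha₁ hb₁ hmod₁ ha₂ hb₂ hmod₂
  have hβ₁b : ∀ i, 1 ≤ β₁ i ∧ β₁ i ≤ Q := fun i => by
    simpa only [hβ₁def] using beta_bounds ℓ f hQ3 B hb₁ i
  have hβ₂b : ∀ i, 1 ≤ β₂ i ∧ β₂ i ≤ Q := fun i => by
    simpa only [hβ₂def] using beta_bounds ℓ f hQ3 B hb₂ i
  have hd : (∑ i, β₁ i * Q ^ (i:ℕ)) - (∑ i, β₂ i * Q ^ (i:ℕ))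
      = ∑ i, (β₁ i - β₂ i) * Q ^ (i:ℕ) := by
    rw [← Finset.sum_sub_distrib]
    exact Finset.sum_congr rfl (fun i _ => by ring)
  have habs : |∑ i, (β₁ i - β₂ i) * Q ^ (i:ℕ)| ≤ (Q - 1) * ∑ i ∈ range f, Q ^ i := by
    refine abs_sum_le f Q (by linarith) _ _ (fun i => ?_)
    have u1 := hβ₁b i; have u2 := hβ₂b i
    rw [abs_le]; omega
  have hgeo : (∑ i ∈ range f, Q ^ i) * (Q - 1) = Q ^ f - 1 := geom_sum_mul Q f
  have hzero : (∑ i, (β₁ i - β₂ i) * Q ^ (i:ℕ)) = 0 := by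
    have hdvd' : (Q ^ f + 1) ∣ ∑ i, (β₁ i - β₂ i) * Q ^ (i:ℕ) := by rw [← hd]; exact hdvdT
    refine Int.eq_zero_of_abs_lt_dvd hdvd' ?_
    · have hQf : (0:ℤ) < Q ^ f := pow_pos hQ0 f
      calc |∑ i, (β₁ i - β₂ i) * Q ^ (i:ℕ)| ≤ (Q - 1) * ∑ i ∈ range f, Q ^ i := habs
        _ = Q ^ f - 1 := by linarith [hgeo]
        _ < Q ^ f + 1 := by linarith
  have hβeq : ∀ i, β₁ i - β₂ i = 0 := by
    refine digits_zero Q f _ (fun i => ?_) hzero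
    have u1 := hβ₁b i; have u2 := hβ₂b i
    rw [abs_lt]; omega
  have hbeq : b₁ = b₂ := by
    funext i
    have := hβeq i
    simp only [hβ₁def, hβ₂def] at this
    by_cases hiB : i ∈ B
    · rw [if_pos hiB, if_pos hiB] at this; omega
    · rw [if_neg hiB, if_neg hiB] at this; omega
  refine ⟨?_, hbeq⟩
  have hNN : Q ^ (2*f) - 1 = (Q ^ f + 1) * (Q ^ f - 1) := by rw [two_mul, pow_add]; ring
  have hdA : (Q ^ (2*f) - 1) ∣ (a₁ - a₂) * (Q ^ f + 1) := by
    have d1 := Int.ModEq.dvd hmod₁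
    have d2 := Int.ModEq.dvd hmod₂
    have := dvd_sub d1 d2
    subst hbeq
    have heq : ((a₁ * (Q ^ f + 1) + ∑ i ∈ B, b₁ i * Q ^ (i:ℕ) + ∑ i ∈ Bᶜ, b₁ i * Q ^ (f + (i:ℕ))) - n)
        - ((a₂ * (Q ^ f + 1) + ∑ i ∈ B, b₁ i * Q ^ (i:ℕ) + ∑ i ∈ Bᶜ, b₁ i * Q ^ (f + (i:ℕ))) - n)
        = (a₁ - a₂) * (Q ^ f + 1) := by ring
    rwa [heq] at this
  have hM0 : (Q ^ f + 1) ≠ 0 := by positivity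
  have hEdvd : (Q ^ f - 1) ∣ (a₁ - a₂) := by
    have h5 : (Q ^ f + 1) * (Q ^ f - 1) ∣ (Q ^ f + 1) * (a₁ - a₂) := by
      rw [← hNN]
      have heq2 : (Q ^ f + 1) * (a₁ - a₂) = (a₁ - a₂) * (Q ^ f + 1) := by ring
      rwa [heq2]
    exact (mul_dvd_mul_iff_left hM0).mp h5
  have hpow : Q ^ f = ((ℓ:ℤ)) ^ f := by rw [hQdef]
  have : a₁ - a₂ = 0 := by
    refine Int.eq_zero_of_abs_lt_dvd hEdvd ?_
    rw [abs_lt]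
    omega
  omega

lemma exists_ab (hQ3 : 3 ≤ (ℓ:ℤ)) (hf : 0 < f) (B : Finset (Fin f))
    (hnd : ¬ ((ℓ:ℤ) ^ f + 1) ∣ (n - missB ℓ f B)) :
    ∃ a b, (a, b, B) ∈ Tset ℓ f n := by
  set Q := (ℓ:ℤ) with hQdef
  have hQ0 : (0:ℤ) < Q := by linarith
  set L := ∑ i ∈ range f, Q ^ i with hLdef
  set σ := ∑ i ∈ Bᶜ, Q ^ (i:ℕ) with hσdef
  set M := Q ^ f + 1 with hMdef
  have hQf : (3:ℤ) ≤ Q ^ f := le_trans hQ3 (le_self_pow₀ (by linarith) hf.ne')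
  have hM0 : (0:ℤ) < M := by rw [hMdef]; linarith
  have hmiss : n - missB ℓ f B = (n + (Q + 1) * σ) - (L - 1) := by
    unfold missB; ring
  rw [hmiss] at hnd
  set r0 := (n + (Q + 1) * σ) - (L - 1) with hr0def
  set ρ := r0 % M with hρdef
  have hρ1 : 0 ≤ ρ := Int.emod_nonneg r0 hM0.ne'
  have hρ2 : ρ < M := Int.emod_lt_of_pos r0 hM0
  have hρ0 : ρ ≠ 0 := fun h => hnd (Int.dvd_of_emod_eq_zero h)
  obtain ⟨δ, hδb, hδs⟩ := digits_exists Q hQ0 f (ρ - 1) (by omega) (by rw [hMdef] at hρ2; omega)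
  set β := fun i => δ i + 1 with hβdef
  have hβb : ∀ i, 1 ≤ β i ∧ β i ≤ Q := fun i => by have := hδb i; simp [hβdef]; omega
  have hLfin : L = ∑ i : Fin f, Q ^ (i:ℕ) := (Fin.sum_univ_eq_sum_range (fun i => Q ^ i) f).symm
  have hT : (∑ i, β i * Q ^ (i:ℕ)) = ρ - 1 + L := by
    have : (∑ i, β i * Q ^ (i:ℕ)) = (∑ i, δ i * Q ^ (i:ℕ)) + ∑ i : Fin f, Q ^ (i:ℕ) := by
      rw [← Finset.sum_add_distrib]
      exact Finset.sum_congr rfl (fun i _ => by simp [hβdef]; ring)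
    rw [this, hδs, ← hLfin]
  set b := fun i => if i ∈ B then β i else Q + 1 - β i with hbdef
  have hbb : ∀ i, 1 ≤ b i ∧ b i ≤ Q := by
    intro i
    have := hβb i
    simp only [hbdef]
    split <;> omega
  have hback : (fun i => if i ∈ B then b i else Q + 1 - b i) = β := by
    funext i
    simp only [hbdef]
    by_cases hiB : i ∈ B
    · rw [if_pos hiB, if_pos hiB]
    · rw [if_neg hiB, if_neg hiB]; ring
  set S := (∑ i ∈ B, b i * Q ^ (i:ℕ)) + ∑ i ∈ Bᶜ, b i * Q ^ (f + (i:ℕ)) with hSdef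
  have hStr : S = (∑ i, β i * Q ^ (i:ℕ)) - (Q + 1) * σ + M * (∑ i ∈ Bᶜ, b i * Q ^ (i:ℕ)) := by
    rw [hSdef, S_transform f Q b B]
    rw [show (∑ i, (if i ∈ B then b i else Q + 1 - b i) * Q ^ (i:ℕ)) = ∑ i, β i * Q ^ (i:ℕ) by
      exact Finset.sum_congr rfl (fun i _ => by rw [congrFun hback i])]
  have hMn : M ∣ n - S := by
    have h1 : r0 - ρ = M * (r0 / M) := by
      have := Int.emod_add_mul_ediv r0 M
      linarith
    have h2 : n - S = (r0 - ρ) - M * (∑ i ∈ Bᶜ, b i * Q ^ (i:ℕ)) := by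
      rw [hStr, hT, hr0def]; ring
    rw [h2, h1]
    exact dvd_sub ⟨r0 / M, rfl⟩ ⟨∑ i ∈ Bᶜ, b i * Q ^ (i:ℕ), rfl⟩
  set q := (n - S) / M with hqdef
  have hq : n - S = M * q := (Int.mul_ediv_cancel' hMn).symm
  set E := Q ^ f - 1 with hEdef
  have hE0 : (0:ℤ) < E := by rw [hEdef]; linarith
  set a := q % E with hadef
  have ha1 : 0 ≤ a := Int.emod_nonneg q hE0.ne'
  have ha2 : a < E := Int.emod_lt_of_pos q hE0
  refine ⟨a, b, ⟨⟨ha1, by rw [hEdef] at ha2; simp only [hQdef] at ha2 ⊢; omega⟩, hbb, ?_⟩⟩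
  rw [Int.modEq_iff_dvd]
  have hNN : Q ^ (2*f) - 1 = M * E := by rw [hMdef, hEdef, two_mul, pow_add]; ring
  have h3 : a - q = -(E * (q / E)) := by
    have := Int.emod_add_mul_ediv q E
    linarith
  have h4 : (a * M + ∑ i ∈ B, b i * Q ^ (i:ℕ) + ∑ i ∈ Bᶜ, b i * Q ^ (f + (i:ℕ))) - n
      = M * (a - q) := by
    have : (∑ i ∈ B, b i * Q ^ (i:ℕ)) + ∑ i ∈ Bᶜ, b i * Q ^ (f + (i:ℕ)) = S := hSdef.symm
    rw [show (a * M + ∑ i ∈ B, b i * Q ^ (i:ℕ) + ∑ i ∈ Bᶜ, b i * Q ^ (f + (i:ℕ)))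
        = a * M + S by rw [← this]; ring]
    linarith [hq]
  show (Q ^ (2*f) - 1) ∣ (a * (Q ^ f + 1) + ∑ i ∈ B, b i * Q ^ (i:ℕ) + ∑ i ∈ Bᶜ, b i * Q ^ (f + (i:ℕ))) - n
  rw [← hMdef, h4, h3, hNN]
  exact ⟨-(q / E), by ring⟩

end perB

section distinct

variable (ℓ f : ℕ)

lemma coeff_forall (hQ3 : 3 ≤ (ℓ:ℤ)) {e e' : Fin f → ℤ}
    (he : ∀ i, |e i| ≤ 1) (he' : ∀ i, |e' i| ≤ 1)
    (h : (∑ i, e i * (ℓ:ℤ) ^ (i:ℕ)) = ∑ i, e' i * (ℓ:ℤ) ^ (i:ℕ)) : ∀ i, e i = e' i := by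
  have h0 : (∑ i, (e i - e' i) * (ℓ:ℤ) ^ (i:ℕ)) = 0 := by
    have : (∑ i, (e i - e' i) * (ℓ:ℤ) ^ (i:ℕ))
        = (∑ i, e i * (ℓ:ℤ) ^ (i:ℕ)) - ∑ i, e' i * (ℓ:ℤ) ^ (i:ℕ) := by
      rw [← Finset.sum_sub_distrib]
      exact Finset.sum_congr rfl (fun i _ => by ring)
    rw [this, h, sub_self]
  intro i
  have := digits_zero (ℓ:ℤ) f _ (fun j => by
    have u1 := he j; have u2 := he' j
    rw [abs_le] at u1 u2
    rw [abs_lt]; omega) h0 i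
  omega

lemma eB_sub_abs {f : ℕ} (B₁ B₂ : Finset (Fin f)) (i : Fin f) :
    |eB B₂ i - eB B₁ i| ≤ 1 := by
  unfold eB
  rw [← mul_sub, abs_mul, abs_pow, abs_neg, abs_one, one_pow, one_mul]
  by_cases h1 : i ∈ B₁ <;> by_cases h2 : i ∈ B₂ <;> simp [h1, h2]

lemma eB_inj {f : ℕ} (B₁ B₂ : Finset (Fin f)) (h : ∀ i, eB B₁ i = eB B₂ i) : B₁ = B₂ := by
  ext i
  have := h i
  unfold eB at this
  have hne : ((-1:ℤ)) ^ (i:ℕ) ≠ 0 := pow_ne_zero _ (by norm_num)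
  have h2 : (if i ∈ B₁ then (1:ℤ) else 0) = (if i ∈ B₂ then 1 else 0) :=
    mul_left_cancel₀ hne this
  by_cases hm1 : i ∈ B₁ <;> by_cases hm2 : i ∈ B₂ <;> simp [hm1, hm2] at h2 ⊢

lemma L_nonneg (hQ3 : 3 ≤ (ℓ:ℤ)) : 0 ≤ ∑ i ∈ range f, (ℓ:ℤ) ^ i :=
  Finset.sum_nonneg (fun i _ => pow_nonneg (by linarith) _)

lemma sAlt_abs (hQ3 : 3 ≤ (ℓ:ℤ)) (B : Finset (Fin f)) :
    |sAlt ℓ f B| ≤ ∑ i ∈ range f, (ℓ:ℤ) ^ i := by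
  rw [sAlt_eq]
  have := abs_sum_le f (ℓ:ℤ) (by linarith) (eB B) 1 (eB_abs B)
  rwa [one_mul] at this

lemma even_core (hQ3 : 3 ≤ (ℓ:ℤ)) (hfe : Even f) (d : ℤ)
    (hd : ((ℓ:ℤ) ^ f + 1) ∣ ((ℓ:ℤ) + 1) * d) (hb : 2 * |d| < (ℓ:ℤ) ^ f + 1) : d = 0 := by
  set Q := (ℓ:ℤ) with hQdef
  obtain ⟨m, hm⟩ := hfe
  have h1 : (Q + 1) ∣ Q ^ f - 1 := by
    have h2 : (Q ^ 2 - 1) ∣ (Q ^ 2) ^ m - 1 := by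
      have := sub_dvd_pow_sub_pow (Q ^ 2) 1 m
      simpa using this
    have h3 : (Q + 1) ∣ Q ^ 2 - 1 := ⟨Q - 1, by ring⟩
    have h4 : (Q ^ 2) ^ m = Q ^ f := by rw [← pow_mul, hm]; ring_nf
    rw [h4] at h2
    exact h3.trans h2
  obtain ⟨k, hk⟩ := h1
  obtain ⟨t, ht⟩ := hd
  have h2d : (Q ^ f + 1) ∣ 2 * d := by
    refine ⟨d - k * t, ?_⟩
    linear_combination (-k) * ht + (-d) * hk
  have := Int.eq_zero_of_abs_lt_dvd h2d (by rw [abs_mul, abs_two]; omega)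
  omega

lemma odd_kval (hfo : Odd f) :
    (((ℓ:ℤ)) + 1) * sAlt ℓ f univ = (ℓ:ℤ) ^ f + 1 := by
  rw [sAlt_univ, Odd.neg_pow hfo]
  ring

lemma odd_k_pos (hQ3 : 3 ≤ (ℓ:ℤ)) (hfo : Odd f) : 0 < sAlt ℓ f univ := by
  have hk := odd_kval ℓ f hfo
  have hQf : (0:ℤ) < (ℓ:ℤ) ^ f := pow_pos (by linarith) f
  nlinarith

lemma L_lt_two_k (hQ3 : 3 ≤ (ℓ:ℤ)) (hf : 0 < f) (hfo : Odd f) :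
    (∑ i ∈ range f, (ℓ:ℤ) ^ i) < 2 * sAlt ℓ f univ := by
  set Q := (ℓ:ℤ) with hQdef
  set L := ∑ i ∈ range f, Q ^ i with hLdef
  set k := sAlt ℓ f univ with hkdef
  have hgeo : L * (Q - 1) = Q ^ f - 1 := geom_sum_mul Q f
  have hk : (Q + 1) * k = Q ^ f + 1 := odd_kval ℓ f hfo
  have hk0 : 0 < k := odd_k_pos ℓ f hQ3 hfo
  by_contra hcon
  push_neg at hcon
  have h1 : 2 * k * (Q - 1) ≤ L * (Q - 1) :=
    mul_le_mul_of_nonneg_right hcon (by linarith)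
  nlinarith [mul_nonneg hk0.le (by linarith : (0:ℤ) ≤ Q - 3)]

lemma odd_div (hQ3 : 3 ≤ (ℓ:ℤ)) (hfo : Odd f) (d : ℤ)
    (hd : ((ℓ:ℤ) ^ f + 1) ∣ ((ℓ:ℤ) + 1) * d) : sAlt ℓ f univ ∣ d := by
  have hk : (((ℓ:ℤ)) + 1) * sAlt ℓ f univ = (ℓ:ℤ) ^ f + 1 := odd_kval ℓ f hfo
  rw [← hk] at hd
  obtain ⟨t, ht⟩ := hd
  exact ⟨t, by
    have hne : ((ℓ:ℤ) + 1) ≠ 0 := by linarith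
    have : ((ℓ:ℤ) + 1) * d = ((ℓ:ℤ) + 1) * (sAlt ℓ f univ * t) := by
      rw [ht]; ring
    exact mul_left_cancel₀ hne this⟩

lemma small_mult (k d t : ℤ) (hk0 : 0 < k) (hd : d = k * t) (hb : |d| < 2 * k) :
    t = -1 ∨ t = 0 ∨ t = 1 := by
  rw [hd, abs_mul, abs_of_pos hk0] at hb
  have : |t| < 2 := by
    by_contra hc
    push_neg at hc
    nlinarith
  rw [abs_lt] at this
  omega

end distinct

section mains

variable (ℓ f : ℕ)

lemma even_inj (hQ3 : 3 ≤ (ℓ:ℤ)) (hfe : Even f) (B₁ B₂ : Finset (Fin f))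
    (h : Int.ModEq ((ℓ:ℤ) ^ f + 1) (-1 + ((ℓ:ℤ) + 1) * sAlt ℓ f B₁)
      (-1 + ((ℓ:ℤ) + 1) * sAlt ℓ f B₂)) : B₁ = B₂ := by
  set Q := (ℓ:ℤ) with hQdef
  have hd : (Q ^ f + 1) ∣ (Q + 1) * (sAlt ℓ f B₂ - sAlt ℓ f B₁) := by
    have := Int.ModEq.dvd h
    have heq : (-1 + (Q + 1) * sAlt ℓ f B₂) - (-1 + (Q + 1) * sAlt ℓ f B₁)
        = (Q + 1) * (sAlt ℓ f B₂ - sAlt ℓ f B₁) := by ring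
    rwa [heq] at this
  have hdiff : sAlt ℓ f B₂ - sAlt ℓ f B₁ = ∑ i, (eB B₂ i - eB B₁ i) * Q ^ (i:ℕ) := by
    rw [sAlt_eq, sAlt_eq, ← Finset.sum_sub_distrib]
    exact Finset.sum_congr rfl (fun i _ => by ring)
  have habs : |sAlt ℓ f B₂ - sAlt ℓ f B₁| ≤ ∑ i ∈ range f, Q ^ i := by
    rw [hdiff]
    have := abs_sum_le f Q (by linarith) _ 1 (eB_sub_abs B₁ B₂)
    rwa [one_mul] at this
  have hgeo : (∑ i ∈ range f, Q ^ i) * (Q - 1) = Q ^ f - 1 := geom_sum_mul Q f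
  have hL0 := L_nonneg ℓ f hQ3
  have hzero : sAlt ℓ f B₂ - sAlt ℓ f B₁ = 0 := by
    refine even_core ℓ f hQ3 hfe _ hd ?_
    nlinarith
  have hcoef : ∀ i, eB B₂ i = eB B₁ i := by
    refine coeff_forall ℓ f hQ3 (eB_abs B₂) (eB_abs B₁) ?_
    have h1 : (∑ i, eB B₂ i * Q ^ (i:ℕ)) = sAlt ℓ f B₂ := (sAlt_eq ℓ f B₂).symm
    have h2 : (∑ i, eB B₁ i * Q ^ (i:ℕ)) = sAlt ℓ f B₁ := (sAlt_eq ℓ f B₁).symm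
    rw [h1, h2]
    omega
  exact (eB_inj B₂ B₁ hcoef).symm

lemma even_nonzero (hQ3 : 3 ≤ (ℓ:ℤ)) (hQodd : Odd (ℓ:ℤ)) (B : Finset (Fin f)) :
    ¬ Int.ModEq ((ℓ:ℤ) ^ f + 1) (-1 + ((ℓ:ℤ) + 1) * sAlt ℓ f B) 0 := by
  intro h
  set Q := (ℓ:ℤ) with hQdef
  have hdvd : (Q ^ f + 1) ∣ (1 - (Q + 1) * sAlt ℓ f B) := by
    have := Int.ModEq.dvd h
    have heq : (0:ℤ) - (-1 + (Q + 1) * sAlt ℓ f B) = 1 - (Q + 1) * sAlt ℓ f B := by ring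
    rwa [heq] at this
  have hMeven : Even (Q ^ f + 1) := (hQodd.pow).add_one
  have h2even : Even ((Q + 1) * sAlt ℓ f B) := by
    have hq1 : Even (Q + 1) := by
      obtain ⟨r, hr⟩ := hQodd
      exact ⟨r + 1, by omega⟩
    exact hq1.mul_right _
  have hM2 : (2:ℤ) ∣ Q ^ f + 1 := by
    obtain ⟨r, hr⟩ := hMeven
    exact ⟨r, by omega⟩
  have hx : Even (1 - (Q + 1) * sAlt ℓ f B) := by
    obtain ⟨c, hc⟩ := hM2.trans hdvd
    exact ⟨c, by omega⟩
  have hone : Even (1:ℤ) := (Int.even_sub.mp hx).mpr h2even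
  simp at hone

lemma odd_inj (hQ3 : 3 ≤ (ℓ:ℤ)) (hf : 0 < f) (hfo : Odd f) (B₁ B₂ : Finset (Fin f))
    (h₁ : B₁.Nonempty) (h₁u : B₁ ≠ univ) (h₂ : B₂.Nonempty) (h₂u : B₂ ≠ univ)
    (h : Int.ModEq ((ℓ:ℤ) ^ f + 1) (((ℓ:ℤ) + 1) * sAlt ℓ f B₁)
      (((ℓ:ℤ) + 1) * sAlt ℓ f B₂)) : B₁ = B₂ := by
  set Q := (ℓ:ℤ) with hQdef
  have hd : (Q ^ f + 1) ∣ (Q + 1) * (sAlt ℓ f B₂ - sAlt ℓ f B₁) := by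
    have := Int.ModEq.dvd h
    have heq : ((Q + 1) * sAlt ℓ f B₂) - ((Q + 1) * sAlt ℓ f B₁)
        = (Q + 1) * (sAlt ℓ f B₂ - sAlt ℓ f B₁) := by ring
    rwa [heq] at this
  obtain ⟨t, ht⟩ := odd_div ℓ f hQ3 hfo _ hd
  have hk0 := odd_k_pos ℓ f hQ3 hfo
  have hL2k := L_lt_two_k ℓ f hQ3 hf hfo
  have hdiff : sAlt ℓ f B₂ - sAlt ℓ f B₁ = ∑ i, (eB B₂ i - eB B₁ i) * Q ^ (i:ℕ) := by
    rw [sAlt_eq, sAlt_eq, ← Finset.sum_sub_distrib]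
    exact Finset.sum_congr rfl (fun i _ => by ring)
  have habs : |sAlt ℓ f B₂ - sAlt ℓ f B₁| ≤ ∑ i ∈ range f, Q ^ i := by
    rw [hdiff]
    have := abs_sum_le f Q (by linarith) _ 1 (eB_sub_abs B₁ B₂)
    rwa [one_mul] at this
  simp only [← hQdef] at hL2k habs
  rcases small_mult _ _ _ hk0 ht (by omega) with h0 | h0 | h0
  · -- t = -1 : B₁ = univ, contradiction
    exfalso
    apply h₁u
    rw [h0, mul_neg_one] at ht
    have hmatch : ∀ i, eB B₁ i - eB B₂ i = eB univ i := by
      refine coeff_forall ℓ f hQ3 (eB_sub_abs B₂ B₁) (eB_abs univ) ?_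
      have h1 : (∑ i, (eB B₁ i - eB B₂ i) * Q ^ (i:ℕ))
          = sAlt ℓ f B₁ - sAlt ℓ f B₂ := by
        rw [sAlt_eq, sAlt_eq, ← Finset.sum_sub_distrib]
        exact Finset.sum_congr rfl (fun i _ => by ring)
      rw [h1, ← sAlt_eq]
      omega
    refine Finset.eq_univ_iff_forall.mpr (fun i => ?_)
    have := hmatch i
    unfold eB at this
    have hne : ((-1:ℤ)) ^ (i:ℕ) ≠ 0 := pow_ne_zero _ (by norm_num)
    have h2 : (if i ∈ B₁ then (1:ℤ) else 0) - (if i ∈ B₂ then 1 else 0)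
        = (if i ∈ univ then 1 else 0) := by
      have h3 := mul_left_cancel₀ hne (show ((-1:ℤ))^(i:ℕ) * ((if i ∈ B₁ then (1:ℤ) else 0) - (if i ∈ B₂ then 1 else 0)) = ((-1:ℤ))^(i:ℕ) * (if i ∈ univ then 1 else 0) by rw [mul_sub]; exact this)
      exact h3
    by_cases hm1 : i ∈ B₁
    · exact hm1
    · by_cases hm2 : i ∈ B₂ <;> simp [hm1, hm2] at h2
  · -- t = 0
    rw [h0, mul_zero] at ht
    have hcoef : ∀ i, eB B₂ i = eB B₁ i := by
      refine coeff_forall ℓ f hQ3 (eB_abs B₂) (eB_abs B₁) ?_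
      rw [← sAlt_eq, ← sAlt_eq]
      omega
    exact (eB_inj B₂ B₁ hcoef).symm
  · -- t = 1 : B₂ = univ, contradiction
    exfalso
    apply h₂u
    rw [h0, mul_one] at ht
    have hmatch : ∀ i, eB B₂ i - eB B₁ i = eB univ i := by
      refine coeff_forall ℓ f hQ3 (eB_sub_abs B₁ B₂) (eB_abs univ) ?_
      rw [← hdiff, ← sAlt_eq]
      omega
    refine Finset.eq_univ_iff_forall.mpr (fun i => ?_)
    have := hmatch i
    unfold eB at this
    have hne : ((-1:ℤ)) ^ (i:ℕ) ≠ 0 := pow_ne_zero _ (by norm_num)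
    have h2 : (if i ∈ B₂ then (1:ℤ) else 0) - (if i ∈ B₁ then 1 else 0)
        = (if i ∈ univ then 1 else 0) := by
      have h3 := mul_left_cancel₀ hne (show ((-1:ℤ))^(i:ℕ) * ((if i ∈ B₂ then (1:ℤ) else 0) - (if i ∈ B₁ then 1 else 0)) = ((-1:ℤ))^(i:ℕ) * (if i ∈ univ then 1 else 0) by rw [mul_sub]; exact this)
      exact h3
    by_cases hm2 : i ∈ B₂
    · exact hm2
    · by_cases hm1 : i ∈ B₁ <;> simp [hm1, hm2] at h2

lemma odd_nonzero (hQ3 : 3 ≤ (ℓ:ℤ)) (hf : 0 < f) (hfo : Odd f) (B : Finset (Fin f))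
    (hne : B.Nonempty) (hnu : B ≠ univ) :
    ¬ Int.ModEq ((ℓ:ℤ) ^ f + 1) (((ℓ:ℤ) + 1) * sAlt ℓ f B) 0 := by
  intro h
  set Q := (ℓ:ℤ) with hQdef
  have hd : (Q ^ f + 1) ∣ (Q + 1) * (0 - sAlt ℓ f B) := by
    have := Int.ModEq.dvd h
    have heq : (0:ℤ) - ((Q + 1) * sAlt ℓ f B) = (Q + 1) * (0 - sAlt ℓ f B) := by ring
    rwa [heq] at this
  obtain ⟨t, ht⟩ := odd_div ℓ f hQ3 hfo _ hd
  have hk0 := odd_k_pos ℓ f hQ3 hfo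
  have hL2k := L_lt_two_k ℓ f hQ3 hf hfo
  have habs := sAlt_abs ℓ f hQ3 B
  have habs' : |0 - sAlt ℓ f B| ≤ ∑ i ∈ range f, Q ^ i := by
    rw [zero_sub, abs_neg]; exact habs
  simp only [← hQdef] at hL2k habs'
  rcases small_mult _ _ _ hk0 ht (by omega) with h0 | h0 | h0
  · -- t = -1 : sAlt B = k : B = univ
    apply hnu
    rw [h0, mul_neg_one] at ht
    have hs : sAlt ℓ f B = sAlt ℓ f univ := by omega
    have hcoef : ∀ i, eB B i = eB univ i := by
      refine coeff_forall ℓ f hQ3 (eB_abs B) (eB_abs univ) ?_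
      rw [← sAlt_eq, ← sAlt_eq, hs]
    exact eB_inj B univ hcoef
  · -- t = 0 : sAlt B = 0 : B = ∅
    rw [h0, mul_zero] at ht
    have hs : sAlt ℓ f B = 0 := by omega
    have hcoef : ∀ i, eB B i = eB (∅ : Finset (Fin f)) i := by
      refine coeff_forall ℓ f hQ3 (eB_abs B) (eB_abs ∅) ?_
      rw [← sAlt_eq, hs]
      simp [eB, sAlt]
    have hBempty : B = ∅ := eB_inj B ∅ hcoef
    rw [hBempty] at hne
    exact absurd hne (by simp)
  · -- t = 1 : sAlt B = -k : impossible
    rw [h0, mul_one] at ht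
    have hs : sAlt ℓ f B = - sAlt ℓ f univ := by omega
    have hcoef : ∀ i, eB B i = - eB (univ : Finset (Fin f)) i := by
      refine coeff_forall ℓ f hQ3 (eB_abs B) (fun i => by
        rw [abs_neg]; exact eB_abs univ i) ?_
      have h1 : (∑ i : Fin f, (-(eB (univ : Finset (Fin f)) i)) * Q ^ (i:ℕ)) = - sAlt ℓ f univ := by
        rw [sAlt_eq, ← Finset.sum_neg_distrib]
        exact Finset.sum_congr rfl (fun i _ => by ring)
      rw [h1, ← sAlt_eq, hs]
    set i0 : Fin f := ⟨0, hf⟩ with hi0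
    have := hcoef i0
    unfold eB at this
    have hi0v : ((i0:ℕ)) = 0 := rfl
    rw [hi0v] at this
    simp only [pow_zero, one_mul, mem_univ, if_pos] at this
    by_cases hm : i0 ∈ B <;> simp [hm] at this
end mains

section corr

variable (ℓ f : ℕ)

lemma miss_corr (B : Finset (Fin f)) :
    ((ℓ:ℤ) ^ f + 1) ∣ (missB ℓ f B -
      ((if Even f then (-1:ℤ) else 0) + ((ℓ:ℤ) + 1) * sAlt ℓ f (star f Bᶜ))) := by
  have hstar := sAlt_star ℓ f Bᶜ
  have hg := even_geom (ℓ:ℤ) f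
  rcases Nat.even_or_odd f with hfe | hfo
  · have hno : ¬ Odd f := by simp [Nat.odd_iff, Nat.even_iff] at hfe ⊢; omega
    rw [if_neg hno] at hg
    rw [if_pos hfe]
    unfold missB
    refine ⟨0, ?_⟩
    rw [hstar]
    linear_combination (-1 : ℤ) * hg
  · have hne : ¬ Even f := by simp [Nat.odd_iff, Nat.even_iff] at hfo ⊢; omega
    rw [if_pos hfo] at hg
    rw [if_neg hne]
    unfold missB
    refine ⟨-1, ?_⟩
    rw [hstar]
    linear_combination (-1 : ℤ) * hg

end corr

section counting

variable (ℓ f : ℕ)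

lemma count_part (hQ3 : 3 ≤ (ℓ:ℤ)) (hQodd : Odd (ℓ:ℤ)) (hf : 0 < f) (n : ℤ)
    (hn : ¬ ((ℓ:ℤ) ^ f + 1) ∣ n) :
    (inA ℓ f n → (Tset ℓ f n).ncard = 2 ^ f - 1) ∧
    (¬ inA ℓ f n → (Tset ℓ f n).ncard = 2 ^ f) := by
  classical
  set Q := (ℓ:ℤ) with hQdef
  set M := Q ^ f + 1 with hMdef
  set D : Finset (Finset (Fin f)) := univ.filter (fun B => M ∣ (n - missB ℓ f B)) with hDdef
  set G : Finset (Finset (Fin f)) := univ.filter (fun B => ¬ M ∣ (n - missB ℓ f B)) with hGdef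
  -- main bijection
  have hmain : (Tset ℓ f n).ncard = G.card := by
    set g : Finset (Fin f) → ℤ × (Fin f → ℤ) × Finset (Fin f) :=
      fun B => if h : ∃ ab : ℤ × (Fin f → ℤ), (ab.1, ab.2, B) ∈ Tset ℓ f n
        then (h.choose.1, h.choose.2, B) else (0, fun _ => 0, B) with hgdef
    have hglast : ∀ B, (g B).2.2 = B := by
      intro B
      simp only [hgdef]
      split <;> rfl
    have himg : Tset ℓ f n = g '' ↑G := by
      ext x
      constructor
      · intro hx
        obtain ⟨a, b, B⟩ := x
        have hBmem : ¬ M ∣ (n - missB ℓ f B) := by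
          intro hdvd
          exact no_ab ℓ f n hQ3 hf B hdvd a b hx
        have hex : ∃ ab : ℤ × (Fin f → ℤ), (ab.1, ab.2, B) ∈ Tset ℓ f n := ⟨(a, b), hx⟩
        refine ⟨B, by simp [hGdef, hBmem], ?_⟩
        have hspec := hex.choose_spec
        obtain ⟨e1, e2⟩ := unique_ab ℓ f n hQ3 hspec hx
        simp only [hgdef, dif_pos hex]
        rw [e1, e2]
      · rintro ⟨B, hB, rfl⟩
        have hB2 : ¬ M ∣ (n - missB ℓ f B) := by
          have hB' := Finset.mem_coe.mp hB
          simp only [hGdef, Finset.mem_filter] at hB'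
          exact hB'.2
        obtain ⟨a, b, hab⟩ := exists_ab ℓ f n hQ3 hf B hB2
        have hex : ∃ ab : ℤ × (Fin f → ℤ), (ab.1, ab.2, B) ∈ Tset ℓ f n := ⟨(a, b), hab⟩
        simp only [hgdef, dif_pos hex]
        exact hex.choose_spec
    have hinj : Set.InjOn g ↑G := by
      intro B₁ _ B₂ _ h
      have h2 := congrArg (fun x : ℤ × (Fin f → ℤ) × Finset (Fin f) => x.2.2) h
      simpa only [hglast] using h2
    rw [himg, Set.ncard_image_of_injOn hinj, Set.ncard_coe_finset]
  have hsplit : D.card + G.card = 2 ^ f := by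
    have := Finset.card_filter_add_card_filter_not
      (s := (univ : Finset (Finset (Fin f)))) (p := fun B => M ∣ (n - missB ℓ f B))
    rw [Finset.card_univ, Fintype.card_finset, Fintype.card_fin] at this
    exact this
  -- a membership characterization of D
  have hDmem : ∀ B, B ∈ D ↔ M ∣ (n - ((if Even f then (-1:ℤ) else 0)
      + (Q + 1) * sAlt ℓ f (star f Bᶜ))) := by
    intro B
    simp only [hDdef, Finset.mem_filter, Finset.mem_univ, true_and]
    constructor
    · intro h
      have hc := miss_corr ℓ f B
      have := dvd_add h hc
      have heq : (n - missB ℓ f B) + (missB ℓ f B -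
          ((if Even f then (-1:ℤ) else 0) + (Q + 1) * sAlt ℓ f (star f Bᶜ)))
          = n - ((if Even f then (-1:ℤ) else 0) + (Q + 1) * sAlt ℓ f (star f Bᶜ)) := by ring
      rwa [heq] at this
    · intro h
      have hc := miss_corr ℓ f B
      have := dvd_sub h hc
      have heq : (n - ((if Even f then (-1:ℤ) else 0) + (Q + 1) * sAlt ℓ f (star f Bᶜ)))
          - (missB ℓ f B - ((if Even f then (-1:ℤ) else 0) + (Q + 1) * sAlt ℓ f (star f Bᶜ)))
          = n - missB ℓ f B := by ring
      rwa [heq] at this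
  -- star Bᶜ can't be ∅ or univ in D when f is odd
  have hstar_ne : ∀ B, Odd f → B ∈ D → (star f Bᶜ).Nonempty ∧ star f Bᶜ ≠ univ := by
    intro B hfo hBD
    have hne : ¬ Even f := by simp [Nat.odd_iff, Nat.even_iff] at hfo ⊢; omega
    rw [hDmem B, if_neg hne, zero_add] at hBD
    constructor
    · rw [Finset.nonempty_iff_ne_empty]
      intro hemp
      rw [hemp] at hBD
      have : sAlt ℓ f (∅ : Finset (Fin f)) = 0 := by simp [sAlt]
      rw [this, mul_zero, sub_zero] at hBD
      exact hn hBD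
    · intro huniv
      rw [huniv] at hBD
      rw [odd_kval ℓ f hfo] at hBD
      have : M ∣ n := by
        have h2 := dvd_add hBD (dvd_refl M)
        have heq : (n - (Q ^ f + 1)) + M = n := by rw [hMdef]; ring
        rwa [heq] at h2
      exact hn this
  constructor
  · -- inA case
    intro hA
    have hDcard : ∃ B₀, D = {B₀} := by
      rcases hA with ⟨hfe, Bs, hmod⟩ | ⟨hfo, Bs, hBsne, hBsnu, hmod⟩
      · refine ⟨(star f Bs)ᶜ, ?_⟩
        have hstarB : star f (((star f Bs)ᶜ)ᶜ) = Bs := by rw [compl_compl, star_star]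
        have hmoddvd : M ∣ ((-1 + (Q + 1) * sAlt ℓ f Bs) - n) := Int.ModEq.dvd hmod
        ext B
        rw [Finset.mem_singleton, hDmem B, if_pos hfe]
        constructor
        · intro h
          have hcomb := dvd_add h hmoddvd
          have heq : (n - (-1 + (Q + 1) * sAlt ℓ f (star f Bᶜ)))
              + ((-1 + (Q + 1) * sAlt ℓ f Bs) - n)
              = (-1 + (Q + 1) * sAlt ℓ f Bs) - (-1 + (Q + 1) * sAlt ℓ f (star f Bᶜ)) := by
            ring
          rw [heq] at hcomb
          have hinj2 := even_inj ℓ f hQ3 hfe (star f Bᶜ) Bs (Int.modEq_iff_dvd.mpr hcomb)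
          have : Bᶜ = star f Bs := by rw [← hinj2, star_star]
          rw [← compl_compl B, this]
        · rintro rfl
          rw [hstarB]
          have heq : n - (-1 + (Q + 1) * sAlt ℓ f Bs)
              = -((-1 + (Q + 1) * sAlt ℓ f Bs) - n) := by ring
          rw [heq]
          exact hmoddvd.neg_right
      · refine ⟨(star f Bs)ᶜ, ?_⟩
        have hstarB : star f (((star f Bs)ᶜ)ᶜ) = Bs := by rw [compl_compl, star_star]
        have hne : ¬ Even f := by simp [Nat.odd_iff, Nat.even_iff] at hfo ⊢; omega
        have hmoddvd : M ∣ (((Q + 1) * sAlt ℓ f Bs) - n) := Int.ModEq.dvd hmod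
        ext B
        rw [Finset.mem_singleton]
        constructor
        · intro hBD
          obtain ⟨hne1, hne2⟩ := hstar_ne B hfo hBD
          rw [hDmem B, if_neg hne, zero_add] at hBD
          have hcomb := dvd_add hBD hmoddvd
          have heq : (n - ((Q + 1) * sAlt ℓ f (star f Bᶜ)))
              + (((Q + 1) * sAlt ℓ f Bs) - n)
              = ((Q + 1) * sAlt ℓ f Bs) - ((Q + 1) * sAlt ℓ f (star f Bᶜ)) := by ring
          rw [heq] at hcomb
          have hinj2 := odd_inj ℓ f hQ3 hf hfo (star f Bᶜ) Bs hne1 hne2 hBsne hBsnu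
            (Int.modEq_iff_dvd.mpr hcomb)
          have : Bᶜ = star f Bs := by rw [← hinj2, star_star]
          rw [← compl_compl B, this]
        · rintro rfl
          rw [hDmem _, if_neg hne, zero_add, hstarB]
          have heq : n - ((Q + 1) * sAlt ℓ f Bs) = -(((Q + 1) * sAlt ℓ f Bs) - n) := by ring
          rw [heq]
          exact hmoddvd.neg_right
    obtain ⟨B₀, hB₀⟩ := hDcard
    rw [hB₀, Finset.card_singleton] at hsplit
    rw [hmain]
    omega
  · -- ¬ inA case
    intro hA
    have hD0 : D = ∅ := by
      rw [Finset.eq_empty_iff_forall_notMem]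
      intro B hBD
      apply hA
      rcases Nat.even_or_odd f with hfe | hfo
      · left
        refine ⟨hfe, star f Bᶜ, ?_⟩
        rw [hDmem B, if_pos hfe] at hBD
        rw [Int.modEq_iff_dvd]
        have heq : (-1 + (Q + 1) * sAlt ℓ f (star f Bᶜ)) - n
            = -(n - (-1 + (Q + 1) * sAlt ℓ f (star f Bᶜ))) := by ring
        rw [heq]
        exact hBD.neg_right
      · right
        obtain ⟨hne1, hne2⟩ := hstar_ne B hfo hBD
        refine ⟨hfo, star f Bᶜ, hne1, hne2, ?_⟩
        have hne : ¬ Even f := by simp [Nat.odd_iff, Nat.even_iff] at hfo ⊢; omega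
        rw [hDmem B, if_neg hne, zero_add] at hBD
        rw [Int.modEq_iff_dvd]
        have heq : ((Q + 1) * sAlt ℓ f (star f Bᶜ)) - n
            = -(n - ((Q + 1) * sAlt ℓ f (star f Bᶜ))) := by ring
        rw [heq]
        exact hBD.neg_right
    rw [hD0, Finset.card_empty] at hsplit
    rw [hmain]
    omega

end counting

end Auxiliary

/-- Suppose `ℓ` is an odd prime.  If `f` is even the classes
`−1 + (ℓ+1)s(B*) mod ℓ^f+1` are pairwise distinct and nonzero over all `B*`;
if `f` is odd the classes `(ℓ+1)s(B*) mod ℓ^f+1` are pairwise distinct and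
nonzero over nonempty proper `B*`.  For `n` not divisible by `ℓ^f+1`,
`N(n) = 2^f − 1` if the class of `n` lies in `A`, and `N(n) = 2^f`
otherwise. -/
theorem stmt8 (ℓ f : ℕ) (hℓ : ℓ.Prime) (hℓodd : Odd ℓ) (hf : 0 < f) :
    (Even f →
      (∀ B₁ B₂ : Finset (Fin f),
        Int.ModEq ((ℓ : ℤ) ^ f + 1) (-1 + ((ℓ : ℤ) + 1) * sAlt ℓ f B₁)
          (-1 + ((ℓ : ℤ) + 1) * sAlt ℓ f B₂) → B₁ = B₂) ∧
      (∀ B : Finset (Fin f),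
        ¬ Int.ModEq ((ℓ : ℤ) ^ f + 1) (-1 + ((ℓ : ℤ) + 1) * sAlt ℓ f B) 0)) ∧
    (Odd f →
      (∀ B₁ B₂ : Finset (Fin f), B₁.Nonempty → B₁ ≠ Finset.univ →
        B₂.Nonempty → B₂ ≠ Finset.univ →
        Int.ModEq ((ℓ : ℤ) ^ f + 1) (((ℓ : ℤ) + 1) * sAlt ℓ f B₁)
          (((ℓ : ℤ) + 1) * sAlt ℓ f B₂) → B₁ = B₂) ∧
      (∀ B : Finset (Fin f), B.Nonempty → B ≠ Finset.univ →
        ¬ Int.ModEq ((ℓ : ℤ) ^ f + 1) (((ℓ : ℤ) + 1) * sAlt ℓ f B) 0)) ∧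
    (∀ n : ℤ, ¬ ((ℓ : ℤ) ^ f + 1) ∣ n →
      (inA ℓ f n → (Tset ℓ f n).ncard = 2 ^ f - 1) ∧
      (¬ inA ℓ f n → (Tset ℓ f n).ncard = 2 ^ f)) := by
  have hl3 : 3 ≤ ℓ := by
    have h2 := hℓ.two_le
    have hne2 : ℓ ≠ 2 := by
      intro h
      rw [h] at hℓodd
      simp [Nat.odd_iff] at hℓodd
    omega
  have hQ3 : 3 ≤ (ℓ:ℤ) := by exact_mod_cast hl3
  have hQodd : Odd ((ℓ:ℤ)) := (Int.odd_coe_nat ℓ).mpr hℓodd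
  refine ⟨fun hfe => ⟨even_inj ℓ f hQ3 hfe, even_nonzero ℓ f hQ3 hQodd⟩,
    fun hfo => ⟨fun B₁ B₂ h1 h1u h2 h2u h => odd_inj ℓ f hQ3 hf hfo B₁ B₂ h1 h1u h2 h2u h,
      fun B h1 h2 => odd_nonzero ℓ f hQ3 hf hfo B h1 h2⟩,
    fun n hn => count_part ℓ f hQ3 hQodd hf n hn⟩


end Stmt8
end

section
/- Suppose ℓ = 2 and let n be an integer not divisible by 2^f + 1. Then N(n) = 2^f − 1 if f is even; N(n) = 2^f if f is odd and 3 does not divide n; and N(n) = 2^f − 3 if f is odd and 3 divides n. -/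
/-!
Write `q = 2^f + 1`, so that `2^{2f} - 1 = q (2^f - 1)` and `2^f ≡ -1 (mod q)`. Reducing mod `q`
kills the `a`-term and turns `b_i 2^{f+i}` into `-b_i 2^i`; conversely each congruence mod `q`
lifts to exactly one `a ∈ [0, 2^f - 1)` mod `2^{2f} - 1`. Hence `N(n)` counts pairs `(b, B)` with
`n ≡ ∑_{i∈B} b_i 2^i - ∑_{i∉B} b_i 2^i (mod q)`. Writing `β_i = [i ∈ B]` and
`d_i = b_i - 1` for `i ∈ B`, `d_i = 2 - b_i` for `i ∉ B`, the signed digit is `d_i + 3β_i - 2`,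
so with `u = ∑ d_i 2^i` and `v = ∑ β_i 2^i` (arbitrary elements of `[0, 2^f)`, i.e. of
`ZMod q ∖ {-1}`) the condition reads `n = u + 3v + 4` in `ZMod q`. Given `v`, `u` is determined
and lies in `ZMod q ∖ {-1}` iff `3(v + 1) ≠ n`, so `N(n) = #{w ≠ 0 | 3w ≠ n}`, i.e.
`N(n) + #{w | 3w = n} = 2^f` as `n ≠ 0`. Finally `3w = n` has one solution when `3` is a unit mod
`q` (`f` even), and none or three solutions when `3 ∣ q` (`f` odd) according as `3 ∤ n` or
`3 ∣ n`.
-/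

namespace Stmt9

/-- The set `T(n)` (with `ℓ = 2`) of triples `(a,b,B)` with `a ∈ {0,…,2^f−2}`,
`b ∈ {1,2}^f`, `B ⊆ {0,…,f−1}` and
`n ≡ a(2^f+1) + ∑_{i∈B} b_i 2^i + ∑_{i∉B} b_i 2^{f+i} (mod 2^{2f}−1)`. -/
def Tset (f : ℕ) (n : ℤ) : Set (ℤ × (Fin f → ℤ) × Finset (Fin f)) :=
  {x | (0 ≤ x.1 ∧ x.1 ≤ (2 : ℤ) ^ f - 2) ∧
    (∀ i, 1 ≤ x.2.1 i ∧ x.2.1 i ≤ (2 : ℤ)) ∧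
    Int.ModEq ((2 : ℤ) ^ (2 * f) - 1) n
      (x.1 * ((2 : ℤ) ^ f + 1) + ∑ i ∈ x.2.2, x.2.1 i * (2 : ℤ) ^ (i : ℕ) +
        ∑ i ∈ x.2.2ᶜ, x.2.1 i * (2 : ℤ) ^ (f + (i : ℕ)))}

end Stmt9

open Finset

theorem Int.existsUnique_modEq_mul_add {q d n x : ℤ} (hq : q ≠ 0) (hd : 0 < d)
    (h : n ≡ x [ZMOD q]) : ∃! a, (0 ≤ a ∧ a < d) ∧ n ≡ a * q + x [ZMOD q * d] := by
  obtain ⟨k, hk⟩ := h.symm.dvd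
  refine ⟨k % d, ⟨⟨Int.emod_nonneg _ hd.ne', Int.emod_lt_of_pos _ hd⟩, ?_⟩, ?_⟩
  · exact Int.modEq_iff_dvd.2 ⟨-(k / d), by linear_combination q * Int.emod_def k d - hk⟩
  · rintro a ⟨ha, hna⟩
    obtain ⟨c, hc⟩ := Int.modEq_iff_dvd.1 hna
    have hak : a ≡ k [ZMOD d] :=
      Int.modEq_iff_dvd.2 ⟨-c, mul_left_cancel₀ hq (by linear_combination -hk - hc)⟩
    rw [← Int.emod_eq_of_lt ha.1 ha.2]
    exact hak

theorem AddMonoidHom.card_fiber_mul_card {G H : Type*} [AddGroup G] [Fintype G] [AddGroup H]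
    [Fintype H] [DecidableEq H] (φ : G →+ H) (hφ : Function.Surjective φ) (h : H) :
    #{g | φ g = h} * Fintype.card H = Fintype.card G := calc
  _ = ∑ h' : H, #{g | φ g = h'} := by
    rw [sum_congr rfl fun h' _ => AddMonoidHom.card_fiber_eq_of_mem_range φ (hφ h') (hφ h),
      sum_const, smul_eq_mul, mul_comm, card_univ]
  _ = Fintype.card G := (card_eq_sum_card_fiberwise fun _ _ => mem_univ (φ _)).symm

theorem Set.ncard_setOf_mul_eq_of_isUnit {R : Type*} [Monoid R] {a : R} (ha : IsUnit a) (c : R) :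
    {w : R | a * w = c}.ncard = 1 :=
  Set.ncard_eq_one.2
    ⟨ha.unit⁻¹ * c, by ext w; exact (Units.eq_inv_mul_iff_mul_eq ha.unit).symm⟩

theorem Fin.eq_of_eq_one_iff {a b : Fin 2} (h : a = 1 ↔ b = 1) : a = b := by
  fin_cases a <;> fin_cases b <;> simp_all

theorem Fin.sum_two_pow (f : ℕ) : ∑ i : Fin f, (2 : ℤ) ^ (i : ℕ) = 2 ^ f - 1 := by
  rw [Fin.sum_univ_eq_sum_range (fun i => (2 : ℤ) ^ i), ← mul_one (∑ i ∈ range f, _),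
    ← geom_sum_mul]
  norm_num

theorem Nat.two_pow_mod_three_of_even {f : ℕ} (hf : Even f) : 2 ^ f % 3 = 1 := by
  obtain ⟨k, rfl⟩ := hf
  rw [← two_mul, pow_mul, Nat.pow_mod]
  norm_num

theorem Nat.two_pow_mod_three_of_odd {f : ℕ} (hf : Odd f) : 2 ^ f % 3 = 2 := by
  obtain ⟨k, rfl⟩ := hf
  rw [pow_succ, pow_mul, Nat.mul_mod, Nat.pow_mod]
  norm_num

namespace ZMod

theorem natCast_fin_injective (m : ℕ) :
    Function.Injective (fun u : Fin m => ((u : ℕ) : ZMod (m + 1))) := by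
  intro u v h
  have := congrArg ZMod.val h
  simp only [ZMod.val_cast_of_lt (Nat.lt_succ_of_lt u.isLt),
    ZMod.val_cast_of_lt (Nat.lt_succ_of_lt v.isLt)] at this
  exact Fin.ext this

theorem range_natCast_fin (m : ℕ) :
    Set.range (fun u : Fin m => ((u : ℕ) : ZMod (m + 1))) = {-1}ᶜ := by
  ext x
  simp only [Set.mem_range, Set.mem_compl_iff, Set.mem_singleton_iff]
  constructor
  · rintro ⟨u, rfl⟩ h
    have := congrArg ZMod.val h
    rw [ZMod.val_cast_of_lt (Nat.lt_succ_of_lt u.isLt), ZMod.val_neg_one] at this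
    exact u.isLt.ne this
  · intro hx
    have hm : x.val ≠ m := fun h => hx (ZMod.val_injective _ (by rw [h, ZMod.val_neg_one]))
    exact ⟨⟨x.val, by have := ZMod.val_lt x; omega⟩, ZMod.natCast_zmod_val x⟩

theorem natCast_mul_ne_intCast {q k : ℕ} (hk : k ∣ q) {n : ℤ} (hn : ¬ (k : ℤ) ∣ n)
    (w : ZMod q) : (k : ZMod q) * w ≠ n := by
  intro h
  have := congrArg (ZMod.castHom hk (ZMod k)) h
  rw [map_mul, map_natCast, map_intCast, ZMod.natCast_self, zero_mul, eq_comm,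
    ZMod.intCast_zmod_eq_zero_iff_dvd] at this
  exact hn this

/-- `k w = k e` in `ZMod q` iff `w ≡ e` modulo `q / k`, so this set is a fibre of
`ZMod q → ZMod (q / k)`. -/
theorem ncard_setOf_natCast_mul_eq {q k : ℕ} [NeZero q] (hk : k ∣ q) (e : ℤ) :
    {w : ZMod q | (k : ZMod q) * w = k * e}.ncard = k := by
  obtain ⟨d, rfl⟩ := hk
  have hk : k ≠ 0 := left_ne_zero_of_mul (NeZero.ne (k * d))
  have hd : NeZero d := ⟨right_ne_zero_of_mul (NeZero.ne (k * d))⟩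
  let φ := (ZMod.castHom (dvd_mul_left d k) (ZMod d)).toAddMonoidHom
  have hfiber : {w : ZMod (k * d) | (k : ZMod (k * d)) * w = k * e} = {w | φ w = e} := by
    ext w
    obtain ⟨z, rfl⟩ := ZMod.intCast_surjective w
    simp only [Set.mem_ofPred, φ, RingHom.toAddMonoidHom_eq_coe, AddMonoidHom.coe_coe,
      map_intCast]
    rw [← Int.cast_natCast, ← Int.cast_mul, ← Int.cast_mul, ZMod.intCast_eq_intCast_iff,
      ZMod.intCast_eq_intCast_iff, Nat.cast_mul,
      Int.ModEq.mul_left_cancel_iff' (by exact_mod_cast hk)]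
  have := AddMonoidHom.card_fiber_mul_card φ (ZMod.castHom_surjective (dvd_mul_left d k)) e
  rw [ZMod.card, ZMod.card, ← Set.toFinset_ofPred, ← Set.ncard_eq_toFinset_card', ← hfiber]
    at this
  exact Nat.eq_of_mul_eq_mul_right (Nat.pos_of_ne_zero hd.ne) this

end ZMod

namespace Stmt9

theorem two_pow_eq_neg_one (f : ℕ) : (2 : ZMod (2 ^ f + 1)) ^ f = -1 :=
  eq_neg_of_add_eq_zero_left (by exact_mod_cast ZMod.natCast_self (2 ^ f + 1))

variable {f : ℕ}

def signedSum (y : (Fin f → ℤ) × Finset (Fin f)) : ℤ :=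
  ∑ i, (if i ∈ y.2 then y.1 i else -y.1 i) * 2 ^ (i : ℕ)

theorem signedSum_eq (y : (Fin f → ℤ) × Finset (Fin f)) :
    signedSum y =
      ∑ i ∈ y.2, y.1 i * 2 ^ (i : ℕ) - ∑ i ∈ y.2ᶜ, y.1 i * 2 ^ (i : ℕ) := by
  rw [signedSum, ← sum_add_sum_compl y.2, sub_eq_add_neg, ← sum_neg_distrib]
  congr 1 <;> refine sum_congr rfl fun i hi => ?_
  · rw [if_pos hi]
  · rw [if_neg (mem_compl.1 hi), neg_mul]

def tsetSum (y : (Fin f → ℤ) × Finset (Fin f)) : ℤ :=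
  ∑ i ∈ y.2, y.1 i * 2 ^ (i : ℕ) + ∑ i ∈ y.2ᶜ, y.1 i * 2 ^ (f + (i : ℕ))

theorem intCast_tsetSum (y : (Fin f → ℤ) × Finset (Fin f)) :
    (tsetSum y : ZMod (2 ^ f + 1)) = signedSum y := by
  rw [signedSum_eq, tsetSum]
  push_cast
  simp only [pow_add, two_pow_eq_neg_one, neg_one_mul, mul_neg, sum_neg_distrib, sub_eq_add_neg]

def reducedSet (f : ℕ) (n : ℤ) : Set ((Fin f → ℤ) × Finset (Fin f)) :=
  {y | (∀ i, 1 ≤ y.1 i ∧ y.1 i ≤ 2) ∧ (n : ZMod (2 ^ f + 1)) = signedSum y}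

theorem ncard_Tset (hf : 0 < f) (n : ℤ) : (Tset f n).ncard = (reducedSet f n).ncard := by
  have hq : (2 : ℤ) ^ f + 1 ≠ 0 := by positivity
  have hd : (0 : ℤ) < 2 ^ f - 1 := sub_pos.2 (one_lt_pow₀ (by norm_num) hf.ne')
  have hmem : ∀ a y, (a, y) ∈ Tset f n ↔ (∀ i, 1 ≤ y.1 i ∧ y.1 i ≤ 2) ∧
      (0 ≤ a ∧ a < 2 ^ f - 1) ∧
        n ≡ a * (2 ^ f + 1) + tsetSum y [ZMOD (2 ^ f + 1) * (2 ^ f - 1)] := by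
    intro a y
    rw [show (2 : ℤ) ^ f - 1 = 2 ^ f - 2 + 1 by ring, Int.lt_add_one_iff,
      show ((2 : ℤ) ^ f + 1) * (2 ^ f - 2 + 1) = 2 ^ (2 * f) - 1 by ring, tsetSum, ← add_assoc]
    exact ⟨fun ⟨ha, hb, h⟩ => ⟨hb, ha, h⟩, fun ⟨hb, ha, h⟩ => ⟨ha, hb, h⟩⟩
  have hred : ∀ y : (Fin f → ℤ) × Finset (Fin f),
      (n : ZMod (2 ^ f + 1)) = signedSum y ↔ n ≡ tsetSum y [ZMOD 2 ^ f + 1] := by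
    intro y
    rw [← intCast_tsetSum, ZMod.intCast_eq_intCast_iff]
    push_cast
    rfl
  have hmod : ∀ {a : ℤ} {y : (Fin f → ℤ) × Finset (Fin f)},
      n ≡ a * (2 ^ f + 1) + tsetSum y [ZMOD (2 ^ f + 1) * (2 ^ f - 1)] →
        n ≡ tsetSum y [ZMOD 2 ^ f + 1] := fun {a} _ h =>
    (h.of_mul_right _).trans (Int.modEq_iff_dvd.2 ⟨-a, by ring⟩)
  refine Set.ncard_congr (fun x _ => x.2) ?_ ?_ ?_
  · rintro ⟨a, y⟩ h
    obtain ⟨hb, -, h⟩ := (hmem a y).1 h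
    exact ⟨hb, (hred y).2 (hmod h)⟩
  · rintro ⟨a, y⟩ ⟨a', y'⟩ h h' (rfl : y = y')
    obtain ⟨-, ha, h⟩ := (hmem a y).1 h
    obtain ⟨-, ha', h'⟩ := (hmem a' y).1 h'
    rw [(Int.existsUnique_modEq_mul_add hq hd (hmod h)).unique ⟨ha, h⟩ ⟨ha', h'⟩]
  · rintro y ⟨hb, hy⟩
    obtain ⟨a, ha, -⟩ := Int.existsUnique_modEq_mul_add hq hd ((hred y).1 hy)
    exact ⟨(a, y), (hmem a y).2 ⟨hb, ha⟩, rfl⟩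

def binVal (d : Fin f → Fin 2) : ZMod (2 ^ f + 1) := (finFunctionFinEquiv d : ℕ)

theorem binVal_injective : Function.Injective (binVal (f := f)) :=
  (ZMod.natCast_fin_injective _).comp finFunctionFinEquiv.injective

theorem range_binVal : Set.range (binVal (f := f)) = {-1}ᶜ := by
  rw [← ZMod.range_natCast_fin, ← finFunctionFinEquiv.surjective.range_comp]
  rfl

def ofDigits (p : (Fin f → Fin 2) × (Fin f → Fin 2)) : (Fin f → ℤ) × Finset (Fin f) :=
  (fun i => if p.2 i = 1 then 1 + (p.1 i : ℕ) else 2 - (p.1 i : ℕ),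
    ({i | p.2 i = 1} : Finset (Fin f)))

theorem ofDigits_injective : Function.Injective (ofDigits (f := f)) := by
  rintro ⟨d, β⟩ ⟨d', β'⟩ h
  simp only [ofDigits, Prod.mk.injEq, funext_iff, Finset.ext_iff, Finset.mem_filter,
    Finset.mem_univ, true_and] at h
  obtain ⟨hb, hB⟩ := h
  obtain rfl : β = β' := funext fun i => Fin.eq_of_eq_one_iff (hB i)
  refine Prod.ext (funext fun i => Fin.ext (?_ : (d i : ℕ) = d' i)) rfl
  have := hb i
  split_ifs at this <;> omega

theorem range_ofDigits :
    Set.range (ofDigits (f := f)) = {y | ∀ i, 1 ≤ y.1 i ∧ y.1 i ≤ 2} := by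
  ext ⟨b, B⟩
  constructor
  · rintro ⟨⟨d, β⟩, h⟩ i
    rw [← h]
    simp only [ofDigits]
    have := (d i).isLt
    split_ifs <;> omega
  · intro (hb : ∀ i, 1 ≤ b i ∧ b i ≤ 2)
    refine ⟨(fun i => if (i ∈ B ↔ b i = 2) then 1 else 0,
      fun i => if i ∈ B then 1 else 0), ?_⟩
    simp only [ofDigits, Prod.mk.injEq]
    refine ⟨funext fun i => ?_, Finset.ext fun i => ?_⟩
    · have := hb i
      by_cases hi : i ∈ B <;> by_cases h2 : b i = 2 <;> simp [hi, h2] <;> omega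
    · by_cases hi : i ∈ B <;> simp [hi]

theorem signedSum_ofDigits (p : (Fin f → Fin 2) × (Fin f → Fin 2)) :
    signedSum (ofDigits p) =
      (finFunctionFinEquiv p.1 : ℕ) + 3 * (finFunctionFinEquiv p.2 : ℕ) - 2 * (2 ^ f - 1) := by
  have hdigit : ∀ i, (if i ∈ (ofDigits p).2 then (ofDigits p).1 i else -(ofDigits p).1 i) =
      ((p.1 i : ℕ) : ℤ) + 3 * (p.2 i : ℕ) - 2 := by
    intro i
    have := (p.2 i).isLt
    by_cases h : p.2 i = 1 <;> simp [ofDigits, h] <;> omega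
  simp only [signedSum, hdigit, finFunctionFinEquiv_apply, ← Fin.sum_two_pow f]
  push_cast
  simp only [sub_mul, add_mul, sum_sub_distrib, sum_add_distrib, mul_sum, mul_assoc]

theorem intCast_signedSum_ofDigits (p : (Fin f → Fin 2) × (Fin f → Fin 2)) :
    (signedSum (ofDigits p) : ZMod (2 ^ f + 1)) = binVal p.1 + 3 * binVal p.2 + 4 := by
  rw [signedSum_ofDigits, binVal, binVal]
  push_cast
  rw [two_pow_eq_neg_one]
  ring

theorem reducedSet_eq_image (n : ℤ) : reducedSet f n =
    ofDigits '' {p | (n : ZMod (2 ^ f + 1)) = binVal p.1 + 3 * binVal p.2 + 4} := by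
  ext y
  constructor
  · rintro ⟨hb, hy⟩
    obtain ⟨p, rfl⟩ : y ∈ Set.range ofDigits := by rw [range_ofDigits]; exact hb
    exact ⟨p, hy.trans (intCast_signedSum_ofDigits p), rfl⟩
  · rintro ⟨p, hp, rfl⟩
    refine ⟨?_, by rw [intCast_signedSum_ofDigits]; exact hp⟩
    exact (range_ofDigits ▸ Set.mem_range_self p : ofDigits p ∈ {y | _})

theorem ncard_solutions_avoiding_neg_one {R : Type*} [CommRing R] (n : R) :
    {p : R × R | p.1 ≠ -1 ∧ p.2 ≠ -1 ∧ n = p.1 + 3 * p.2 + 4}.ncard =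
      {w : R | w ≠ 0 ∧ 3 * w ≠ n}.ncard := by
  refine Set.ncard_congr (fun p _ => p.2 + 1) ?_ ?_ ?_
  · rintro ⟨x, y⟩ ⟨hx, hy, hxy⟩
    exact ⟨fun h => hy (by linear_combination h), fun h => hx (by linear_combination -h - hxy)⟩
  · rintro ⟨x, y⟩ ⟨x', y'⟩ ⟨-, -, h⟩ ⟨-, -, h'⟩ hy
    obtain rfl : y = y' := add_right_cancel hy
    exact Prod.ext (by linear_combination h' - h) rfl
  · rintro w ⟨hw0, hw⟩
    refine ⟨(n - 3 * w - 1, w - 1), ⟨fun h => hw ?_, fun h => hw0 ?_, by ring⟩, by ring⟩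
    · linear_combination -h
    · linear_combination h

theorem ncard_reducedSet (n : ℤ) :
    (reducedSet f n).ncard = {w : ZMod (2 ^ f + 1) | w ≠ 0 ∧ 3 * w ≠ n}.ncard := by
  have hpre : {p : (Fin f → Fin 2) × (Fin f → Fin 2) |
      (n : ZMod (2 ^ f + 1)) = binVal p.1 + 3 * binVal p.2 + 4} =
      Prod.map binVal binVal ⁻¹' {xy | (n : ZMod (2 ^ f + 1)) = xy.1 + 3 * xy.2 + 4} := rfl
  rw [reducedSet_eq_image, Set.ncard_image_of_injective _ ofDigits_injective, hpre,
    ← Set.ncard_image_of_injective _ (binVal_injective.prodMap binVal_injective),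
    Set.image_preimage_eq_inter_range, Set.range_prodMap, range_binVal,
    ← ncard_solutions_avoiding_neg_one]
  congr 1
  ext ⟨x, y⟩
  simp only [Set.mem_inter_iff, Set.mem_prod, Set.mem_compl_iff, Set.mem_singleton_iff]
  exact ⟨fun ⟨h, hx, hy⟩ => ⟨hx, hy, h⟩, fun ⟨hx, hy, h⟩ => ⟨h, hx, hy⟩⟩

theorem ncard_Tset_add_ncard (hf : 0 < f) {n : ℤ} (hn : (n : ZMod (2 ^ f + 1)) ≠ 0) :
    (Tset f n).ncard + {w : ZMod (2 ^ f + 1) | 3 * w = n}.ncard = 2 ^ f := by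
  have hdisj : Disjoint {0} {w : ZMod (2 ^ f + 1) | 3 * w = n} :=
    Set.disjoint_singleton_left.2 fun h => hn (by simpa using h.symm)
  have hcompl : {w : ZMod (2 ^ f + 1) | w ≠ 0 ∧ 3 * w ≠ n} =
      ({0} ∪ {w : ZMod (2 ^ f + 1) | 3 * w = n})ᶜ := by
    ext; simp
  have hcard := Set.ncard_add_ncard_compl ({0} ∪ {w : ZMod (2 ^ f + 1) | 3 * w = n})
  rw [← hcompl, Set.ncard_union_eq hdisj, Set.ncard_singleton, Nat.card_zmod] at hcard
  rw [ncard_Tset hf, ncard_reducedSet]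
  omega

/-- Suppose `ℓ = 2` and `n` is not divisible by `2^f + 1`.  Then
`N(n) = 2^f − 1` if `f` is even; `N(n) = 2^f` if `f` is odd and `3 ∤ n`;
and `N(n) = 2^f − 3` if `f` is odd and `3 ∣ n`. -/
theorem stmt9 (f : ℕ) (hf : 0 < f) (n : ℤ) (hn : ¬ ((2 : ℤ) ^ f + 1) ∣ n) :
    (Even f → (Tset f n).ncard = 2 ^ f - 1) ∧
    (Odd f → ¬ (3 : ℤ) ∣ n → (Tset f n).ncard = 2 ^ f) ∧
    (Odd f → (3 : ℤ) ∣ n → (Tset f n).ncard = 2 ^ f - 3) := by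
  have hn' : (n : ZMod (2 ^ f + 1)) ≠ 0 := by
    rwa [Ne, ZMod.intCast_zmod_eq_zero_iff_dvd, Nat.cast_add, Nat.cast_pow, Nat.cast_ofNat,
      Nat.cast_one]
  have key := ncard_Tset_add_ncard hf hn'
  refine ⟨fun he => ?_, fun ho h3 => ?_, fun ho ⟨e, he⟩ => ?_⟩
  · have hu : IsUnit (3 : ZMod (2 ^ f + 1)) := by
      have := Nat.two_pow_mod_three_of_even he
      exact_mod_cast ZMod.isUnit_prime_of_not_dvd Nat.prime_three (by omega)
    rw [Set.ncard_setOf_mul_eq_of_isUnit hu] at key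
    omega
  all_goals have h3q : 3 ∣ 2 ^ f + 1 := by have := Nat.two_pow_mod_three_of_odd ho; omega
  · have hempty : {w : ZMod (2 ^ f + 1) | 3 * w = n} = ∅ :=
      Set.eq_empty_of_forall_notMem fun w => by
        exact_mod_cast ZMod.natCast_mul_ne_intCast h3q h3 w
    rw [hempty, Set.ncard_empty] at key
    omega
  · have hthree := ZMod.ncard_setOf_natCast_mul_eq h3q e
    push_cast at hthree
    subst he
    rw [Int.cast_mul, Int.cast_ofNat, hthree] at key
    omega

end Stmt9
end
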